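/- arXiv:2208.04931 — 7 statements merged into one kernel-verified Lean document; each statement's English description precedes it below -/
import Mathlib

section
/- Let D be a deterministic finite automaton (over a finite linearly ordered alphabet Σ) with a single initial state s, in which every state is reachable from s and from every state some final state is reachable. Define the relation ≤_D on the states of D by: u ≤_D v iff u = v, or α ≺ β (strict co-lex order on words) for every word α ∈ I_u and every word β ∈ I_v. Then (Q, ≤_D) is a partial order, it is a co-lex order on D, and it is the maximum co-lex order on D: for every co-lex order ≤ on D and all states u, v, if u ≤ v then u ≤_D v. In particular, every ≤-chain (for any co-lex order ≤ on D) is a ≤_D-chain, so any ≤-chain partition of the states is also a ≤_D-chain partition. -/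
/-- Strict co-lexicographic order on words: compare reversed words lexicographically. -/
def colexLt {A : Type} [LinearOrder A] (α β : List A) : Prop :=
  List.Lex (· < ·) α.reverse β.reverse

/-- Co-lexicographic order (reflexive version). -/
def colexLe {A : Type} [LinearOrder A] (α β : List A) : Prop :=
  colexLt α β ∨ α = β

/-- The prefix closure of a language. -/
def Pref {A : Type} (L : Set (List A)) : Set (List A) :=
  {α | ∃ γ : List A, α ++ γ ∈ L}

/-- The Myhill–Nerode equivalence of a language. -/
def NerodeEq {A : Type} (L : Set (List A)) (α β : List A) : Prop :=
  ∀ γ : List A, α ++ γ ∈ L ↔ β ++ γ ∈ L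

/-- A monotone (nondecreasing or nonincreasing) sequence of words w.r.t. co-lex order. -/
def MonotoneSeq {A : Type} [LinearOrder A] (α : ℕ → List A) : Prop :=
  (∀ i, colexLe (α i) (α (i + 1))) ∨ (∀ i, colexLe (α (i + 1)) (α i))

/-- A partition of the state set into `p` chains with respect to the relation `le`. -/
def IsChainPartition {Q : Type} (le : Q → Q → Prop) (p : ℕ) (f : Fin p → Set Q) : Prop :=
  (∀ q : Q, ∃! i : Fin p, q ∈ f i) ∧
  ∀ i : Fin p, ∀ u ∈ f i, ∀ v ∈ f i, le u v ∨ le v u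

/-- A deterministic finite automaton (with possibly undefined transitions). -/
structure DFA' (A Q : Type) where
  start : Q
  delta : Q → A → Option Q
  accept : Set Q

namespace DFA'

variable {A Q : Type}

/-- Extended (partial) transition function on words. -/
def deltaStar (D : DFA' A Q) : Q → List A → Option Q
  | q, [] => some q
  | q, a :: w => (D.delta q a).bind fun r => D.deltaStar r w

/-- `D.Iq q` is the set of words reaching `q` from the initial state. -/
def Iq (D : DFA' A Q) (q : Q) : Set (List A) :=
  {α | D.deltaStar D.start α = some q}

/-- The accepted language. -/
def lang (D : DFA' A Q) : Set (List A) :=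
  {α | ∃ q ∈ D.accept, D.deltaStar D.start α = some q}

/-- Labels of transitions entering a state, with the extra bottom symbol `#`
added exactly for the initial state. -/
def lam (D : DFA' A Q) (q : Q) : Set (WithBot A) :=
  {x | ∃ (a : A) (u : Q), x = (a : WithBot A) ∧ D.delta u a = some q} ∪
    {x | q = D.start ∧ x = (⊥ : WithBot A)}

/-- Every state is reachable from the initial state. -/
def Reachable (D : DFA' A Q) : Prop :=
  ∀ q : Q, ∃ α : List A, D.deltaStar D.start α = some q

/-- Every state can reach a final state. -/
def Useful (D : DFA' A Q) : Prop :=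
  ∀ q : Q, ∃ (β : List A) (f : Q), f ∈ D.accept ∧ D.deltaStar q β = some f

/-- The relation `≤_D`: `u ≤_D v` iff `u = v` or every word reaching `u` is
co-lexicographically strictly smaller than every word reaching `v`. -/
def leD [LinearOrder A] (D : DFA' A Q) (u v : Q) : Prop :=
  u = v ∨ ∀ α ∈ D.Iq u, ∀ β ∈ D.Iq v, colexLt α β

/-- The strict relation `<_D`. -/
def ltD [LinearOrder A] (D : DFA' A Q) (u v : Q) : Prop :=
  u ≠ v ∧ ∀ α ∈ D.Iq u, ∀ β ∈ D.Iq v, colexLt α β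

/-- A set of states of a DFA is entangled if some monotone sequence of words of
`Pref (L(D))` visits every state of the set infinitely often. -/
def Entangled [LinearOrder A] (D : DFA' A Q) (Q' : Set Q) : Prop :=
  ∃ α : ℕ → List A, (∀ i, α i ∈ Pref D.lang) ∧ MonotoneSeq α ∧
    ∀ q ∈ Q', {i : ℕ | D.deltaStar D.start (α i) = some q}.Infinite

end DFA'

/-- A co-lex order on a DFA: a partial order on the states satisfying Axioms 1 and 2. -/
structure IsColexDFA {A Q : Type} [LinearOrder A] (D : DFA' A Q) (le : Q → Q → Prop) : Prop where
  refl : ∀ u, le u u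
  antisymm : ∀ u v, le u v → le v u → u = v
  trans : ∀ u v w, le u v → le v w → le u w
  ax1 : ∀ u v, le u v → u ≠ v → ∀ a ∈ D.lam u, ∀ b ∈ D.lam v, a ≤ b
  ax2 : ∀ (a : A) (u v u' v' : Q),
      D.delta u' a = some u → D.delta v' a = some v → le u v → u ≠ v → le u' v'


section Aux

variable {A Q : Type}

theorem DFA'.deltaStar_append (D : DFA' A Q) (q : Q) (α β : List A) :
    D.deltaStar q (α ++ β) = (D.deltaStar q α).bind fun r => D.deltaStar r β := by
  induction α generalizing q with
  | nil => simp [DFA'.deltaStar]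
  | cons a α ih =>
    simp only [List.cons_append, DFA'.deltaStar]
    cases D.delta q a <;> simp [ih]

theorem DFA'.deltaStar_concat {D : DFA' A Q} {q u : Q} {α : List A} {a : A}
    (h : D.deltaStar q (α ++ [a]) = some u) :
    ∃ u', D.deltaStar q α = some u' ∧ D.delta u' a = some u := by
  rw [DFA'.deltaStar_append] at h
  rcases Option.bind_eq_some_iff.mp h with ⟨u', h1, h2⟩
  refine ⟨u', h1, ?_⟩
  simpa [DFA'.deltaStar] using h2

theorem DFA'.deltaStar_concat' {D : DFA' A Q} {q u' u : Q} {α : List A} {a : A}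
    (h1 : D.deltaStar q α = some u') (h2 : D.delta u' a = some u) :
    D.deltaStar q (α ++ [a]) = some u := by
  rw [DFA'.deltaStar_append, h1]
  simpa [DFA'.deltaStar] using h2

variable [LinearOrder A]

theorem colexLt_trans {a b c : List A} (h1 : colexLt a b) (h2 : colexLt b c) : colexLt a c :=
  List.lex_trans (fun h h' => lt_trans h h') h1 h2

theorem colexLt_irrefl (a : List A) (h : colexLt a a) : False :=
  List.lex_irrefl (fun x => lt_irrefl x) _ h

theorem colexLt_trichotomous {a b : List A} (h : a ≠ b) : colexLt a b ∨ colexLt b a := by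
  rcases trichotomous_of (List.Lex (α := A) (· < ·)) a.reverse b.reverse with
    h1 | h1 | h1
  · exact Or.inl h1
  · exact absurd (List.reverse_injective h1) h
  · exact Or.inr h1

/-- The key lemma: any co-lex order is dominated by `≤_D`. -/
theorem key_lemma (D : DFA' A Q) {le : Q → Q → Prop} (h : IsColexDFA D le)
    (hreach : D.Reachable) :
    ∀ (n : ℕ) (β : List A), β.length ≤ n → ∀ (α : List A) (u v : Q),
      le u v → u ≠ v → α ∈ D.Iq u → β ∈ D.Iq v → colexLt α β := by
  have main : ∀ (n : ℕ), (∀ (β : List A), β.length < n → ∀ (α : List A) (u v : Q),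
      le u v → u ≠ v → α ∈ D.Iq u → β ∈ D.Iq v → colexLt α β) →
      ∀ (β : List A), β.length ≤ n → ∀ (α : List A) (u v : Q),
      le u v → u ≠ v → α ∈ D.Iq u → β ∈ D.Iq v → colexLt α β := by
    intro n ih β hβlen α u v hle hne hα hβ
    rcases List.eq_nil_or_concat β with rfl | ⟨β', b, rfl⟩
    · -- β = [], so v = start
      have hv : v = D.start := by simpa [DFA'.Iq, DFA'.deltaStar] using hβ.symm
      rcases List.eq_nil_or_concat α with rfl | ⟨α', a, rfl⟩
      · exact absurd (by simpa [DFA'.Iq, DFA'.deltaStar, hv] using hα.symm) hne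
      · simp only [List.concat_eq_append] at hα ⊢
        rcases DFA'.deltaStar_concat hα with ⟨u', _, hu'⟩
        have ha : (a : WithBot A) ∈ D.lam u := Or.inl ⟨a, u', rfl, hu'⟩
        have hb : (⊥ : WithBot A) ∈ D.lam v := Or.inr ⟨hv, rfl⟩
        have := h.ax1 u v hle hne _ ha _ hb
        simp at this
    · simp only [List.concat_eq_append] at hβ hβlen ⊢
      rcases DFA'.deltaStar_concat hβ with ⟨v', hβ', hv'⟩
      rcases List.eq_nil_or_concat α with rfl | ⟨α', a, rfl⟩
      · show List.Lex _ _ _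
        rw [List.reverse_append]
        exact List.Lex.nil
      · simp only [List.concat_eq_append] at hα ⊢
        rcases DFA'.deltaStar_concat hα with ⟨u', hα', hu'⟩
        have ha : (a : WithBot A) ∈ D.lam u := Or.inl ⟨a, u', rfl, hu'⟩
        have hb : (b : WithBot A) ∈ D.lam v := Or.inl ⟨b, v', rfl, hv'⟩
        have hab : a ≤ b := by
          have := h.ax1 u v hle hne _ ha _ hb
          exact_mod_cast this
        show List.Lex _ _ _
        rw [List.reverse_append, List.reverse_append]
        simp only [List.reverse_singleton, List.singleton_append]
        rcases lt_or_eq_of_le hab with hab | rfl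
        · exact List.Lex.rel hab
        · have hne' : u' ≠ v' := by
            rintro rfl
            rw [hu'] at hv'
            exact hne (Option.some_injective _ hv')
          have hle' : le u' v' := h.ax2 a u v u' v' hu' hv' hle hne
          have hβ'len : β'.length < n := by
            simp only [List.length_append, List.length_singleton] at hβlen
            omega
          exact List.Lex.cons (ih β' hβ'len α' u' v' hle' hne' hα' hβ')
  intro n
  induction n using Nat.strong_induction_on with
  | _ n ih =>
    exact main n (fun β hβ => ih β.length (lt_of_le_of_lt (le_refl _) hβ) β (le_refl _))

end Aux

/-- `≤_D` is a partial order, it is a co-lex order on the DFA `D`,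
and it is the maximum co-lex order on `D`; in particular every chain (and every
chain partition) for any co-lex order is also one for `≤_D`. -/
theorem stmt_0 {A Q : Type} [LinearOrder A] [Fintype A] [Fintype Q]
    (D : DFA' A Q) (hreach : D.Reachable) (huse : D.Useful) :
    ((∀ u : Q, D.leD u u) ∧
      (∀ u v : Q, D.leD u v → D.leD v u → u = v) ∧
      (∀ u v w : Q, D.leD u v → D.leD v w → D.leD u w)) ∧
    IsColexDFA D D.leD ∧
    (∀ le : Q → Q → Prop, IsColexDFA D le → ∀ u v : Q, le u v → D.leD u v) ∧
    (∀ le : Q → Q → Prop, IsColexDFA D le → ∀ C : Set Q,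
      (∀ u ∈ C, ∀ v ∈ C, le u v ∨ le v u) →
      (∀ u ∈ C, ∀ v ∈ C, D.leD u v ∨ D.leD v u)) ∧
    (∀ le : Q → Q → Prop, IsColexDFA D le → ∀ (p : ℕ) (f : Fin p → Set Q),
      IsChainPartition le p f → IsChainPartition D.leD p f) := by
  
  classical
  -- basic order properties of leD
  have refl : ∀ u : Q, D.leD u u := fun u => Or.inl rfl
  have antisymm : ∀ u v : Q, D.leD u v → D.leD v u → u = v := by
    intro u v h1 h2
    rcases h1 with rfl | h1
    · rfl
    rcases h2 with rfl | h2
    · rfl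
    obtain ⟨α, hα⟩ := hreach u
    obtain ⟨β, hβ⟩ := hreach v
    exact absurd (colexLt_trans (h1 α hα β hβ) (h2 β hβ α hα)) (colexLt_irrefl α)
  have trans : ∀ u v w : Q, D.leD u v → D.leD v w → D.leD u w := by
    intro u v w h1 h2
    rcases h1 with rfl | h1
    · exact h2
    rcases h2 with rfl | h2
    · exact Or.inr h1
    obtain ⟨β, hβ⟩ := hreach v
    exact Or.inr fun α hα γ hγ => colexLt_trans (h1 α hα β hβ) (h2 β hβ γ hγ)
  have hcolex : IsColexDFA D D.leD := by
    refine ⟨refl, antisymm, trans, ?_, ?_⟩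
    · -- Axiom 1
      intro u v hle hne a ha b hb
      have H : ∀ α ∈ D.Iq u, ∀ β ∈ D.Iq v, colexLt α β := hle.resolve_left hne
      rcases ha with ⟨a₀, u', rfl, hu'⟩ | ⟨hu, rfl⟩
      · rcases hb with ⟨b₀, v', rfl, hv'⟩ | ⟨hv, rfl⟩
        · obtain ⟨α', hα'⟩ := hreach u'
          obtain ⟨β', hβ'⟩ := hreach v'
          have := H (α' ++ [a₀]) (DFA'.deltaStar_concat' hα' hu')
            (β' ++ [b₀]) (DFA'.deltaStar_concat' hβ' hv')
          unfold colexLt at this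
          rw [List.reverse_append, List.reverse_append] at this
          simp only [List.reverse_singleton, List.singleton_append] at this
          cases this with
          | rel h' => exact_mod_cast le_of_lt h'
          | cons h' => exact le_refl _
        · -- b = ⊥, v = start
          obtain ⟨α', hα'⟩ := hreach u'
          have h1 := H (α' ++ [a₀]) (DFA'.deltaStar_concat' hα' hu')
            [] (by simp [DFA'.Iq, DFA'.deltaStar, hv])
          unfold colexLt at h1
          rw [List.reverse_append] at h1
          simp only [List.reverse_singleton, List.singleton_append, List.reverse_nil] at h1
          cases h1
      · exact bot_le
    · -- Axiom 2
      intro a u v u' v' hu hv hle hne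
      have H : ∀ α ∈ D.Iq u, ∀ β ∈ D.Iq v, colexLt α β := hle.resolve_left hne
      by_cases h' : u' = v'
      · exact Or.inl h'
      refine Or.inr fun α' hα' β' hβ' => ?_
      have := H (α' ++ [a]) (DFA'.deltaStar_concat' hα' hu)
        (β' ++ [a]) (DFA'.deltaStar_concat' hβ' hv)
      unfold colexLt at this ⊢
      rw [List.reverse_append, List.reverse_append] at this
      simp only [List.reverse_singleton, List.singleton_append] at this
      cases this with
      | rel h'' => exact absurd h'' (lt_irrefl a)
      | cons h'' => exact h''
  have hmax : ∀ le : Q → Q → Prop, IsColexDFA D le → ∀ u v : Q, le u v → D.leD u v := by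
    intro le hle u v huv
    by_cases h' : u = v
    · exact Or.inl h'
    exact Or.inr fun α hα β hβ =>
      key_lemma D hle hreach β.length β (le_refl _) α u v huv h' hα hβ
  refine ⟨⟨refl, antisymm, trans⟩, hcolex, hmax, ?_, ?_⟩
  · intro le hle C hC u hu v hv
    rcases hC u hu v hv with h' | h'
    · exact Or.inl (hmax le hle u v h')
    · exact Or.inr (hmax le hle v u h')
  · intro le hle p f ⟨hpart, hchain⟩
    refine ⟨hpart, fun i u hu v hv => ?_⟩
    rcases hchain i u hu v hv with h' | h'
    · exact Or.inl (hmax le hle u v h')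
    · exact Or.inr (hmax le hle v u h')
end

section
/- Let D be a deterministic finite automaton (over a finite linearly ordered alphabet Σ) with a single initial state s, in which every state is reachable from s and from every state some final state is reachable, and let ≤ be any co-lex order on D. If u and v are states with u < v, then α ≺ β (strict co-lex order on words) for every α ∈ I_u and every β ∈ I_v. -/
theorem DFA'.deltaStar_snoc {A Q : Type} (D : DFA' A Q) (q : Q) (γ : List A) (a : A) :
    D.deltaStar q (γ ++ [a]) = (D.deltaStar q γ).bind (fun r => D.delta r a) := by
  induction γ generalizing q with
  | nil => simp [DFA'.deltaStar]
  | cons b γ ih =>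
    simp only [List.cons_append, DFA'.deltaStar]
    cases D.delta q b with
    | none => simp
    | some r => simp [ih]

/-- for any co-lex order `≤` on a DFA, `u < v` implies that every
word reaching `u` is co-lexicographically strictly smaller than every word
reaching `v`. -/
theorem stmt_1 {A Q : Type} [LinearOrder A] [Fintype A] [Fintype Q]
    (D : DFA' A Q) (hreach : D.Reachable) (huse : D.Useful)
    (le : Q → Q → Prop) (hcolex : IsColexDFA D le)
    (u v : Q) (huv : le u v) (hne : u ≠ v) :
    ∀ α ∈ D.Iq u, ∀ β ∈ D.Iq v, colexLt α β := by
  intro α hα β hβ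
  induction α using List.reverseRecOn generalizing u v β with
  | nil =>
    -- u = start
    have hu : u = D.start := by
      simpa [DFA'.Iq, DFA'.deltaStar, eq_comm] using hα
    induction β using List.reverseRecOn with
    | nil =>
      have hv : v = D.start := by
        simpa [DFA'.Iq, DFA'.deltaStar, eq_comm] using hβ
      exact absurd (hu.trans hv.symm) hne
    | append_singleton δ b _ =>
      simp only [colexLt, List.reverse_nil, List.reverse_append, List.reverse_singleton, List.singleton_append]
      exact List.Lex.nil
  | append_singleton γ a ih =>
    have hα' : (D.deltaStar D.start γ).bind (fun r => D.delta r a) = some u := by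
      rw [← DFA'.deltaStar_snoc]; exact hα
    obtain ⟨u', hu', hua⟩ := Option.bind_eq_some_iff.mp hα'
    have hla : (a : WithBot A) ∈ D.lam u := Or.inl ⟨a, u', rfl, hua⟩
    induction β using List.reverseRecOn with
    | nil =>
      have hv : v = D.start := by
        simpa [DFA'.Iq, DFA'.deltaStar, eq_comm] using hβ
      have hlb : (⊥ : WithBot A) ∈ D.lam v := Or.inr ⟨hv, rfl⟩
      have := hcolex.ax1 u v huv hne _ hla _ hlb
      exact absurd this (by simp)
    | append_singleton δ b _ =>
      have hβ' : (D.deltaStar D.start δ).bind (fun r => D.delta r b) = some v := by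
        rw [← DFA'.deltaStar_snoc]; exact hβ
      obtain ⟨v', hv', hvb⟩ := Option.bind_eq_some_iff.mp hβ'
      have hlb : (b : WithBot A) ∈ D.lam v := Or.inl ⟨b, v', rfl, hvb⟩
      have hab : (a : WithBot A) ≤ (b : WithBot A) := hcolex.ax1 u v huv hne _ hla _ hlb
      have hab' : a ≤ b := by exact_mod_cast hab
      rcases lt_or_eq_of_le hab' with hlt | heq
      · simp only [colexLt, List.reverse_append, List.reverse_singleton,
          List.singleton_append]
        exact List.Lex.rel hlt
      · subst heq
        have hle' : le u' v' := hcolex.ax2 a u v u' v' hua hvb huv hne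
        have hne' : u' ≠ v' := by
          intro h; subst h
          exact hne (Option.some.inj (hua ▸ hvb))
        have : colexLt γ δ := ih u' v' hle' hne' hu' δ hv'
        simp only [colexLt, List.reverse_append, List.reverse_singleton,
          List.singleton_append] at this ⊢
        exact List.Lex.cons this
end

section
/- Let L be a nonempty regular language over a finite linearly ordered alphabet Σ (i.e., L is accepted by some DFA with finitely many states) and let p ≥ 1. Then the following are equivalent: (a) there exists a DFA D with L(D) = L (finite state set, single initial state, every state reachable and useful) admitting a co-lex order with a chain partition into at most p chains (i.e., width^D(L) ≤ p); (b) every monotone sequence (α_i)_{i∈ℕ} of words in Pref(L) is eventually included in at most p Myhill–Nerode classes of L, i.e., there exist an index N and words β_1, …, β_p ∈ Pref(L) such that for every i ≥ N, α_i ≡_L β_j for some j ∈ {1, …, p}. -/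
set_option linter.unusedSectionVars false
set_option maxHeartbeats 1000000

namespace S10
variable {A : Type} [LinearOrder A]

lemma lex_cons_iff {a b : A} {l m : List A} :
    List.Lex (· < ·) (a::l) (b::m) ↔ a < b ∨ (a = b ∧ List.Lex (· < ·) l m) := by
  constructor
  · intro h
    cases h with
    | cons h => exact Or.inr ⟨rfl, h⟩
    | rel h => exact Or.inl h
  · rintro (h | ⟨rfl, h⟩)
    exacts [List.Lex.rel h, List.Lex.cons h]

lemma colexLt_trans {α β γ : List A} (h1 : colexLt α β) (h2 : colexLt β γ) : colexLt α γ :=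
  List.lex_trans (fun h₁ h₂ => lt_trans h₁ h₂) h1 h2

lemma colexLt_asymm {α β : List A} (h1 : colexLt α β) : ¬ colexLt β α :=
  asymm_of (List.Lex (· < ·)) h1

lemma colexLt_irrefl {α : List A} (h : colexLt α α) : False := colexLt_asymm h h

lemma colex_trichotomy (α β : List A) : colexLt α β ∨ α = β ∨ colexLt β α := by
  haveI := List.Lex.trichotomous ((· < ·) : A → A → Prop)
  rcases trichotomous_of (List.Lex ((· < ·) : A → A → Prop)) α.reverse β.reverse with h | h | h
  · exact Or.inl h
  · exact Or.inr (Or.inl (List.reverse_injective h))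
  · exact Or.inr (Or.inr h)

lemma colexLt_of_not_le {α β : List A} (h : ¬ colexLe β α) : colexLt α β := by
  rcases colex_trichotomy α β with h1 | h1 | h1
  · exact h1
  · exact absurd (Or.inr h1.symm) h
  · exact absurd (Or.inl h1) h

lemma colexLe_refl (α : List A) : colexLe α α := Or.inr rfl

lemma colexLe_trans {α β γ : List A} (h1 : colexLe α β) (h2 : colexLe β γ) : colexLe α γ := by
  rcases h1 with h1 | rfl
  · rcases h2 with h2 | rfl
    · exact Or.inl (colexLt_trans h1 h2)
    · exact Or.inl h1
  · exact h2

lemma colexLt_of_lt_of_le {α β γ : List A} (h1 : colexLt α β) (h2 : colexLe β γ) : colexLt α γ := by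
  rcases h2 with h2 | rfl
  · exact colexLt_trans h1 h2
  · exact h1

lemma colexLt_of_le_of_lt {α β γ : List A} (h1 : colexLe α β) (h2 : colexLt β γ) : colexLt α γ := by
  rcases h1 with h1 | rfl
  · exact colexLt_trans h1 h2
  · exact h2

lemma not_lt_and_le {α β : List A} (h1 : colexLt α β) (h2 : colexLe β α) : False :=
  colexLt_irrefl (colexLt_of_lt_of_le h1 h2)

lemma not_colexLt_nil (α : List A) : ¬ colexLt α [] := fun h => by
  unfold colexLt at h; rw [List.reverse_nil] at h; generalize α.reverse = l at h; cases h

lemma colexLe_nil (α : List A) : colexLe [] α := by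
  rcases colex_trichotomy [] α with h | h | h
  · exact Or.inl h
  · exact Or.inr h
  · exact absurd h (not_colexLt_nil α)

lemma reverse_concat' (α : List A) (a : A) : (α ++ [a]).reverse = a :: α.reverse := by
  simp

lemma concat_lt_concat_iff {α β : List A} {a b : A} :
    colexLt (α ++ [a]) (β ++ [b]) ↔ a < b ∨ (a = b ∧ colexLt α β) := by
  unfold colexLt
  rw [reverse_concat', reverse_concat', lex_cons_iff]

lemma lt_concat_split {α β : List A} {c : A} :
    colexLt (α ++ [c]) β ↔ ∃ β₁ d, β = β₁ ++ [d] ∧ (c < d ∨ (c = d ∧ colexLt α β₁)) := by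
  rcases List.eq_nil_or_concat β with rfl | ⟨β₁, d, rfl⟩
  · constructor
    · intro h; exact absurd h (not_colexLt_nil _)
    · rintro ⟨β₁, d, h, -⟩
      exact absurd h.symm (List.concat_ne_nil d β₁ <| by simpa [List.concat_eq_append] using ·)
  · rw [List.concat_eq_append, concat_lt_concat_iff]
    constructor
    · intro h; exact ⟨β₁, d, rfl, h⟩
    · rintro ⟨β₂, e, he, h⟩
      have hrev := congrArg List.reverse he
      rw [reverse_concat', reverse_concat'] at hrev
      injection hrev with h1 h2
      obtain rfl : e = d := h1.symm
      obtain rfl : β₂ = β₁ := List.reverse_injective h2.symm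
      exact h

lemma concat_le_concat {α β : List A} (a : A) (h : colexLe α β) : colexLe (α ++ [a]) (β ++ [a]) := by
  rcases h with h | rfl
  · exact Or.inl (concat_lt_concat_iff.mpr (Or.inr ⟨rfl, h⟩))
  · exact Or.inr rfl

lemma concat_lt_concat {α β : List A} (a : A) (h : colexLt α β) : colexLt (α ++ [a]) (β ++ [a]) :=
  concat_lt_concat_iff.mpr (Or.inr ⟨rfl, h⟩)

lemma lt_of_concat_lt_concat {α β : List A} {a : A} (h : colexLt (α ++ [a]) (β ++ [a])) :
    colexLt α β := by
  rcases concat_lt_concat_iff.mp h with h | h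
  · exact absurd h (lt_irrefl a)
  · exact h.2

lemma nil_lt_concat (β : List A) (d : A) : colexLt [] (β ++ [d]) := by
  show List.Lex _ _ _
  rw [List.reverse_nil, reverse_concat']
  exact List.Lex.nil

end S10


namespace S10
open DFA'
section DFAbasic
variable {A Q : Type} [LinearOrder A]

lemma deltaStar_append (D : DFA' A Q) (q : Q) (x y : List A) :
    D.deltaStar q (x ++ y) = (D.deltaStar q x).bind (fun r => D.deltaStar r y) := by
  induction x generalizing q with
  | nil => simp [DFA'.deltaStar]
  | cons a x ih =>
    show D.deltaStar q (a :: (x ++ y)) = _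
    simp only [DFA'.deltaStar]
    cases D.delta q a with
    | none => simp
    | some r => simp [ih]

lemma deltaStar_concat (D : DFA' A Q) (q : Q) (x : List A) (a : A) :
    D.deltaStar q (x ++ [a]) = (D.deltaStar q x).bind (fun r => D.delta r a) := by
  rw [deltaStar_append]
  cases D.deltaStar q x with
  | none => rfl
  | some r =>
    show D.deltaStar r [a] = _
    simp only [DFA'.deltaStar]
    cases h : D.delta r a <;> simp [DFA'.deltaStar, h]

lemma runState_of_pref {D : DFA' A Q} {α : List A} (h : α ∈ Pref D.lang) :
    ∃ s, D.deltaStar D.start α = some s := by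
  obtain ⟨γ, f, hf, hrun⟩ := h
  rw [deltaStar_append] at hrun
  rcases Option.bind_eq_some_iff.mp hrun with ⟨s, hs, -⟩
  exact ⟨s, hs⟩

lemma nerode_of_same_state {D : DFA' A Q} {x y : List A} {s : Q}
    (hx : D.deltaStar D.start x = some s) (hy : D.deltaStar D.start y = some s) :
    NerodeEq D.lang x y := by
  intro γ
  show (∃ f ∈ D.accept, _) ↔ (∃ f ∈ D.accept, _)
  rw [deltaStar_append, deltaStar_append, hx, hy]

/-- The separation lemma: in a colex-ordered DFA, words reaching a strictly smaller
state are colex-smaller. -/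
lemma colex_sep {D : DFA' A Q} {le : Q → Q → Prop} (hco : IsColexDFA D le) :
    ∀ (n : ℕ) (α β : List A), α.length ≤ n → ∀ u v : Q, le u v → u ≠ v →
      D.deltaStar D.start α = some u → D.deltaStar D.start β = some v → colexLt α β := by
  intro n
  induction n with
  | zero =>
    intro α β hlen u v hle hne hα hβ
    have hα0 : α = [] := List.length_eq_zero_iff.mp (Nat.le_zero.mp hlen)
    subst hα0
    have hu : u = D.start := by
      simp only [DFA'.deltaStar] at hα; exact (Option.some_injective _ hα).symm
    rcases List.eq_nil_or_concat β with rfl | ⟨β₁, b, rfl⟩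
    · have hv : v = D.start := by
        simp only [DFA'.deltaStar] at hβ; exact (Option.some_injective _ hβ).symm
      exact absurd (hu.trans hv.symm) hne
    · rw [List.concat_eq_append]; exact nil_lt_concat β₁ b
  | succ n ih =>
    intro α β hlen u v hle hne hα hβ
    rcases List.eq_nil_or_concat α with rfl | ⟨α₁, a, rfl⟩
    · have hu : u = D.start := by
        simp only [DFA'.deltaStar] at hα; exact (Option.some_injective _ hα).symm
      rcases List.eq_nil_or_concat β with rfl | ⟨β₁, b, rfl⟩
      · have hv : v = D.start := by
          simp only [DFA'.deltaStar] at hβ; exact (Option.some_injective _ hβ).symm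
        exact absurd (hu.trans hv.symm) hne
      · rw [List.concat_eq_append]; exact nil_lt_concat β₁ b
    · rw [List.concat_eq_append, deltaStar_concat] at hα
      rcases Option.bind_eq_some_iff.mp hα with ⟨u', hu', hdu⟩
      have hmemu : (a : WithBot A) ∈ D.lam u := Or.inl ⟨a, u', rfl, hdu⟩
      rcases List.eq_nil_or_concat β with rfl | ⟨β₁, b, rfl⟩
      · have hv : v = D.start := by
          simp only [DFA'.deltaStar] at hβ; exact (Option.some_injective _ hβ).symm
        have hmemv : (⊥ : WithBot A) ∈ D.lam v := Or.inr ⟨hv, rfl⟩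
        have := hco.ax1 u v hle hne _ hmemu _ hmemv
        exact absurd this (by simp)
      · rw [List.concat_eq_append, deltaStar_concat] at hβ
        rcases Option.bind_eq_some_iff.mp hβ with ⟨v', hv', hdv⟩
        have hmemv : (b : WithBot A) ∈ D.lam v := Or.inl ⟨b, v', rfl, hdv⟩
        have hab : (a : WithBot A) ≤ (b : WithBot A) := hco.ax1 u v hle hne _ hmemu _ hmemv
        have hab' : a ≤ b := WithBot.coe_le_coe.mp hab
        simp only [List.concat_eq_append]
        rcases lt_or_eq_of_le hab' with hlt | rfl
        · exact concat_lt_concat_iff.mpr (Or.inl hlt)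
        · have hle' : le u' v' := hco.ax2 a u v u' v' hdu hdv hle hne
          have hne' : u' ≠ v' := by
            rintro rfl
            rw [hdu] at hdv
            exact hne (Option.some_injective _ hdv)
          have hlen' : α₁.length ≤ n := by
            rw [List.concat_eq_append, List.length_append] at hlen
            simpa using Nat.le_of_succ_le_succ (by simpa using hlen)
          exact concat_lt_concat a (ih α₁ β₁ hlen' u' v' hle' hne' hu' hv')

lemma mono_ge {g : ℕ → List A} (h : ∀ i, colexLe (g i) (g (i+1))) :
    ∀ i j, i ≤ j → colexLe (g i) (g j) := by
  intro i j hij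
  induction j, hij using Nat.le_induction with
  | base => exact colexLe_refl _
  | succ n hn ihn => exact colexLe_trans ihn (h n)

lemma mono_ge' {g : ℕ → List A} (h : ∀ i, colexLe (g (i+1)) (g i)) :
    ∀ i j, i ≤ j → colexLe (g j) (g i) := by
  intro i j hij
  induction j, hij using Nat.le_induction with
  | base => exact colexLe_refl _
  | succ n hn ihn => exact colexLe_trans (h n) ihn

end DFAbasic
end S10


namespace S10
section Forward
variable {A Q : Type} [LinearOrder A] [Fintype Q]

lemma forward_dir (D : DFA' A Q) (le : Q → Q → Prop) (p' p : ℕ) (f : Fin p' → Set Q)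
    (hco : IsColexDFA D le) (hcp : IsChainPartition le p' f) (hp'p : p' ≤ p)
    (α : ℕ → List A) (hpref : ∀ i, α i ∈ Pref D.lang) (hmono : MonotoneSeq α) :
    ∃ (n : ℕ) (β : Fin p → List A), (∀ j, β j ∈ Pref D.lang) ∧
      ∀ i, n ≤ i → ∃ j, NerodeEq D.lang (α i) (β j) := by
  classical
  have hq : ∀ i, ∃ s, D.deltaStar D.start (α i) = some s := fun i => runState_of_pref (hpref i)
  choose q hq using hq
  have hmono' : (∀ i j, i ≤ j → colexLe (α i) (α j)) ∨ (∀ i j, i ≤ j → colexLe (α j) (α i)) :=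
    hmono.imp mono_ge mono_ge'
  set V : Set Q := {s | {i | q i = s}.Infinite} with hV
  -- V is nonempty
  have hVne : ∃ s, s ∈ V := by
    obtain ⟨y, hy⟩ := Finite.exists_infinite_fiber q
    refine ⟨y, ?_⟩
    have h1 : (q ⁻¹' {y}).Infinite := Set.infinite_coe_iff.mp hy
    show {i | q i = y}.Infinite
    have h2 : {i | q i = y} = q ⁻¹' {y} := by ext i; simp [Set.mem_preimage]
    rw [h2]; exact h1
  -- at most one state per chain is visited infinitely often
  have hkey : ∀ u v : Q, u ∈ V → v ∈ V → ∀ k : Fin p', u ∈ f k → v ∈ f k → u = v := by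
    intro u v hu hv k hfu hfv
    by_contra hne
    have hsep : (∀ x y, q x = u → q y = v → colexLt (α x) (α y)) ∨
        (∀ x y, q x = v → q y = u → colexLt (α x) (α y)) := by
      rcases hcp.2 k u hfu v hfv with h | h
      · exact Or.inl (fun x y hx hy =>
          colex_sep hco (α x).length _ _ le_rfl u v h hne (hx ▸ hq x) (hy ▸ hq y))
      · exact Or.inr (fun x y hx hy =>
          colex_sep hco (α x).length _ _ le_rfl v u h (Ne.symm hne) (hx ▸ hq x) (hy ▸ hq y))
    -- in each case find contradiction with monotonicity
    rcases hsep with hsep | hsep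
    · rcases hmono' with hm | hm
      · obtain ⟨i, hi⟩ := hv.nonempty
        obtain ⟨j, hj, hij⟩ := hu.exists_gt i
        exact not_lt_and_le (hsep j i hj hi) (hm i j (le_of_lt hij))
      · obtain ⟨i, hi⟩ := hu.nonempty
        obtain ⟨j, hj, hij⟩ := hv.exists_gt i
        exact not_lt_and_le (hsep i j hi hj) (hm i j (le_of_lt hij))
    · rcases hmono' with hm | hm
      · obtain ⟨i, hi⟩ := hu.nonempty
        obtain ⟨j, hj, hij⟩ := hv.exists_gt i
        exact not_lt_and_le (hsep j i hj hi) (hm i j (le_of_lt hij))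
      · obtain ⟨i, hi⟩ := hv.nonempty
        obtain ⟨j, hj, hij⟩ := hu.exists_gt i
        exact not_lt_and_le (hsep i j hi hj) (hm i j (le_of_lt hij))
  -- chain index
  have hc : ∀ s : Q, ∃ k, s ∈ f k := fun s => (hcp.1 s).exists
  choose c hc using hc
  have hVfin : V.Finite := Set.toFinite V
  -- list the elements of V
  set l : List Q := hVfin.toFinset.toList with hl
  have hlV : ∀ s, s ∈ l ↔ s ∈ V := by
    intro s; rw [hl, Finset.mem_toList, Set.Finite.mem_toFinset]
  have hllen : l.length ≤ p := by
    have hinj : Function.Injective (fun x : {y // y ∈ hVfin.toFinset} => c x.val) := by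
      rintro ⟨x, hx⟩ ⟨y, hy⟩ hxy
      have hxy' : c x = c y := hxy
      simp only [Subtype.mk_eq_mk]
      rw [Set.Finite.mem_toFinset] at hx hy
      exact hkey x y hx hy (c x) (hc x) (by rw [hxy']; exact hc y)
    have := Fintype.card_le_of_injective _ hinj
    rw [Fintype.card_coe, Fintype.card_fin] at this
    calc l.length = hVfin.toFinset.card := Finset.length_toList _
    _ ≤ p' := this
    _ ≤ p := hp'p
  set vdef : Q := hVne.choose with hvdef
  have hvdefV : vdef ∈ V := hVne.choose_spec
  set e : Fin p → Q := fun j => if h : (j : ℕ) < l.length then l.get ⟨j, h⟩ else vdef with he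
  have heV : ∀ j, e j ∈ V := by
    intro j
    by_cases h : (j : ℕ) < l.length
    · have hthis : e j = l.get ⟨j, h⟩ := by rw [he]; exact dif_pos h
      rw [hthis]; exact (hlV _).mp (List.get_mem l ⟨j, h⟩)
    · have hthis : e j = vdef := by rw [he]; exact dif_neg h
      rw [hthis]; exact hvdefV
  have hecov : ∀ s ∈ V, ∃ j : Fin p, e j = s := by
    intro s hs
    obtain ⟨k, hk⟩ := List.mem_iff_get.mp ((hlV s).mpr hs)
    refine ⟨⟨k, lt_of_lt_of_le k.isLt hllen⟩, ?_⟩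
    have hthis : e ⟨k, lt_of_lt_of_le k.isLt hllen⟩ = l.get k := by
      rw [he]; exact dif_pos k.isLt
    rw [hthis]; exact hk
  -- pick witnesses
  set w : Q → ℕ := fun s => if h : s ∈ V then h.nonempty.choose else 0 with hw
  have hwspec : ∀ s, s ∈ V → q (w s) = s := by
    intro s hs
    rw [hw]; simp only [dif_pos hs]
    exact hs.nonempty.choose_spec
  -- bound for bad indices
  have hBadfin : {i | q i ∉ V}.Finite := by
    have : {i | q i ∉ V} ⊆ ⋃ s ∈ (Vᶜ : Set Q), {i | q i = s} := by
      intro i hi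
      exact Set.mem_biUnion hi rfl
    refine Set.Finite.subset (Set.Finite.biUnion (Set.toFinite _) ?_) this
    intro s hs
    exact Set.not_infinite.mp hs
  obtain ⟨N, hN⟩ := hBadfin.bddAbove
  refine ⟨N + 1, fun j => α (w (e j)), fun j => hpref _, ?_⟩
  intro i hi
  have hiV : q i ∈ V := by
    by_contra hbad
    exact absurd (hN hbad) (by omega)
  obtain ⟨j, hj⟩ := hecov _ hiV
  refine ⟨j, nerode_of_same_state (hq i) ?_⟩
  have h3 : q (w (e j)) = q i := by rw [hwspec (e j) (heV j), hj]
  rw [← h3]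
  exact hq _

end Forward
end S10


namespace S10
section RCsec
variable {A : Type} [LinearOrder A] [Fintype A]

/-- A finite-state right congruence "recognizer". -/
structure RC (A : Type) where
  T : Type
  fin : Finite T
  g : List A → T
  st : T → A → T
  prop : ∀ α a, g (α ++ [a]) = st (g α) a

/-- `X` is saturated by the recognizer `r`. -/
def Sat (r : RC A) (X : Set (List A)) : Prop :=
  ∀ α β, r.g α = r.g β → (α ∈ X ↔ β ∈ X)

def RC.prod (r s : RC A) : RC A where
  T := r.T × s.T
  fin := by have := r.fin; have := s.fin; exact inferInstance
  g := fun α => (r.g α, s.g α)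
  st := fun t a => (r.st t.1 a, s.st t.2 a)
  prop := by intro α a; simp [r.prop, s.prop]

lemma Sat.prod_left {r s : RC A} {X : Set (List A)} (h : Sat r X) : Sat (r.prod s) X := by
  intro α β hg
  exact h α β (congrArg Prod.fst hg)

lemma Sat.prod_right {r s : RC A} {X : Set (List A)} (h : Sat s X) : Sat (r.prod s) X := by
  intro α β hg
  exact h α β (congrArg Prod.snd hg)

lemma Sat.union {r : RC A} {X Y : Set (List A)} (hX : Sat r X) (hY : Sat r Y) :
    Sat r (X ∪ Y) := fun α β hg => or_congr (hX α β hg) (hY α β hg)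

lemma Sat.inter {r : RC A} {X Y : Set (List A)} (hX : Sat r X) (hY : Sat r Y) :
    Sat r (X ∩ Y) := fun α β hg => and_congr (hX α β hg) (hY α β hg)

lemma Sat.sUnion {r : RC A} {F : Set (Set (List A))} (h : ∀ X ∈ F, Sat r X) :
    Sat r (⋃₀ F) := by
  intro α β hg
  constructor
  · rintro ⟨X, hXF, hαX⟩; exact ⟨X, hXF, (h X hXF α β hg).mp hαX⟩
  · rintro ⟨X, hXF, hβX⟩; exact ⟨X, hXF, (h X hXF α β hg).mpr hβX⟩

/-- Down-closed set for the colex order. -/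
def IsDownset (X : Set (List A)) : Prop := ∀ x y : List A, colexLe x y → y ∈ X → x ∈ X

/-- strict down-closure -/
def sdc (X : Set (List A)) : Set (List A) := {α | ∃ β ∈ X, colexLt α β}

/-- down-closure -/
def dc (X : Set (List A)) : Set (List A) := X ∪ sdc X

lemma mem_dc {X : Set (List A)} {x : List A} : x ∈ dc X ↔ ∃ β ∈ X, colexLe x β := by
  constructor
  · rintro (h | ⟨β, hβ, hlt⟩)
    · exact ⟨x, h, colexLe_refl x⟩
    · exact ⟨β, hβ, Or.inl hlt⟩
  · rintro ⟨β, hβ, (hlt | rfl)⟩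
    · exact Or.inr ⟨β, hβ, hlt⟩
    · exact Or.inl hβ

lemma isDownset_sdc {X : Set (List A)} : IsDownset (sdc X) := by
  rintro x y hxy ⟨β, hβ, hlt⟩
  exact ⟨β, hβ, colexLt_of_le_of_lt hxy hlt⟩

lemma isDownset_dc {X : Set (List A)} : IsDownset (dc X) := by
  rintro x y hxy hy
  rcases mem_dc.mp hy with ⟨β, hβ, hle⟩
  exact mem_dc.mpr ⟨β, hβ, colexLe_trans hxy hle⟩

lemma isDownset_sUnion {F : Set (Set (List A))} (h : ∀ X ∈ F, IsDownset X) :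
    IsDownset (⋃₀ F) := by
  rintro x y hxy ⟨X, hXF, hyX⟩
  exact ⟨X, hXF, h X hXF x y hxy hyX⟩

lemma isDownset_union {X Y : Set (List A)} (hX : IsDownset X) (hY : IsDownset Y) :
    IsDownset (X ∪ Y) := by
  rintro x y hxy (hy | hy)
  · exact Or.inl (hX x y hxy hy)
  · exact Or.inr (hY x y hxy hy)

/-- The recognizer for strict down-closures of `r`-saturated sets. -/
def RC.sdcRC (r : RC A) : RC A where
  T := Set r.T
  fin := by have := r.fin; exact inferInstance
  g := fun α => r.g '' {β | colexLt α β}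
  st := fun W a => (fun s => r.st s a) '' W ∪ ⋃ d ∈ {d : A | a < d}, (fun s => r.st s d) '' Set.range r.g
  prop := by
    intro α a
    ext t
    simp only [Set.mem_image, Set.mem_setOf_eq, Set.mem_union, Set.mem_iUnion, Set.mem_range]
    constructor
    · rintro ⟨β, hβ, rfl⟩
      rcases lt_concat_split.mp hβ with ⟨β₁, d, rfl, hd | ⟨rfl, hlt⟩⟩
      · exact Or.inr ⟨d, hd, r.g β₁, ⟨β₁, rfl⟩, (r.prop β₁ d).symm⟩
      · exact Or.inl ⟨r.g β₁, ⟨β₁, hlt, rfl⟩, (r.prop β₁ a).symm⟩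
    · rintro (⟨s, ⟨β₁, hlt, rfl⟩, rfl⟩ | ⟨d, hd, s, ⟨β₁, rfl⟩, rfl⟩)
      · exact ⟨β₁ ++ [a], concat_lt_concat a hlt, (r.prop β₁ a)⟩
      · exact ⟨β₁ ++ [d], concat_lt_concat_iff.mpr (Or.inl hd), (r.prop β₁ d)⟩

lemma sat_sdc (r : RC A) (X : Set (List A)) (hX : Sat r X) : Sat r.sdcRC (sdc X) := by
  have hmem : ∀ γ, γ ∈ sdc X ↔ ∃ s ∈ r.g '' {δ | colexLt γ δ}, s ∈ r.g '' X := by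
    intro γ
    constructor
    · rintro ⟨δ, hδX, hlt⟩
      exact ⟨r.g δ, ⟨δ, hlt, rfl⟩, ⟨δ, hδX, rfl⟩⟩
    · rintro ⟨s, ⟨δ, hlt, rfl⟩, ⟨x, hxX, hgx⟩⟩
      exact ⟨δ, (hX x δ hgx) |>.mp hxX, hlt⟩
  intro α β hg
  have hg' : r.g '' {δ | colexLt α δ} = r.g '' {δ | colexLt β δ} := hg
  rw [hmem, hmem, hg']

section Singleton
variable (w : List A)

private def preG (α : List A) : Option (Fin (w.length + 1)) :=
  if h : α <+: w then some ⟨α.length, by have := List.IsPrefix.length_le h; omega⟩ else none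

private def preSt : Option (Fin (w.length + 1)) → A → Option (Fin (w.length + 1))
  | none, _ => none
  | some k, a =>
      if h : (k : ℕ) + 1 ≤ w.length ∧ w.take ((k : ℕ)+1) = w.take (k : ℕ) ++ [a]
        then some ⟨(k : ℕ) + 1, by omega⟩ else none

private lemma preProp (α : List A) (a : A) : preG w (α ++ [a]) = preSt w (preG w α) a := by
  classical
  by_cases h : α ++ [a] <+: w
  · have hα : α <+: w := ((α.prefix_append [a]).trans h)
    rw [preG, preG, dif_pos h, dif_pos hα]
    have hlen : α.length + 1 ≤ w.length := by
      have := List.IsPrefix.length_le h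
      simpa using this
    have htake : w.take (α.length + 1) = w.take α.length ++ [a] := by
      have h1 : w.take (α.length + 1) = α ++ [a] := by
        have := List.prefix_iff_eq_take.mp h
        simpa using this.symm
      have h2 : w.take α.length = α := (List.prefix_iff_eq_take.mp hα).symm
      rw [h1, h2]
    rw [preSt, dif_pos ⟨hlen, htake⟩]
    congr 1
    ext
    simp
  · rw [preG, dif_neg h]
    by_cases hα : α <+: w
    · rw [preG, dif_pos hα, preSt, dif_neg]
      rintro ⟨h1, h2⟩
      apply h
      have h3 : w.take α.length = α := (List.prefix_iff_eq_take.mp hα).symm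
      rw [h3] at h2
      rw [← h2]
      exact List.take_prefix _ _
    · rw [preG, dif_neg hα]
      rfl

end Singleton

/-- Recognizer for a singleton word (prefix automaton). -/
lemma sat_singleton (w : List A) : ∃ r : RC A, Sat r {w} := by
  classical
  refine ⟨⟨Option (Fin (w.length + 1)), inferInstance, preG w, preSt w, preProp w⟩, ?_⟩
  intro α β hg
  simp only [Set.mem_singleton_iff]
  have key : ∀ γ δ : List A, preG w γ = preG w δ → γ = w → δ = w := by
    rintro γ δ hg rfl
    rw [preG, dif_pos (List.prefix_refl γ)] at hg
    by_cases hδ : δ <+: γ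
    · rw [preG, dif_pos hδ] at hg
      injection hg.symm with hg2
      have : γ.length = δ.length := by
        have := congrArg Fin.val hg2
        simpa using this.symm
      exact (hδ.eq_of_length this.symm)
    · rw [preG, dif_neg hδ] at hg
      exact absurd hg (by simp)
  exact ⟨key α β hg, key β α hg.symm⟩

/-- Concrete countable recognizers. -/
abbrev FinRC (A : Type) := Σ n : ℕ, (Fin n → A → Fin n) × Fin n

def runF (c : FinRC A) (α : List A) : Fin c.1 := α.foldl c.2.1 c.2.2

lemma runF_concat (c : FinRC A) (α : List A) (a : A) :
    runF c (α ++ [a]) = c.2.1 (runF c α) a := by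
  simp [runF, List.foldl_append]

/-- Every recognizer is refined by a concrete one. -/
lemma rc_norm (r : RC A) : ∃ c : FinRC A, ∀ α β, runF c α = runF c β → r.g α = r.g β := by
  classical
  have := r.fin
  have hfin : Finite ↥(Set.range r.g) := Set.Finite.to_subtype (Set.toFinite _)
  have : Fintype ↥(Set.range r.g) := Fintype.ofFinite _
  set n := Fintype.card ↥(Set.range r.g) with hn
  obtain e : ↥(Set.range r.g) ≃ Fin n := Fintype.equivFin _
  set stp : Fin n → A → Fin n := fun i a =>
    e ⟨r.st (e.symm i).val a, by
      obtain ⟨α, hα⟩ := (e.symm i).property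
      exact ⟨α ++ [a], by rw [r.prop, hα]⟩⟩ with hstp
  set c : FinRC A := ⟨n, stp, e ⟨r.g [], ⟨[], rfl⟩⟩⟩ with hc
  have hrun : ∀ α, runF c α = e ⟨r.g α, ⟨α, rfl⟩⟩ := by
    intro α
    induction α using List.reverseRecOn with
    | nil => rfl
    | append_singleton α a ih =>
      rw [runF_concat, ih]
      show stp _ a = _
      rw [hstp]
      simp only [Equiv.symm_apply_apply]
      congr 1
      ext
      exact (r.prop α a).symm
  refine ⟨c, fun α β h => ?_⟩
  rw [hrun, hrun] at h
  have := e.injective h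
  exact congrArg Subtype.val this

end RCsec
end S10


namespace S10
section SettingSec
variable {A : Type} [LinearOrder A] [Fintype A]

structure Setting (A : Type) [LinearOrder A] [Fintype A] where
  L : Set (List A)
  Q0 : Type
  fin0 : Finite Q0
  D0 : DFA' A Q0
  hlang : D0.lang = L
  p : ℕ
  enum : ℕ → FinRC A
  hsurj : Function.Surjective enum

variable (S : Setting A)

def Setting.F0 (α : List A) : Option S.Q0 := S.D0.deltaStar S.D0.start α

lemma Setting.F0_concat (α : List A) (a : A) :
    S.F0 (α ++ [a]) = (S.F0 α).bind (fun q => S.D0.delta q a) :=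
  deltaStar_concat S.D0 S.D0.start α a

lemma Setting.ker_F0 {α β : List A} (h : S.F0 α = S.F0 β) : NerodeEq S.L α β := by
  intro γ
  rw [← S.hlang]
  show (∃ q ∈ S.D0.accept, S.D0.deltaStar S.D0.start (α ++ γ) = some q) ↔
    (∃ q ∈ S.D0.accept, S.D0.deltaStar S.D0.start (β ++ γ) = some q)
  rw [deltaStar_append, deltaStar_append]
  show (∃ q ∈ S.D0.accept, (S.F0 α).bind _ = some q) ↔ _
  rw [h]
  rfl

abbrev Setting.Vals (n : ℕ) : Type := Option S.Q0 × Π m : Fin n, Fin ((S.enum m).1)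

lemma Setting.vals_finite (n : ℕ) : Finite (S.Vals n) := by
  have := S.fin0
  have : Fintype S.Q0 := Fintype.ofFinite _
  have h1 : Finite ((m : Fin n) → Fin ((S.enum m).1)) := Pi.finite
  exact inferInstance

def Setting.hval (n : ℕ) (α : List A) : S.Vals n :=
  (S.F0 α, fun m => runF (S.enum m) α)

def Setting.rcH (n : ℕ) : RC A where
  T := S.Vals n
  fin := S.vals_finite n
  g := S.hval n
  st := fun t a => (t.1.bind (fun q => S.D0.delta q a), fun m => (S.enum m).2.1 (t.2 m) a)
  prop := by
    intro α a
    unfold Setting.hval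
    refine Prod.ext ?_ (funext fun m => ?_)
    · exact S.F0_concat α a
    · exact runF_concat _ α a

def SatH (n : ℕ) (X : Set (List A)) : Prop :=
  ∀ α β, S.hval n α = S.hval n β → (α ∈ X ↔ β ∈ X)

lemma satH_iff_sat {n : ℕ} {X : Set (List A)} : SatH S n X ↔ Sat (S.rcH n) X := Iff.rfl

lemma Setting.hval_concat (n : ℕ) (α : List A) (a : A) :
    S.hval n (α ++ [a]) = (S.rcH n).st (S.hval n α) a := (S.rcH n).prop α a

lemma Setting.hval_mono {n n' : ℕ} (h : n ≤ n') {α β : List A}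
    (he : S.hval n' α = S.hval n' β) : S.hval n α = S.hval n β := by
  refine Prod.ext ?_ (funext fun m => ?_)
  · exact congrArg (fun t : S.Vals n' => t.1) he
  · exact congrArg (fun t : S.Vals n' => t.2 ⟨m.1, lt_of_lt_of_le m.isLt h⟩) he

lemma satH_mono {n n' : ℕ} (h : n ≤ n') {X : Set (List A)} (hs : SatH S n X) :
    SatH S n' X := fun α β he => hs α β (S.hval_mono h he)

lemma cofinal (r : RC A) : ∃ n, ∀ α β, S.hval n α = S.hval n β → r.g α = r.g β := by
  obtain ⟨c, hc⟩ := rc_norm r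
  obtain ⟨m, hm⟩ := S.hsurj c
  refine ⟨m + 1, fun α β h => hc _ _ ?_⟩
  have h2 := congrArg (fun t : S.Vals (m+1) => t.2 ⟨m, Nat.lt_succ_self m⟩) h
  simp only [Setting.hval] at h2
  rw [← hm]
  exact h2

def DSet (n : ℕ) : Set (Set (List A)) := {D | IsDownset D ∧ SatH S n D}

def blk (n : ℕ) (w : List A) : Set (List A) := {α | ∀ D ∈ DSet S n, (α ∈ D ↔ w ∈ D)}

lemma mem_blk_self (n : ℕ) (w : List A) : w ∈ blk S n w := fun _ _ => Iff.rfl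

lemma blk_eq_of_mem {n : ℕ} {α w : List A} (h : α ∈ blk S n w) : blk S n α = blk S n w := by
  ext β
  constructor
  · intro hβ D hD; exact (hβ D hD).trans (h D hD)
  · intro hβ D hD; exact (hβ D hD).trans (h D hD).symm

lemma blk_mono {n n' : ℕ} (h : n ≤ n') (w : List A) : blk S n' w ⊆ blk S n w :=
  fun α hα D hD => hα D ⟨hD.1, satH_mono S h hD.2⟩

lemma mem_blk_of_hval {n : ℕ} {α w : List A} (h : S.hval n α = S.hval n w) :
    α ∈ blk S n w := fun D hD => hD.2 α w h

def Bad (n : ℕ) (w : List A) : Prop :=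
  ∃ v : Fin (S.p + 1) → List A, (∀ t, v t ∈ blk S n w ∧ v t ∈ Pref S.L) ∧
    ∀ t t', t ≠ t' → ¬ NerodeEq S.L (v t) (v t')

lemma bad_mono {n m : ℕ} (h : n ≤ m) {w : List A} (hb : Bad S m w) : Bad S n w := by
  obtain ⟨v, hv1, hv2⟩ := hb
  exact ⟨v, fun t => ⟨blk_mono S h w (hv1 t).1, (hv1 t).2⟩, hv2⟩

lemma bad_congr {n : ℕ} {α w : List A} (h : α ∈ blk S n w) (hb : Bad S n α) : Bad S n w := by
  obtain ⟨v, hv1, hv2⟩ := hb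
  exact ⟨v, fun t => ⟨(blk_eq_of_mem S h) ▸ (hv1 t).1, (hv1 t).2⟩, hv2⟩

lemma pigeon (n : ℕ) (P : List A → Prop) (h : ∀ m, n ≤ m → ∃ u, Bad S m u ∧ P u) :
    ∃ w, P w ∧ Bad S n w ∧ ∀ m, n ≤ m → ∃ u, Bad S m u ∧ u ∈ blk S n w := by
  classical
  have hc : ∀ m : ℕ, ∃ u, Bad S (max m n) u ∧ P u := fun m => h _ (le_max_right m n)
  choose u hu1 hu2 using hc
  have hfin : Finite (S.Vals n) := S.vals_finite n
  obtain ⟨y, hy⟩ := Finite.exists_infinite_fiber (fun m => S.hval n (u m))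
  have hyinf : ((fun m => S.hval n (u m)) ⁻¹' {y}).Infinite := Set.infinite_coe_iff.mp hy
  obtain ⟨m₀, hm₀⟩ := hyinf.nonempty
  refine ⟨u m₀, hu2 m₀, bad_mono S (le_max_right m₀ n) (hu1 m₀), ?_⟩
  intro m hm
  obtain ⟨m₁, hm₁mem, hm₁gt⟩ := hyinf.exists_gt m
  refine ⟨u m₁, ?_, ?_⟩
  · exact bad_mono S (le_trans (le_of_lt hm₁gt) (le_max_left m₁ n)) (hu1 m₁)
  · exact mem_blk_of_hval S ((show S.hval n (u m₁) = y from hm₁mem).trans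
      (show S.hval n (u m₀) = y from hm₀).symm)

lemma koenig (hbad : ∀ n, ∃ w, Bad S n w) :
    ∃ W : ℕ → List A, (∀ n, Bad S n (W n)) ∧
      (∀ n m, n ≤ m → blk S m (W m) ⊆ blk S n (W n)) := by
  classical
  set Inv : ℕ → List A → Prop :=
    fun n w => ∀ m, n ≤ m → ∃ u, Bad S m u ∧ u ∈ blk S n w with hInv
  have key : ∀ n w, Inv n w → ∃ w', w' ∈ blk S n w ∧ Bad S (n+1) w' ∧ Inv (n+1) w' := by
    intro n w hw
    obtain ⟨w', hP, hB, hI⟩ :=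
      pigeon S (n+1) (· ∈ blk S n w) (fun m hm => hw m (le_trans (Nat.le_succ n) hm))
    exact ⟨w', hP, hB, hI⟩
  obtain ⟨w₀, -, hBad₀, hInv₀⟩ :=
    pigeon S 0 (fun _ => True) (fun m _ => (hbad m).imp (fun u hu => ⟨hu, trivial⟩))
  choose nxt hnxt1 hnxt2 hnxt3 using key
  let Wrec : ∀ n, {w : List A // Inv n w} :=
    fun n => Nat.rec ⟨w₀, hInv₀⟩ (fun k pr => ⟨nxt k pr.val pr.prop, hnxt3 k pr.val pr.prop⟩) n
  refine ⟨fun n => (Wrec n).val, ?_, ?_⟩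
  · intro n
    cases n with
    | zero => exact hBad₀
    | succ k => exact hnxt2 k (Wrec k).val (Wrec k).prop
  · have hstep : ∀ n, blk S (n+1) ((Wrec (n+1)).val) ⊆ blk S n ((Wrec n).val) := by
      intro n α hα
      have h1 : α ∈ blk S n ((Wrec (n+1)).val) := blk_mono S (Nat.le_succ n) _ hα
      have h2 : (Wrec (n+1)).val ∈ blk S n ((Wrec n).val) :=
        hnxt1 n (Wrec n).val (Wrec n).prop
      rw [← blk_eq_of_mem S h2]
      exact h1
    intro n m hnm
    induction m, hnm using Nat.le_induction with
    | base => exact subset_rfl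
    | succ k hk ih => exact fun α hα => ih (hstep k hα)

end SettingSec
end S10


namespace S10
section NerLemmas
variable {A : Type} {L : Set (List A)}

lemma ner_refl (α : List A) : NerodeEq L α α := fun _ => Iff.rfl
lemma ner_symm {α β : List A} (h : NerodeEq L α β) : NerodeEq L β α := fun γ => (h γ).symm
lemma ner_trans {α β γ : List A} (h1 : NerodeEq L α β) (h2 : NerodeEq L β γ) :
    NerodeEq L α γ := fun δ => (h1 δ).trans (h2 δ)
lemma ner_append {α β : List A} (l : List A) (h : NerodeEq L α β) :
    NerodeEq L (α ++ l) (β ++ l) := fun γ => by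
  rw [List.append_assoc, List.append_assoc]; exact h (l ++ γ)
lemma pref_of_ner {α β : List A} (h : NerodeEq L α β) (hα : α ∈ Pref L) : β ∈ Pref L := by
  obtain ⟨γ, hγ⟩ := hα
  exact ⟨γ, (h γ).mp hγ⟩
lemma mem_L_of_ner {α β : List A} (h : NerodeEq L α β) (hα : α ∈ L) : β ∈ L := by
  have := (h []).mp (by simpa using hα)
  simpa using this

end NerLemmas

section CoreSec
variable {A : Type} [LinearOrder A] [Fintype A] (S : Setting A)

lemma satH_class (n : ℕ) (w : List A) : SatH S n {α | NerodeEq S.L α w} := by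
  intro α β h
  have hner : NerodeEq S.L α β := S.ker_F0 (congrArg (fun t : S.Vals n => t.1) h)
  exact ⟨fun hα => ner_trans (ner_symm hner) hα, fun hβ => ner_trans hner hβ⟩

lemma satH_blk (n : ℕ) (w : List A) : SatH S n (blk S n w) := by
  intro α β h
  constructor
  · intro hα D hD; exact (hD.2 β α h.symm).trans (hα D hD)
  · intro hβ D hD; exact (hD.2 α β h).trans (hβ D hD)

/-- Core lemma: if every level has a bad block, then the monotone–sequence
condition fails. -/
lemma fine_level_exists
    (hb : ∀ x : ℕ → List A, (∀ i, x i ∈ Pref S.L) → MonotoneSeq x →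
        ∃ (n : ℕ) (βs : Fin S.p → List A), (∀ j, βs j ∈ Pref S.L) ∧
          ∀ i, n ≤ i → ∃ j, NerodeEq S.L (x i) (βs j)) :
    ∃ n, ∀ w, ¬ Bad S n w := by
  classical
  by_contra hcon
  push_neg at hcon
  obtain ⟨W, hWbad, hWnest⟩ := koenig S hcon
  -- the class tuple
  choose v hv1 hv2 using hWbad
  have hfinQ : Finite S.Q0 := S.fin0
  have hfinphi : Finite (Fin (S.p + 1) → Option S.Q0) := by
    have : Fintype S.Q0 := Fintype.ofFinite _
    exact inferInstance
  obtain ⟨y, hy⟩ := Finite.exists_infinite_fiber (fun n => fun t => S.F0 (v n t))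
  have hyinf : ((fun n => fun t => S.F0 (v n t)) ⁻¹' {y}).Infinite := Set.infinite_coe_iff.mp hy
  obtain ⟨m₀, hm₀⟩ := hyinf.nonempty
  set κ : Fin (S.p + 1) → List A := v m₀ with hκ
  have hκpref : ∀ t, κ t ∈ Pref S.L := fun t => (hv1 m₀ t).2
  have hκpair : ∀ t t', t ≠ t' → ¬ NerodeEq S.L (κ t) (κ t') := hv2 m₀
  have hκ3 : ∀ (n : ℕ) (t : Fin (S.p+1)), ∃ x, NerodeEq S.L x (κ t) ∧
      x ∈ blk S n (W n) ∧ x ∈ Pref S.L := by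
    intro n t
    obtain ⟨m₁, hm₁mem, hm₁gt⟩ := hyinf.exists_gt n
    refine ⟨v m₁ t, ?_, ?_, (hv1 m₁ t).2⟩
    · refine S.ker_F0 ?_
      have e1 : (fun t => S.F0 (v m₁ t)) = y := hm₁mem
      have e0 : (fun t => S.F0 (v m₀ t)) = y := hm₀
      have := congrFun (e1.trans e0.symm) t
      exact this
    · exact hWnest n m₁ (le_of_lt hm₁gt) (hv1 m₁ t).1
  -- the two sides of the limit cut
  set Wm : Set (List A) := {x | ∃ n, ∀ α ∈ blk S n (W n), ¬ colexLe α x} with hWm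
  set Wp : Set (List A) := {x | ∃ n, ∀ α ∈ blk S n (W n), colexLe α x} with hWp
  have hcover : ∀ x : List A, x ∈ Wm ∨ x ∈ Wp := by
    intro x
    obtain ⟨r₁, hr₁⟩ := sat_singleton (A := A) x
    have hsdc : Sat r₁.sdcRC (sdc {x}) := sat_sdc r₁ _ hr₁
    have hsatDx : Sat (r₁.prod r₁.sdcRC) (dc {x}) :=
      Sat.union (Sat.prod_left hr₁) (Sat.prod_right hsdc)
    obtain ⟨n₀, hn₀⟩ := cofinal S (r₁.prod r₁.sdcRC)
    have hDx : dc {x} ∈ DSet S n₀ :=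
      ⟨isDownset_dc, fun α β h => hsatDx α β (hn₀ α β h)⟩
    by_cases hW : W n₀ ∈ dc {x}
    · refine Or.inr ⟨n₀, fun α hα => ?_⟩
      have : α ∈ dc {x} := (hα _ hDx).mpr hW
      rcases mem_dc.mp this with ⟨β, hβ, hle⟩
      rcases hβ with rfl
      exact hle
    · refine Or.inl ⟨n₀, fun α hα hle => ?_⟩
      exact hW ((hα _ hDx).mp (mem_dc.mpr ⟨x, rfl, hle⟩))
  have hWmdown : ∀ x x' : List A, x ∈ Wm → colexLe x' x → x' ∈ Wm := by
    rintro x x' ⟨n, hn⟩ hle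
    exact ⟨n, fun α hα hle' => hn α hα (colexLe_trans hle' hle)⟩
  have hWpup : ∀ x x' : List A, x ∈ Wp → colexLe x x' → x' ∈ Wp := by
    rintro x x' ⟨n, hn⟩ hle
    exact ⟨n, fun α hα => colexLe_trans (hn α hα) hle⟩
  have horder : ∀ x z : List A, x ∈ Wm → z ∈ Wp → colexLt x z := by
    rintro x z ⟨n₁, h₁⟩ ⟨n₂, h₂⟩
    have hWk : W (max n₁ n₂) ∈ blk S (max n₁ n₂) (W (max n₁ n₂)) := mem_blk_self S _ _
    have hm1 : W (max n₁ n₂) ∈ blk S n₁ (W n₁) := hWnest n₁ _ (le_max_left _ _) hWk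
    have hm2 : W (max n₁ n₂) ∈ blk S n₂ (W n₂) := hWnest n₂ _ (le_max_right _ _) hWk
    exact colexLt_of_lt_of_le (colexLt_of_not_le (h₁ _ hm1)) (h₂ _ hm2)
  -- which classes accumulate below / above
  set Smin : Fin (S.p+1) → Prop := fun t => ∀ n, ∃ x, NerodeEq S.L x (κ t) ∧
    x ∈ blk S n (W n) ∧ x ∈ Wm with hSmin
  set Splus : Fin (S.p+1) → Prop := fun t => ∀ n, ∃ x, NerodeEq S.L x (κ t) ∧
    x ∈ blk S n (W n) ∧ x ∈ Wp with hSplus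
  have hSco : ∀ t, Smin t ∨ Splus t := by
    intro t
    by_cases hS : Smin t
    · exact Or.inl hS
    · refine Or.inr ?_
      rw [hSmin] at hS
      obtain ⟨n₁, hn₁⟩ := not_forall.mp hS
      intro n
      obtain ⟨x, hner, hB, hPref⟩ := hκ3 (max n n₁) t
      have hBn : x ∈ blk S n (W n) := hWnest n _ (le_max_left _ _) hB
      have hBn₁ : x ∈ blk S n₁ (W n₁) := hWnest n₁ _ (le_max_right _ _) hB
      rcases hcover x with hxm | hxp
      · exact absurd ⟨x, hner, hBn₁, hxm⟩ hn₁
      · exact ⟨x, hner, hBn, hxp⟩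
  -- the squeezing argument
  have hDstar : ∀ t1 t2, Smin t1 → Splus t2 → Splus t1 := by
    intro t1 t2 h1 h2 n
    set C1 : Set (List A) := {α | NerodeEq S.L α (κ t1)} with hC1
    set C2 : Set (List A) := {α | NerodeEq S.L α (κ t2)} with hC2
    set Bn : Set (List A) := blk S n (W n) with hBn
    set rn : RC A := S.rcH n with hrn
    have hsatC1 : Sat rn C1 := satH_class S n (κ t1)
    have hsatC2 : Sat rn C2 := satH_class S n (κ t2)
    have hsatBn : Sat rn Bn := satH_blk S n (W n)
    set R : Set (List A) := C1 ∩ Bn ∩ sdc (C2 ∩ Bn) with hR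
    set r' : RC A := rn.sdcRC with hr'
    have hsdc2 : Sat r' (sdc (C2 ∩ Bn)) := sat_sdc rn _ (hsatC2.inter hsatBn)
    set rR : RC A := rn.prod r' with hrR
    have hsatR : Sat rR R :=
      (Sat.prod_left (hsatC1.inter hsatBn)).inter (Sat.prod_right hsdc2)
    set r'' : RC A := rR.sdcRC with hr''
    have hsatsdcR : Sat r'' (sdc R) := sat_sdc rR R hsatR
    set rdc : RC A := rR.prod r'' with hrdc
    have hsatdcR : Sat rdc (dc R) := (Sat.prod_left hsatR).union (Sat.prod_right hsatsdcR)
    set Dminus : Set (List A) := ⋃₀ {D | D ∈ DSet S n ∧ W n ∉ D} with hDminus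
    have hsatDminus : Sat rn Dminus := Sat.sUnion (fun D hD => hD.1.2)
    set Dstar : Set (List A) := Dminus ∪ dc R with hDstarDef
    set rbig : RC A := rn.prod rdc with hrbig
    have hsatDstar : Sat rbig Dstar :=
      (Sat.prod_left hsatDminus).union (Sat.prod_right hsatdcR)
    have hdownDstar : IsDownset Dstar :=
      isDownset_union (isDownset_sUnion fun D hD => hD.1.1) isDownset_dc
    obtain ⟨n₁, hn₁⟩ := cofinal S rbig
    set m := max n n₁ with hm
    have hSatHm : SatH S m Dstar := fun α β h =>
      hsatDstar α β (hn₁ α β (S.hval_mono (le_max_right n n₁) h))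
    have hDstarD : Dstar ∈ DSet S m := ⟨hdownDstar, hSatHm⟩
    obtain ⟨x1, hx1ner, hx1B, hx1Wm⟩ := h1 m
    obtain ⟨x2, hx2ner, hx2B, hx2Wp⟩ := h2 m
    have hx1Bn : x1 ∈ Bn := hWnest n m (le_max_left _ _) hx1B
    have hx2Bn : x2 ∈ Bn := hWnest n m (le_max_left _ _) hx2B
    have hx1R : x1 ∈ R := ⟨⟨hx1ner, hx1Bn⟩, ⟨x2, ⟨hx2ner, hx2Bn⟩, horder _ _ hx1Wm hx2Wp⟩⟩
    have hx1Dstar : x1 ∈ Dstar := Or.inr (Or.inl hx1R)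
    have hx2Dstar : x2 ∈ Dstar := by
      have e1 := hx1B Dstar hDstarD
      have e2 := hx2B Dstar hDstarD
      exact e2.mpr (e1.mp hx1Dstar)
    have hx2notDminus : x2 ∉ Dminus := by
      rintro ⟨D, ⟨hDD, hWnD⟩, hx2D⟩
      exact hWnD ((hx2Bn D hDD).mp hx2D)
    have hx2dcR : x2 ∈ dc R := hx2Dstar.resolve_left hx2notDminus
    obtain ⟨β, hβR, hx2β⟩ := mem_dc.mp hx2dcR
    exact ⟨β, hβR.1.1, hβR.1.2, hWpup _ _ hx2Wp hx2β⟩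
  have hdich : (∀ t, Smin t) ∨ (∀ t, Splus t) := by
    by_cases hall : ∀ t, Smin t
    · exact Or.inl hall
    · obtain ⟨t₀, ht₀⟩ := not_forall.mp hall
      refine Or.inr (fun t => ?_)
      rcases hSco t with hS | hS
      · exact hDstar t t₀ hS ((hSco t₀).resolve_left ht₀)
      · exact hS
  -- common final contradiction
  set tmod : ℕ → Fin (S.p + 1) := fun k => ⟨k % (S.p+1), Nat.mod_lt _ (by omega)⟩ with htmod
  have hfinal : ∀ x : ℕ → List A, (∀ k, NerodeEq S.L (x k) (κ (tmod k))) →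
      MonotoneSeq x → False := by
    intro x hxner hxmono
    have hxpref : ∀ k, x k ∈ Pref S.L :=
      fun k => pref_of_ner (ner_symm (hxner k)) (hκpref (tmod k))
    obtain ⟨N, βs, hβs, hN⟩ := hb x hxpref hxmono
    set idx : Fin (S.p+1) → ℕ := fun t => N * (S.p+1) + t.val with hidx
    have hidxge : ∀ t, N ≤ idx t := by
      intro t
      have h : N ≤ N * (S.p + 1) := Nat.le_mul_of_pos_right N (by omega)
      show N ≤ N * (S.p+1) + t.val
      omega
    have hidxmod : ∀ t, tmod (idx t) = t := by
      intro t
      apply Fin.ext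
      show (N * (S.p+1) + t.val) % (S.p+1) = t.val
      have h : N * (S.p+1) + t.val = t.val + (S.p+1) * N := by ring
      rw [h, Nat.add_mul_mod_self_left]
      exact Nat.mod_eq_of_lt t.isLt
    have hJ : ∀ t : Fin (S.p+1), ∃ j : Fin S.p, NerodeEq S.L (x (idx t)) (βs j) :=
      fun t => hN (idx t) (hidxge t)
    choose J hJspec using hJ
    have hJinj : Function.Injective J := by
      intro t t' hJeq
      by_contra hne
      apply hκpair t t' hne
      have hx1 := hxner (idx t)
      rw [hidxmod t] at hx1
      have hx2 := hxner (idx t')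
      rw [hidxmod t'] at hx2
      have h1 : NerodeEq S.L (κ t) (βs (J t)) := ner_trans (ner_symm hx1) (hJspec t)
      have h2 : NerodeEq S.L (κ t') (βs (J t)) := by
        rw [hJeq]
        exact ner_trans (ner_symm hx2) (hJspec t')
      exact ner_trans h1 (ner_symm h2)
    have := Fintype.card_le_of_injective J hJinj
    simp only [Fintype.card_fin] at this
    omega
  rcases hdich with hall | hall
  · -- all classes accumulate from below : increasing sequence
    have hstep : ∀ (k : ℕ) (xk : {w : List A // w ∈ Wm}), ∃ x' : {w : List A // w ∈ Wm},
        NerodeEq S.L x'.val (κ (tmod k)) ∧ colexLe xk.val x'.val := by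
      rintro k ⟨xk, n, hn⟩
      obtain ⟨x', hner, hB, hWm'⟩ := hall (tmod k) n
      exact ⟨⟨x', hWm'⟩, hner, Or.inl (colexLt_of_not_le (hn x' hB))⟩
    choose nxt hnxt1 hnxt2 using hstep
    obtain ⟨x₀, hx₀ner, hx₀B, hx₀Wm⟩ := hall (tmod 0) 0
    set seq : ℕ → {w : List A // w ∈ Wm} :=
      fun k => Nat.rec ⟨x₀, hx₀Wm⟩ (fun k pr => nxt (k+1) pr) k with hseq
    refine hfinal (fun k => (seq k).val) ?_ (Or.inl ?_)
    · intro k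
      cases k with
      | zero => exact hx₀ner
      | succ k => exact hnxt1 (k+1) (seq k)
    · intro i
      exact hnxt2 (i+1) (seq i)
  · -- all classes accumulate from above : decreasing sequence
    have hstep : ∀ (k : ℕ) (xk : {w : List A // w ∈ Wp}), ∃ x' : {w : List A // w ∈ Wp},
        NerodeEq S.L x'.val (κ (tmod k)) ∧ colexLe x'.val xk.val := by
      rintro k ⟨xk, n, hn⟩
      obtain ⟨x', hner, hB, hWp'⟩ := hall (tmod k) n
      exact ⟨⟨x', hWp'⟩, hner, hn x' hB⟩
    choose nxt hnxt1 hnxt2 using hstep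
    obtain ⟨x₀, hx₀ner, hx₀B, hx₀Wp⟩ := hall (tmod 0) 0
    set seq : ℕ → {w : List A // w ∈ Wp} :=
      fun k => Nat.rec ⟨x₀, hx₀Wp⟩ (fun k pr => nxt (k+1) pr) k with hseq
    refine hfinal (fun k => (seq k).val) ?_ (Or.inr ?_)
    · intro k
      cases k with
      | zero => exact hx₀ner
      | succ k => exact hnxt1 (k+1) (seq k)
    · intro i
      exact hnxt2 (i+1) (seq i)

end CoreSec
end S10


namespace S10
section GenColex
variable {A Q : Type} [LinearOrder A]

lemma isColex_leD (D : DFA' A Q) (hreach : D.Reachable) : IsColexDFA D (DFA'.leD D) := by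
  constructor
  · intro u; exact Or.inl rfl
  · intro u v h1 h2
    rcases h1 with rfl | h1
    · rfl
    rcases h2 with rfl | h2
    · rfl
    obtain ⟨α, hα⟩ := hreach u
    obtain ⟨β, hβ⟩ := hreach v
    exact absurd (h1 α hα β hβ) (colexLt_asymm (h2 β hβ α hα))
  · intro u v w h1 h2
    rcases h1 with rfl | h1
    · exact h2
    rcases h2 with rfl | h2
    · exact Or.inr h1
    refine Or.inr (fun α hα γ hγ => ?_)
    obtain ⟨β, hβ⟩ := hreach v
    exact colexLt_trans (h1 α hα β hβ) (h2 β hβ γ hγ)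
  · intro u v hle hne a ha b hbm
    have hsep := hle.resolve_left hne
    rcases ha with ⟨a', u'', rfl, hdel⟩ | ⟨hustart, rfl⟩
    · rcases hbm with ⟨b', v'', rfl, hdel'⟩ | ⟨hvstart, rfl⟩
      · obtain ⟨α'', hα''⟩ := hreach u''
        obtain ⟨β'', hβ''⟩ := hreach v''
        have h1 : D.deltaStar D.start (α'' ++ [a']) = some u := by
          rw [deltaStar_concat, hα'']; exact hdel
        have h2 : D.deltaStar D.start (β'' ++ [b']) = some v := by
          rw [deltaStar_concat, hβ'']; exact hdel'
        have hlt := hsep _ h1 _ h2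
        rcases concat_lt_concat_iff.mp hlt with h | h
        · exact WithBot.coe_le_coe.mpr (le_of_lt h)
        · exact WithBot.coe_le_coe.mpr (le_of_eq h.1)
      · obtain ⟨α'', hα''⟩ := hreach u''
        have h1 : D.deltaStar D.start (α'' ++ [a']) = some u := by
          rw [deltaStar_concat, hα'']; exact hdel
        have h2 : D.deltaStar D.start [] = some v := by
          show some D.start = some v
          rw [hvstart]
        exact absurd (hsep _ h1 [] h2) (not_colexLt_nil _)
    · exact bot_le
  · intro a u v u' v' hdu hdv hle hne
    by_cases h : u' = v'
    · exact Or.inl h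
    · refine Or.inr (fun α' hα' β' hβ' => ?_)
      have h1 : D.deltaStar D.start (α' ++ [a]) = some u := by
        rw [deltaStar_concat, hα']; exact hdu
      have h2 : D.deltaStar D.start (β' ++ [a]) = some v := by
        rw [deltaStar_concat, hβ']; exact hdv
      exact lt_of_concat_lt_concat ((hle.resolve_left hne) _ h1 _ h2)

end GenColex
end S10


namespace S10
section Construct
variable {A : Type} [LinearOrder A] [Fintype A] (S : Setting A) (n : ℕ)

def nerSet : Setoid (List A) :=
  ⟨NerodeEq S.L, ⟨ner_refl, ner_symm, ner_trans⟩⟩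

def CL := Quotient (nerSet S)

def clsOf (α : List A) : CL S := Quotient.mk (nerSet S) α

lemma clsOf_sound {α β : List A} (h : NerodeEq S.L α β) : clsOf S α = clsOf S β :=
  @Quotient.sound _ (nerSet S) α β h

lemma clsOf_eq_iff {α β : List A} : clsOf S α = clsOf S β ↔ NerodeEq S.L α β :=
  ⟨fun h => @Quotient.exact _ (nerSet S) α β h, clsOf_sound S⟩

def blT (α : List A) : Set (Set (List A)) := {D | D ∈ DSet S n ∧ α ∈ D}

def stP (α : List A) : CL S × Set (Set (List A)) := (clsOf S α, blT S n α)

def SQ : Set (CL S × Set (Set (List A))) := {x | ∃ α, α ∈ Pref S.L ∧ stP S n α = x}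

lemma finite_CL : Finite (CL S) := by
  classical
  have hq := S.fin0
  have hft : Fintype S.Q0 := Fintype.ofFinite _
  refine Finite.of_surjective
    (f := fun s : Option S.Q0 =>
      if h : ∃ α, S.F0 α = s then clsOf S h.choose else clsOf S []) ?_
  intro c
  obtain ⟨α, rfl⟩ := Quotient.exists_rep c
  refine ⟨S.F0 α, ?_⟩
  show (if h : ∃ β, S.F0 β = S.F0 α then clsOf S h.choose else clsOf S []) = _
  rw [dif_pos (⟨α, rfl⟩ : ∃ β, S.F0 β = S.F0 α)]
  exact clsOf_sound S (S.ker_F0 (Exists.choose_spec (⟨α, rfl⟩ : ∃ β, S.F0 β = S.F0 α)))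

lemma stP_of_hval {α β : List A} (h : S.hval n α = S.hval n β) : stP S n α = stP S n β := by
  refine Prod.ext ?_ ?_
  · exact clsOf_sound S (S.ker_F0 (congrArg (fun t : S.Vals n => t.1) h))
  · ext D
    exact and_congr_right (fun hD => hD.2 α β h)

lemma finite_SQ : (SQ S n).Finite := by
  classical
  have hfinV : Finite (S.Vals n) := S.vals_finite n
  have hsub : SQ S n ⊆ Set.range (fun v : S.Vals n =>
      if h : ∃ α, S.hval n α = v then stP S n h.choose else stP S n []) := by
    rintro x ⟨α, hα, rfl⟩
    refine ⟨S.hval n α, ?_⟩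
    show (if h : ∃ β, S.hval n β = S.hval n α then stP S n h.choose else stP S n []) = stP S n α
    rw [dif_pos (⟨α, rfl⟩ : ∃ β, S.hval n β = S.hval n α)]
    exact stP_of_hval S n (Exists.choose_spec (⟨α, rfl⟩ : ∃ β, S.hval n β = S.hval n α))
  exact Set.Finite.subset (Set.finite_range _) hsub

lemma quo_mem_DSet {D : Set (List A)} (hD : D ∈ DSet S n) (a : A) :
    {γ : List A | γ ++ [a] ∈ D} ∈ DSet S n := by
  constructor
  · intro γ' γ hle hγ
    exact hD.1 _ _ (concat_le_concat a hle) hγ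
  · intro α β h
    have h2 : S.hval n (α ++ [a]) = S.hval n (β ++ [a]) := by
      rw [S.hval_concat, S.hval_concat, h]
    exact hD.2 (α ++ [a]) (β ++ [a]) h2

lemma stP_step {α β : List A} (hstp : stP S n α = stP S n β) (a : A) :
    stP S n (α ++ [a]) = stP S n (β ++ [a]) ∧ (α ++ [a] ∈ Pref S.L ↔ β ++ [a] ∈ Pref S.L) := by
  have hner : NerodeEq S.L α β := (clsOf_eq_iff S).mp (congrArg Prod.fst hstp)
  have hbl : blT S n α = blT S n β := congrArg Prod.snd hstp
  constructor
  · refine Prod.ext ?_ ?_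
    · exact clsOf_sound S (ner_append [a] hner)
    · ext D
      show D ∈ DSet S n ∧ α ++ [a] ∈ D ↔ D ∈ DSet S n ∧ β ++ [a] ∈ D
      constructor
      · rintro ⟨hDD, hmem⟩
        refine ⟨hDD, ?_⟩
        have h1 : {γ : List A | γ ++ [a] ∈ D} ∈ blT S n α := ⟨quo_mem_DSet S n hDD a, hmem⟩
        rw [hbl] at h1
        exact h1.2
      · rintro ⟨hDD, hmem⟩
        refine ⟨hDD, ?_⟩
        have h1 : {γ : List A | γ ++ [a] ∈ D} ∈ blT S n β := ⟨quo_mem_DSet S n hDD a, hmem⟩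
        rw [← hbl] at h1
        exact h1.2
  · constructor
    · rintro ⟨γ, hγ⟩
      refine ⟨γ, ?_⟩
      rw [List.append_assoc] at hγ ⊢
      exact (hner ([a] ++ γ)).mp hγ
    · rintro ⟨γ, hγ⟩
      refine ⟨γ, ?_⟩
      rw [List.append_assoc] at hγ ⊢
      exact (hner ([a] ++ γ)).mpr hγ

lemma construct (hLne : S.L.Nonempty) (hfine : ∀ w, ¬ Bad S n w) :
    ∃ (Q : Type) (_ : Fintype Q) (D : DFA' A Q) (le : Q → Q → Prop) (f : Fin S.p → Set Q),
      D.Reachable ∧ D.Useful ∧ D.lang = S.L ∧ IsColexDFA D le ∧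
      IsChainPartition le S.p f := by
  classical
  have hfinV : Finite (S.Vals n) := S.vals_finite n
  have hfinCL : Finite (CL S) := finite_CL S
  have hSQfin : (SQ S n).Finite := finite_SQ S n
  have hfty : Fintype ↥(SQ S n) := hSQfin.fintype
  have hεP : [] ∈ Pref S.L := by
    obtain ⟨w, hw⟩ := hLne
    exact ⟨w, by simpa using hw⟩
  set D : DFA' A ↥(SQ S n) :=
    { start := ⟨stP S n [], ⟨[], hεP, rfl⟩⟩,
      delta := fun q a =>
        if h : ∃ α, α ∈ Pref S.L ∧ stP S n α = q.val ∧ α ++ [a] ∈ Pref S.L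
        then some ⟨stP S n (h.choose ++ [a]), ⟨h.choose ++ [a], h.choose_spec.2.2, rfl⟩⟩
        else none,
      accept := {q | ∃ α, α ∈ S.L ∧ stP S n α = q.val} } with hDdef
  have hdelta : ∀ (q : ↥(SQ S n)) (α : List A) (a : A), α ∈ Pref S.L → stP S n α = q.val →
      ∀ (hαa : α ++ [a] ∈ Pref S.L),
      D.delta q a = some ⟨stP S n (α ++ [a]), ⟨α ++ [a], hαa, rfl⟩⟩ := by
    intro q α a hα hst hαa
    have hex : ∃ β, β ∈ Pref S.L ∧ stP S n β = q.val ∧ β ++ [a] ∈ Pref S.L := ⟨α, hα, hst, hαa⟩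
    have hdef : D.delta q a =
        (if h : ∃ β, β ∈ Pref S.L ∧ stP S n β = q.val ∧ β ++ [a] ∈ Pref S.L
        then some ⟨stP S n (h.choose ++ [a]), ⟨h.choose ++ [a], h.choose_spec.2.2, rfl⟩⟩
        else none) := by rw [hDdef]
    rw [hdef, dif_pos hex]
    congr 1
    apply Subtype.ext
    show stP S n (hex.choose ++ [a]) = stP S n (α ++ [a])
    exact (stP_step S n (hex.choose_spec.2.1.trans hst.symm) a).1
  have hpref_drop : ∀ (α : List A) (a : A), α ++ [a] ∈ Pref S.L → α ∈ Pref S.L := by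
    rintro α a ⟨γ, hγ⟩
    exact ⟨[a] ++ γ, by rwa [← List.append_assoc]⟩
  have hrunA : ∀ (α : List A) (hα : α ∈ Pref S.L),
      D.deltaStar D.start α = some ⟨stP S n α, ⟨α, hα, rfl⟩⟩ := by
    intro α
    induction α using List.reverseRecOn with
    | nil => intro hα; exact congrArg some (Subtype.ext rfl)
    | append_singleton α a ih =>
      intro hαa
      have hα : α ∈ Pref S.L := hpref_drop α a hαa
      rw [deltaStar_concat, ih hα]
      show D.delta _ a = _
      rw [hdelta _ α a hα rfl hαa]
  have hrunB : ∀ (α : List A) (q : ↥(SQ S n)), D.deltaStar D.start α = some q →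
      α ∈ Pref S.L ∧ q.val = stP S n α := by
    intro α
    induction α using List.reverseRecOn with
    | nil =>
      intro q h
      have : D.start = q := Option.some_injective _ h
      exact ⟨hεP, by rw [← this]⟩
    | append_singleton α a ih =>
      intro q h
      rw [deltaStar_concat] at h
      rcases hopt : D.deltaStar D.start α with _ | q₁
      · rw [hopt] at h; exact absurd h (by simp)
      · rw [hopt] at h
        have hdel : D.delta q₁ a = some q := h
        obtain ⟨hαP, hq₁⟩ := ih q₁ hopt
        by_cases hex : ∃ β, β ∈ Pref S.L ∧ stP S n β = q₁.val ∧ β ++ [a] ∈ Pref S.L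
        · have hstep := stP_step S n (hex.choose_spec.2.1.trans hq₁) a
          have hdef : D.delta q₁ a =
              some ⟨stP S n (hex.choose ++ [a]), ⟨hex.choose ++ [a], hex.choose_spec.2.2, rfl⟩⟩ := by
            have hh : D.delta q₁ a =
                (if h : ∃ β, β ∈ Pref S.L ∧ stP S n β = q₁.val ∧ β ++ [a] ∈ Pref S.L
                then some ⟨stP S n (h.choose ++ [a]), ⟨h.choose ++ [a], h.choose_spec.2.2, rfl⟩⟩
                else none) := by rw [hDdef]
            rw [hh, dif_pos hex]
          rw [hdef] at hdel
          have hqval : q.val = stP S n (hex.choose ++ [a]) :=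
            congrArg Subtype.val (Option.some_injective _ hdel).symm
          exact ⟨hstep.2.mp hex.choose_spec.2.2, hqval.trans hstep.1⟩
        · have hdef : D.delta q₁ a = none := by
            have hh : D.delta q₁ a =
                (if h : ∃ β, β ∈ Pref S.L ∧ stP S n β = q₁.val ∧ β ++ [a] ∈ Pref S.L
                then some ⟨stP S n (h.choose ++ [a]), ⟨h.choose ++ [a], h.choose_spec.2.2, rfl⟩⟩
                else none) := by rw [hDdef]
            rw [hh, dif_neg hex]
          rw [hdef] at hdel
          exact absurd hdel (by simp)
  have hlang : D.lang = S.L := by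
    ext α
    constructor
    · rintro ⟨q, hqacc, hrun⟩
      obtain ⟨hαP, hqval⟩ := hrunB α q hrun
      obtain ⟨β, hβL, hβst⟩ := hqacc
      have hner : NerodeEq S.L β α :=
        (clsOf_eq_iff S).mp (congrArg Prod.fst (hβst.trans hqval))
      exact mem_L_of_ner hner hβL
    · intro hαL
      have hαP : α ∈ Pref S.L := ⟨[], by simpa using hαL⟩
      exact ⟨_, ⟨α, hαL, rfl⟩, hrunA α hαP⟩
  have hreach : D.Reachable := by
    rintro ⟨x, hx⟩
    obtain ⟨α, hαP, rfl⟩ := hx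
    exact ⟨α, hrunA α hαP⟩
  have hrunC : ∀ (γ α : List A) (hα : α ∈ Pref S.L) (hw : stP S n α ∈ SQ S n)
      (hαγ : α ++ γ ∈ Pref S.L),
      D.deltaStar ⟨stP S n α, hw⟩ γ = some ⟨stP S n (α ++ γ), ⟨α ++ γ, hαγ, rfl⟩⟩ := by
    intro γ
    induction γ with
    | nil =>
      intro α hα hw hαγ
      show some _ = some _
      congr 1
      apply Subtype.ext
      show stP S n α = stP S n (α ++ [])
      rw [List.append_nil]
    | cons c γ' ih =>
      intro α hα hw hαγ
      have hαc : α ++ [c] ∈ Pref S.L := by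
        obtain ⟨δ, hδ⟩ := hαγ
        refine ⟨γ' ++ δ, ?_⟩
        rw [List.append_assoc] at hδ ⊢
        simpa using hδ
      show (D.delta _ c).bind _ = _
      rw [hdelta _ α c hα rfl hαc]
      show D.deltaStar ⟨stP S n (α ++ [c]), _⟩ γ' = _
      have hassoc : (α ++ [c]) ++ γ' = α ++ (c :: γ') := by simp
      rw [ih (α ++ [c]) hαc ⟨α ++ [c], hαc, rfl⟩ (by rw [hassoc]; exact hαγ)]
      congr 1
      apply Subtype.ext
      show stP S n ((α ++ [c]) ++ γ') = stP S n (α ++ (c :: γ'))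
      rw [hassoc]
  have huseful : D.Useful := by
    rintro ⟨x, hx⟩
    obtain ⟨α, hαP, rfl⟩ := hx
    obtain ⟨γ, hγL⟩ := hαP
    have hαγP : α ++ γ ∈ Pref S.L := ⟨[], by simpa using hγL⟩
    refine ⟨γ, ⟨stP S n (α ++ γ), ⟨α ++ γ, hαγP, rfl⟩⟩, ⟨α ++ γ, hγL, rfl⟩, ?_⟩
    exact hrunC γ α ⟨γ, hγL⟩ ⟨α, ⟨γ, hγL⟩, rfl⟩ hαγP
  have hcolex : IsColexDFA D (DFA'.leD D) := isColex_leD D hreach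
  -- the chain partition
  set Kb : Set (Set (List A)) → Set (CL S) := fun b => {c | (c, b) ∈ SQ S n} with hKb
  have hKfin : ∀ b, Fintype ↥(Kb b) := fun b => Fintype.ofFinite _
  have hKcard : ∀ b, @Fintype.card ↥(Kb b) (hKfin b) ≤ S.p := by
    intro b
    by_contra hgt
    push_neg at hgt
    have hne : Nonempty (Fin (S.p + 1) ↪ ↥(Kb b)) := by
      refine @Function.Embedding.nonempty_of_card_le _ _ _ (hKfin b) ?_
      simpa using hgt
    obtain ⟨e⟩ := hne
    have hrep : ∀ t : Fin (S.p + 1), ∃ α, α ∈ Pref S.L ∧ stP S n α = ((e t).val, b) :=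
      fun t => (e t).property
    choose u hu1 hu2 using hrep
    have hblT : ∀ t, blT S n (u t) = b := fun t => congrArg Prod.snd (hu2 t)
    have hcls : ∀ t, clsOf S (u t) = (e t).val := fun t => congrArg Prod.fst (hu2 t)
    apply hfine (u 0)
    refine ⟨u, fun t => ⟨?_, hu1 t⟩, ?_⟩
    · intro Dx hDx
      constructor
      · intro hm
        have h1 : Dx ∈ blT S n (u t) := ⟨hDx, hm⟩
        rw [hblT t, ← hblT 0] at h1
        exact h1.2
      · intro hm
        have h1 : Dx ∈ blT S n (u 0) := ⟨hDx, hm⟩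
        rw [hblT 0, ← hblT t] at h1
        exact h1.2
    · intro t t' hne hner
      apply hne
      apply e.injective
      apply Subtype.ext
      rw [← hcls t, ← hcls t']
      exact Quotient.sound hner
  have hemb : ∀ b, Nonempty (↥(Kb b) ↪ Fin S.p) := by
    intro b
    refine @Function.Embedding.nonempty_of_card_le _ _ (hKfin b) _ ?_
    simpa using hKcard b
  have hι : ∀ b, ↥(Kb b) ↪ Fin S.p := fun b => (hemb b).some
  have hmemK : ∀ q : ↥(SQ S n), q.val.1 ∈ Kb q.val.2 := by
    intro q
    show (q.val.1, q.val.2) ∈ SQ S n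
    rw [Prod.mk.eta]
    exact q.property
  set color : ↥(SQ S n) → Fin S.p := fun q => hι (q.val.2) ⟨q.val.1, hmemK q⟩ with hcolor
  refine ⟨↥(SQ S n), hfty, D, DFA'.leD D, fun j => {q | color q = j},
    hreach, huseful, hlang, hcolex, ?_, ?_⟩
  · intro q
    exact ⟨color q, rfl, fun j hj => hj.symm⟩
  · intro j u hu v hv
    by_cases huv : u = v
    · exact Or.inl (Or.inl huv)
    · have hIq : ∀ (q : ↥(SQ S n)) γ, γ ∈ D.Iq q → γ ∈ Pref S.L ∧ q.val.2 = blT S n γ := by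
        intro q γ hγ
        obtain ⟨h1, h2⟩ := hrunB γ q hγ
        have h3 : q.val.2 = (stP S n γ).2 := congrArg Prod.snd h2
        exact ⟨h1, h3⟩
      by_cases hb2 : u.val.2 = v.val.2
      · exfalso
        apply huv
        rcases u with ⟨⟨c1, b1⟩, hu1⟩
        rcases v with ⟨⟨c2, b2⟩, hv1⟩
        obtain rfl : b1 = b2 := hb2
        have hcc : color ⟨(c1, b1), hu1⟩ = color ⟨(c2, b1), hv1⟩ := by
          have h1 : color ⟨(c1, b1), hu1⟩ = j := hu
          have h2 : color ⟨(c2, b1), hv1⟩ = j := hv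
          rw [h1, h2]
        have h2 : (⟨c1, hmemK ⟨(c1, b1), hu1⟩⟩ : ↥(Kb b1)) = ⟨c2, hmemK ⟨(c2, b1), hv1⟩⟩ :=
          (hι b1).injective hcc
        have h3 : c1 = c2 := congrArg Subtype.val h2
        apply Subtype.ext
        show (c1, b1) = (c2, b1)
        rw [h3]
      · have hsep : ∃ Dx, (Dx ∈ u.val.2 ∧ Dx ∉ v.val.2) ∨ (Dx ∈ v.val.2 ∧ Dx ∉ u.val.2) := by
          by_contra hC
          push_neg at hC
          apply hb2
          ext Dx
          constructor
          · intro h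
            by_contra h2
            exact h2 ((hC Dx).1 h)
          · intro h
            by_contra h2
            exact h2 ((hC Dx).2 h)
        obtain ⟨Dx, hcase⟩ := hsep
        rcases hcase with ⟨hDu, hDv⟩ | ⟨hDv, hDu⟩
        · refine Or.inl (Or.inr (fun α hα β hβ => ?_))
          obtain ⟨hαP, h1⟩ := hIq u α hα
          obtain ⟨hβP, h2⟩ := hIq v β hβ
          rw [h1] at hDu
          have hDxDSet : Dx ∈ DSet S n := hDu.1
          have hαDx : α ∈ Dx := hDu.2
          have hβDx : β ∉ Dx := fun hmem => hDv (by
            rw [h2]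
            exact (⟨hDxDSet, hmem⟩ : Dx ∈ DSet S n ∧ β ∈ Dx))
          exact colexLt_of_not_le (fun hle => hβDx (hDxDSet.1 β α hle hαDx))
        · refine Or.inr (Or.inr (fun β hβ α hα => ?_))
          obtain ⟨hαP, h1⟩ := hIq u α hα
          obtain ⟨hβP, h2⟩ := hIq v β hβ
          rw [h2] at hDv
          have hDxDSet : Dx ∈ DSet S n := hDv.1
          have hβDx : β ∈ Dx := hDv.2
          have hαDx : α ∉ Dx := fun hmem => hDu (by
            rw [h1]
            exact (⟨hDxDSet, hmem⟩ : Dx ∈ DSet S n ∧ α ∈ Dx))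
          exact colexLt_of_not_le (fun hle => hαDx (hDxDSet.1 α β hle hβDx))

end Construct
end S10

/-- `width^D(L) ≤ p` iff every monotone sequence of words of
`Pref L` is eventually included in at most `p` Myhill–Nerode classes of `L`. -/
theorem stmt_10 {A : Type} [LinearOrder A] [Fintype A]
    (L : Set (List A)) (hLne : L.Nonempty)
    (hreg : ∃ (Q : Type) (_ : Fintype Q) (D : DFA' A Q), D.lang = L)
    (p : ℕ) (hp : 1 ≤ p) :
    (∃ (Q : Type) (_ : Fintype Q) (D : DFA' A Q) (le : Q → Q → Prop)
        (p' : ℕ) (f : Fin p' → Set Q),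
        D.Reachable ∧ D.Useful ∧ D.lang = L ∧ IsColexDFA D le ∧
        IsChainPartition le p' f ∧ p' ≤ p) ↔
      ∀ α : ℕ → List A, (∀ i, α i ∈ Pref L) → MonotoneSeq α →
        ∃ (n : ℕ) (β : Fin p → List A), (∀ j, β j ∈ Pref L) ∧
          ∀ i, n ≤ i → ∃ j, NerodeEq L (α i) (β j) := by
  classical
  constructor
  · rintro ⟨Q, hQ, D, le, p', f, hreach, huse, hlang, hco, hcp, hp'p⟩
    intro α hpref hmono
    have hpref' : ∀ i, α i ∈ Pref D.lang := by rw [hlang]; exact hpref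
    have h := S10.forward_dir D le p' p f hco hcp hp'p α hpref' hmono
    rw [hlang] at h
    exact h
  · intro hb
    obtain ⟨Q0, hQ0, D0, hlang0⟩ := hreg
    haveI : Nonempty (S10.FinRC A) := ⟨⟨1, fun _ _ => 0, 0⟩⟩
    obtain ⟨enum, hsurj⟩ := exists_surjective_nat (S10.FinRC A)
    set S : S10.Setting A := ⟨L, Q0, Finite.of_fintype Q0, D0, hlang0, p, enum, hsurj⟩ with hS
    obtain ⟨n, hfine⟩ := S10.fine_level_exists S hb
    obtain ⟨Q, hQ, D, le, f, hre, hus, hla, hco, hcp⟩ := S10.construct S n hLne hfine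
    exact ⟨Q, hQ, D, le, p, f, hre, hus, hla, hco, hcp, le_refl p⟩
end

section
/- Let D be a deterministic finite automaton over a finite linearly ordered alphabet Σ with finite state set Q of cardinality n, and let h ≥ 1. Suppose s_1, q_1, …, s_h, q_h ∈ Q and there are words ν_1 ⪯ ν_2 ⪯ … ⪯ ν_h (co-lex order) with δ(s_i, ν_i) = q_i for every i = 1, …, h. Then there exist words ν'_1 ⪯ ν'_2 ⪯ … ⪯ ν'_h such that for all i, j ∈ {1, …, h}: δ(s_i, ν'_i) = q_i; ν_i = ν_j iff ν'_i = ν'_j; ν_i is a suffix of ν_j iff ν'_i is a suffix of ν'_j; and |ν'_i| ≤ (h − 2) + Σ_{t=1}^h n^t (truncated natural subtraction in h − 2). -/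
section Helpers
set_option linter.unusedSectionVars false
open List

variable {A : Type} [LinearOrder A]

lemma lex_cons_cons {a b : A} {l₁ l₂ : List A} :
    List.Lex (· < ·) (a :: l₁) (b :: l₂) ↔ a < b ∨ (a = b ∧ List.Lex (· < ·) l₁ l₂) := by
  constructor
  · intro h
    cases h with
    | rel h => exact Or.inl h
    | cons h => exact Or.inr ⟨rfl, h⟩
  · rintro (h | ⟨rfl, h⟩)
    · exact List.Lex.rel h
    · exact List.Lex.cons h

lemma lex_append_iff (w x y : List A) :
    List.Lex (· < ·) (w ++ x) (w ++ y) ↔ List.Lex (· < ·) x y := by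
  induction w with
  | nil => rfl
  | cons a w ih => simp [lex_cons_cons, ih, -List.lex_lt]

lemma lex_ne_heads : ∀ {u w x y : List A}, u.length = w.length → u ≠ w →
    (List.Lex (· < ·) (u ++ x) (w ++ y) ↔ List.Lex (· < ·) u w)
  | [], [], _, _, _, hne => absurd rfl hne
  | a :: u, b :: w, x, y, hlen, hne => by
    rcases eq_or_ne a b with rfl | hab
    · have : u ≠ w := fun h => hne (by rw [h])
      simp [lex_cons_cons, lex_ne_heads (by simpa using hlen) this, -List.lex_lt]
    · simp [lex_cons_cons, hab, -List.lex_lt]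

lemma lex_short_right : ∀ {a w : List A} (x : List A), a.length < w.length →
    (List.Lex (· < ·) a (w ++ x) ↔ List.Lex (· < ·) a w)
  | [], b :: w, x, _ => by simp [List.Lex.nil]
  | a :: u, b :: w, x, h => by
    simp [lex_cons_cons, lex_short_right x (by simpa using h), -List.lex_lt]

lemma lex_short_left : ∀ {a w : List A} (x : List A), a.length < w.length →
    (List.Lex (· < ·) (w ++ x) a ↔ List.Lex (· < ·) w a)
  | [], b :: w, x, _ => by
    constructor <;> intro h <;> exact absurd h (by intro h'; cases h')
  | a :: u, b :: w, x, h => by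
    simp [lex_cons_cons, lex_short_left x (by simpa using h), -List.lex_lt]

lemma prefix_cancel : ∀ (l a b : List A), (l ++ a <+: l ++ b) ↔ a <+: b
  | [], a, b => Iff.rfl
  | c :: l, a, b => by simp [List.cons_prefix_iff, prefix_cancel l a b]

lemma suffix_cancel (u a b : List A) : (a ++ u <:+ b ++ u) ↔ a <:+ b := by
  rw [← List.reverse_prefix, ← List.reverse_prefix (l₁ := a)]
  simp [prefix_cancel]


variable {A : Type}

/-- suffix of length t -/
def sfx (l : List A) (t : ℕ) : List A := l.drop (l.length - t)

lemma sfx_length {l : List A} {t : ℕ} (h : t ≤ l.length) : (sfx l t).length = t := by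
  simp [sfx]; omega

lemma sfx_suffix (l : List A) (t : ℕ) : sfx l t <:+ l := List.drop_suffix _ _

lemma sfx_sfx {l : List A} {t₁ t₂ : ℕ} (h1 : t₁ ≤ t₂) (h2 : t₂ ≤ l.length) :
    sfx l t₁ = (sfx l t₂).drop (t₂ - t₁) := by
  simp [sfx, List.drop_drop]
  congr 1
  omega

lemma sfx_append (P l : List A) : sfx (P ++ l) l.length = l := by
  simp [sfx]

lemma eq_take_append_sfx {l : List A} {t : ℕ} (h : t ≤ l.length) :
    l = l.take (l.length - t) ++ sfx l t := (List.take_append_drop _ _).symm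

lemma suffix_iff_sfx {l₁ l₂ : List A} : l₁ <:+ l₂ ↔ l₁.length ≤ l₂.length ∧ sfx l₂ l₁.length = l₁ := by
  constructor
  · rintro ⟨t, rfl⟩
    refine ⟨by simp, ?_⟩
    simp [sfx]
  · rintro ⟨h1, h2⟩
    exact h2 ▸ sfx_suffix _ _

lemma sfx_of_suffix {l₁ l₂ : List A} {t : ℕ} (h : l₁ <:+ l₂) (ht : t ≤ l₁.length) :
    sfx l₁ t = sfx l₂ t := by
  obtain ⟨u, rfl⟩ := h
  simp only [sfx, List.length_append]
  rw [show u.length + l₁.length - t = u.length + (l₁.length - t) by omega,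
    List.drop_length_add_append]

namespace DFA'
variable {Q : Type}

lemma deltaStar_append_s12 (D : DFA' A Q) (p : Q) (x y : List A) :
    D.deltaStar p (x ++ y) = (D.deltaStar p x).bind fun r => D.deltaStar r y := by
  induction x generalizing p with
  | nil => simp [deltaStar]
  | cons a x ih =>
    simp only [List.cons_append, deltaStar]
    cases D.delta p a with
    | none => simp
    | some r => simp [ih]

end DFA'

lemma suffix_of_suffix_of_length_le {A : Type} {α S β : List A}
    (h1 : α <:+ β) (h2 : S <:+ β) (h3 : α.length ≤ S.length) : α <:+ S := by
  rw [suffix_iff_sfx]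
  refine ⟨h3, ?_⟩
  rw [sfx_of_suffix h2 (le_trans h3 (by rfl)), ← sfx_of_suffix h1 (le_refl _)]
  · simp [sfx]
  

section Key
variable {A : Type} [LinearOrder A] {t : ℕ} {S α β β' : List A}

lemma keyA (hβ : t ≤ β.length ∧ sfx β t = S) (hα : ¬(t ≤ α.length ∧ sfx α t = S)) :
    ¬ β <:+ α := by
  intro hsuf
  exact hα ⟨le_trans hβ.1 hsuf.length_le, ((sfx_of_suffix hsuf hβ.1).symm).trans hβ.2⟩

lemma key_ne (hβ : t ≤ β.length ∧ sfx β t = S) (hα : ¬(t ≤ α.length ∧ sfx α t = S)) :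
    α ≠ β := by
  rintro rfl; exact hα hβ

lemma keyB (hS : S.length = t) (hβ : t ≤ β.length ∧ sfx β t = S)
    (hβ' : t ≤ β'.length ∧ sfx β' t = S) (hα : ¬(t ≤ α.length ∧ sfx α t = S)) :
    α <:+ β → α <:+ β' := by
  intro hs
  have hlt : α.length < t := by
    by_contra hcon
    push_neg at hcon
    exact hα ⟨hcon, (sfx_of_suffix hs hcon).trans hβ.2⟩
  have hSβ : S <:+ β := hβ.2 ▸ sfx_suffix _ _
  have hSβ' : S <:+ β' := hβ'.2 ▸ sfx_suffix _ _
  exact (suffix_of_suffix_of_length_le hs hSβ (by omega)).trans hSβ'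

lemma keyC (hS : S.length = t) (hβ : t ≤ β.length ∧ sfx β t = S)
    (hβ' : t ≤ β'.length ∧ sfx β' t = S) (hα : ¬(t ≤ α.length ∧ sfx α t = S)) :
    colexLt α β → colexLt α β' := by
  have hd : β = β.take (β.length - t) ++ S := by
    conv_lhs => rw [eq_take_append_sfx hβ.1]
    rw [hβ.2]
  have hd' : β' = β'.take (β'.length - t) ++ S := by
    conv_lhs => rw [eq_take_append_sfx hβ'.1]
    rw [hβ'.2]
  unfold colexLt
  intro hlex
  rw [hd, List.reverse_append] at hlex
  rw [hd', List.reverse_append]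
  by_cases hc : t ≤ α.length
  · have hne : sfx α t ≠ S := fun he => hα ⟨hc, he⟩
    have hdα : α = α.take (α.length - t) ++ sfx α t := eq_take_append_sfx hc
    rw [hdα, List.reverse_append] at hlex ⊢
    have hlen : (sfx α t).reverse.length = S.reverse.length := by
      simp [sfx_length hc, hS]
    have hne' : (sfx α t).reverse ≠ S.reverse := fun he => hne (by
      simpa using congrArg List.reverse he)
    rw [lex_ne_heads hlen hne'] at hlex
    rw [lex_ne_heads hlen hne']
    exact hlex
  · push_neg at hc
    have h1 : α.reverse.length < S.reverse.length := by simp [hS]; omega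
    rw [lex_short_right _ h1] at hlex
    rw [lex_short_right _ h1]
    exact hlex

lemma keyD (hS : S.length = t) (hβ : t ≤ β.length ∧ sfx β t = S)
    (hβ' : t ≤ β'.length ∧ sfx β' t = S) (hα : ¬(t ≤ α.length ∧ sfx α t = S)) :
    colexLt β α → colexLt β' α := by
  have hd : β = β.take (β.length - t) ++ S := by
    conv_lhs => rw [eq_take_append_sfx hβ.1]
    rw [hβ.2]
  have hd' : β' = β'.take (β'.length - t) ++ S := by
    conv_lhs => rw [eq_take_append_sfx hβ'.1]
    rw [hβ'.2]
  unfold colexLt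
  intro hlex
  rw [hd, List.reverse_append] at hlex
  rw [hd', List.reverse_append]
  by_cases hc : t ≤ α.length
  · have hne : sfx α t ≠ S := fun he => hα ⟨hc, he⟩
    have hdα : α = α.take (α.length - t) ++ sfx α t := eq_take_append_sfx hc
    rw [hdα, List.reverse_append] at hlex ⊢
    have hlen : S.reverse.length = (sfx α t).reverse.length := by
      simp [sfx_length hc, hS]
    have hne' : S.reverse ≠ (sfx α t).reverse := fun he => hne (by
      simpa using (congrArg List.reverse he).symm)
    rw [lex_ne_heads hlen hne'] at hlex
    rw [lex_ne_heads hlen hne']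
    exact hlex
  · push_neg at hc
    have h1 : α.reverse.length < S.reverse.length := by simp [hS]; omega
    rw [lex_short_left _ h1] at hlex
    rw [lex_short_left _ h1]
    exact hlex

end Key

lemma step_lemma {A Q : Type} [LinearOrder A] [Fintype Q] {h : ℕ}
    (D : DFA' A Q) (s q : Fin h → Q) (ν : Fin h → List A)
    (hrun : ∀ i, D.deltaStar (s i) (ν i) = some (q i))
    (i₀ : Fin h)
    (hlong : ∑ t ∈ Finset.Icc 1 h, (Fintype.card Q) ^ t ≤ (ν i₀).length) :
    ∃ ν'' : Fin h → List A,
      (∀ i, D.deltaStar (s i) (ν'' i) = some (q i)) ∧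
      (∀ i j, ν i = ν j ↔ ν'' i = ν'' j) ∧
      (∀ i j, colexLt (ν i) (ν j) ↔ colexLt (ν'' i) (ν'' j)) ∧
      (∀ i j, ν i <:+ ν j ↔ ν'' i <:+ ν'' j) ∧
      (∑ i, (ν'' i).length < ∑ i, (ν i).length) := by
  classical
  set n := Fintype.card Q with hn
  set L := (ν i₀).length with hL
  set Af : ℕ → Finset (Fin h) := fun t =>
    Finset.univ.filter (fun j => t ≤ (ν j).length ∧ sfx (ν j) t = sfx (ν i₀) t) with hAf
  have mem_Af : ∀ t j, j ∈ Af t ↔ (t ≤ (ν j).length ∧ sfx (ν j) t = sfx (ν i₀) t) := by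
    intro t j; simp [hAf]
  have hi₀mem : ∀ t, t ≤ L → i₀ ∈ Af t := fun t ht => (mem_Af t i₀).2 ⟨ht, rfl⟩
  have hanti : ∀ t₁ t₂, t₁ ≤ t₂ → t₂ ≤ L → Af t₂ ⊆ Af t₁ := by
    intro t₁ t₂ h12 h2L j hj
    rw [mem_Af] at hj ⊢
    refine ⟨le_trans h12 hj.1, ?_⟩
    rw [sfx_sfx h12 hj.1, sfx_sfx h12 h2L, hj.2]
  have hdef : ∀ (j : Fin h) (k : ℕ), ∃ r, D.deltaStar (s j) ((ν j).take k) = some r ∧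
      D.deltaStar r ((ν j).drop k) = some (q j) := by
    intro j k
    have hrj := hrun j
    rw [← List.take_append_drop k (ν j), D.deltaStar_append_s12] at hrj
    rcases Option.bind_eq_some_iff.1 hrj with ⟨r, hr1, hr2⟩
    exact ⟨r, hr1, hr2⟩
  set g : ℕ → Fin h → Option Q := fun t j =>
    if j ∈ Af t then D.deltaStar (s j) ((ν j).take ((ν j).length - t)) else none with hg
  have gsome : ∀ t (j : Fin h), j ∈ Af t → ∃ r, g t j = some r := by
    intro t j hj
    rcases hdef j ((ν j).length - t) with ⟨r, hr, _⟩
    exact ⟨r, by simp [hg, hj, hr]⟩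
  have gmem : ∀ t (j : Fin h), (g t j).isSome ↔ j ∈ Af t := by
    intro t j
    constructor
    · intro hs
      by_contra hc
      simp [hg, hc] at hs
    · intro hj; rcases gsome t j hj with ⟨r, hr⟩; simp [hr]
  -- pigeonhole
  have hninj : ¬ Set.InjOn g (Finset.range (L + 1)) := by
    intro hinj
    have fiber : ∀ k ∈ Finset.Icc 1 h,
        ((Finset.range (L + 1)).filter (fun t => (Af t).card = k)).card ≤ n ^ k := by
      intro k hk
      set F := (Finset.range (L + 1)).filter (fun t => (Af t).card = k) with hF
      rcases F.eq_empty_or_nonempty with he | hne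
      · simp [he]
      set t₀ := F.min' hne with ht₀
      have ht₀F : t₀ ∈ F := F.min'_mem hne
      have hA₀card : (Af t₀).card = k := (Finset.mem_filter.1 ht₀F).2
      have hsame : ∀ t ∈ F, Af t = Af t₀ := by
        intro t htF
        have h1 : t₀ ≤ t := F.min'_le t htF
        have h2 : t ≤ L := by
          have := (Finset.mem_filter.1 htF).1
          have := Finset.mem_range.1 this
          omega
        exact Finset.eq_of_subset_of_card_le (hanti t₀ t h1 h2)
          (by rw [hA₀card, (Finset.mem_filter.1 htF).2])
      have hinjF : Set.InjOn
          (fun t => fun j : {x // x ∈ Af t₀} => (g t j.1).getD (q i₀)) F := by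
        intro t1 ht1 t2 ht2 heq
        have hm1 : (t1 : ℕ) ∈ (Finset.range (L + 1) : Set ℕ) := by
          have := (Finset.mem_filter.1 ht1).1; exact_mod_cast this
        have hm2 : (t2 : ℕ) ∈ (Finset.range (L + 1) : Set ℕ) := by
          have := (Finset.mem_filter.1 ht2).1; exact_mod_cast this
        apply hinj hm1 hm2
        funext j
        by_cases hj : j ∈ Af t₀
        · have hj1 : j ∈ Af t1 := by rw [hsame t1 ht1]; exact hj
          have hj2 : j ∈ Af t2 := by rw [hsame t2 ht2]; exact hj
          rcases gsome t1 j hj1 with ⟨r1, hr1⟩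
          rcases gsome t2 j hj2 with ⟨r2, hr2⟩
          have hc := congrFun heq ⟨j, hj⟩
          simp only [hr1, hr2, Option.getD_some] at hc
          rw [hr1, hr2, hc]
        · have hj1 : j ∉ Af t1 := by rw [hsame t1 ht1]; exact hj
          have hj2 : j ∉ Af t2 := by rw [hsame t2 ht2]; exact hj
          simp [hg, hj1, hj2]
      have hFcard : F.card ≤ Fintype.card ({x // x ∈ Af t₀} → Q) := by
        have := Finset.card_le_card_of_injOn
          (fun t => fun j : {x // x ∈ Af t₀} => (g t j.1).getD (q i₀))
          (fun x _ => Finset.mem_univ _) hinjF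
        simpa using this
      have : Fintype.card ({x // x ∈ Af t₀} → Q) = n ^ k := by
        rw [Fintype.card_fun, Fintype.card_coe, hA₀card]
      omega
    have hcount : L + 1 ≤ ∑ k ∈ Finset.Icc 1 h, n ^ k := by
      have hmap : ∀ t ∈ Finset.range (L + 1), (Af t).card ∈ Finset.Icc 1 h := by
        intro t ht
        rw [Finset.mem_Icc]
        have hmt := Finset.mem_range.1 ht
        constructor
        · exact Finset.card_pos.2 ⟨i₀, hi₀mem t (by omega)⟩
        · simpa using Finset.card_le_univ (Af t)
      calc L + 1 = (Finset.range (L + 1)).card := by simp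
        _ = ∑ k ∈ Finset.Icc 1 h,
            ((Finset.range (L + 1)).filter (fun t => (Af t).card = k)).card :=
            Finset.card_eq_sum_card_fiberwise hmap
        _ ≤ ∑ k ∈ Finset.Icc 1 h, n ^ k := Finset.sum_le_sum fiber
    have := le_trans hcount hlong
    omega
  rw [Set.InjOn] at hninj
  push_neg at hninj
  obtain ⟨t1, t2, h12, h2L, hgeq⟩ : ∃ t1 t2 : ℕ, t1 < t2 ∧ t2 ≤ L ∧ g t1 = g t2 := by
    obtain ⟨a, ha, b, hb, hgab, hne⟩ := hninj
    have ha' : a ≤ L := by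
      have := Finset.mem_range.1 (by exact_mod_cast ha); omega
    have hb' : b ≤ L := by
      have := Finset.mem_range.1 (by exact_mod_cast hb); omega
    rcases hne.lt_or_gt with hlt | hlt
    · exact ⟨a, b, hlt, hb', hgab⟩
    · exact ⟨b, a, hlt, ha', hgab.symm⟩
  have hAA : Af t1 = Af t2 := by
    ext j
    rw [← gmem, ← gmem, hgeq]
  have ht1L : t1 ≤ L := by omega
  set S := sfx (ν i₀) t1 with hS
  set C := sfx (ν i₀) t2 with hC
  have hSlen : S.length = t1 := sfx_length ht1L
  set P : Fin h → List A := fun j => (ν j).take ((ν j).length - t2) with hP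
  set ν'' : Fin h → List A := fun j => if j ∈ Af t2 then P j ++ S else ν j with hν''
  have hmf : ∀ j ∈ Af t2, t2 ≤ (ν j).length ∧ sfx (ν j) t2 = C ∧ sfx (ν j) t1 = S := by
    intro j hj
    have h2 := (mem_Af t2 j).1 hj
    have h1 := (mem_Af t1 j).1 (hAA ▸ hj)
    exact ⟨h2.1, h2.2, h1.2⟩
  have hd1 : ∀ j ∈ Af t2, ν j = P j ++ C := by
    intro j hj
    conv_lhs => rw [eq_take_append_sfx (hmf j hj).1]
    rw [(hmf j hj).2.1]
  have hd2 : ∀ j ∈ Af t2, ν'' j = P j ++ S := by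
    intro j hj; simp [hν'', hj]
  have hd2' : ∀ j : Fin h, j ∉ Af t2 → ν'' j = ν j := by
    intro j hj; simp [hν'', hj]
  have hPlen : ∀ j ∈ Af t2, (P j).length = (ν j).length - t2 := by
    intro j hj
    have := (hmf j hj).1
    simp [hP]
  -- "Good" facts
  have hgoodν : ∀ j ∈ Af t2, t1 ≤ (ν j).length ∧ sfx (ν j) t1 = S := by
    intro j hj
    exact ⟨by have := (hmf j hj).1; omega, (hmf j hj).2.2⟩
  have hgood'' : ∀ j ∈ Af t2, t1 ≤ (ν'' j).length ∧ sfx (ν'' j) t1 = S := by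
    intro j hj
    rw [hd2 j hj]
    constructor
    · rw [List.length_append, hSlen]; omega
    · rw [← hSlen]; exact sfx_append _ _
  have hbad : ∀ j : Fin h, j ∉ Af t2 → ¬(t1 ≤ (ν j).length ∧ sfx (ν j) t1 = S) := by
    intro j hj hcon
    exact hj (hAA ▸ (mem_Af t1 j).2 ⟨hcon.1, hcon.2⟩)
  -- runs
  have hrun'' : ∀ j, D.deltaStar (s j) (ν'' j) = some (q j) := by
    intro j
    by_cases hj : j ∈ Af t2
    · have hj1 : j ∈ Af t1 := hAA ▸ hj
      have hge : D.deltaStar (s j) ((ν j).take ((ν j).length - t1)) =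
          D.deltaStar (s j) ((ν j).take ((ν j).length - t2)) := by
        have hc := congrFun hgeq j
        simpa [hg, hj, hj1] using hc
      rcases hdef j ((ν j).length - t1) with ⟨r, hr1, hr2⟩
      have hdrop : (ν j).drop ((ν j).length - t1) = S := (hmf j hj).2.2
      rw [hdrop] at hr2
      rw [hd2 j hj, D.deltaStar_append_s12]
      have : D.deltaStar (s j) (P j) = some r := by
        rw [hP]; dsimp only; rw [← hge, hr1]
      rw [this]
      simpa using hr2
    · rw [hd2' j hj]; exact hrun j
  -- append cancellation helper
  have ecr : ∀ (a b u : List A), (a ++ u = b ++ u) ↔ a = b := by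
    intro a b u
    exact ⟨fun he => List.append_cancel_right he, fun he => by rw [he]⟩
  have clt : ∀ (a b u : List A), colexLt (a ++ u) (b ++ u) ↔
      List.Lex (· < ·) a.reverse b.reverse := by
    intro a b u
    unfold colexLt
    rw [List.reverse_append, List.reverse_append, lex_append_iff]
  -- equality iff
  have heqiff : ∀ x y, ν x = ν y ↔ ν'' x = ν'' y := by
    intro x y
    by_cases hx : x ∈ Af t2 <;> by_cases hy : y ∈ Af t2
    · rw [hd1 x hx, hd1 y hy, hd2 x hx, hd2 y hy, ecr, ecr]
    · rw [hd2' y hy]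
      exact iff_of_false (fun he => key_ne (hgoodν x hx) (hbad y hy) he.symm)
        (fun he => key_ne (hgood'' x hx) (hbad y hy) he.symm)
    · rw [hd2' x hx]
      exact iff_of_false (fun he => key_ne (hgoodν y hy) (hbad x hx) he)
        (fun he => key_ne (hgood'' y hy) (hbad x hx) he)
    · rw [hd2' x hx, hd2' y hy]
  -- colexLt iff
  have hltiff : ∀ x y, colexLt (ν x) (ν y) ↔ colexLt (ν'' x) (ν'' y) := by
    intro x y
    by_cases hx : x ∈ Af t2 <;> by_cases hy : y ∈ Af t2
    · rw [hd1 x hx, hd1 y hy, hd2 x hx, hd2 y hy, clt, clt]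
    · rw [hd2' y hy]
      exact ⟨keyD hSlen (hgoodν x hx) (hgood'' x hx) (hbad y hy),
        keyD hSlen (hgood'' x hx) (hgoodν x hx) (hbad y hy)⟩
    · rw [hd2' x hx]
      exact ⟨keyC hSlen (hgoodν y hy) (hgood'' y hy) (hbad x hx),
        keyC hSlen (hgood'' y hy) (hgoodν y hy) (hbad x hx)⟩
    · rw [hd2' x hx, hd2' y hy]
  -- suffix iff
  have hsufiff : ∀ x y, ν x <:+ ν y ↔ ν'' x <:+ ν'' y := by
    intro x y
    by_cases hx : x ∈ Af t2 <;> by_cases hy : y ∈ Af t2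
    · rw [hd1 x hx, hd1 y hy, hd2 x hx, hd2 y hy, suffix_cancel, suffix_cancel]
    · rw [hd2' y hy]
      exact iff_of_false (keyA (hgoodν x hx) (hbad y hy))
        (keyA (hgood'' x hx) (hbad y hy))
    · rw [hd2' x hx]
      exact ⟨keyB hSlen (hgoodν y hy) (hgood'' y hy) (hbad x hx),
        keyB hSlen (hgood'' y hy) (hgoodν y hy) (hbad x hx)⟩
    · rw [hd2' x hx, hd2' y hy]
  -- length decrease
  have hlenle : ∀ j, (ν'' j).length ≤ (ν j).length := by
    intro j
    by_cases hj : j ∈ Af t2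
    · rw [hd2 j hj, List.length_append, hPlen j hj, hSlen]
      have := (hmf j hj).1
      omega
    · rw [hd2' j hj]
  have hi₀lt : (ν'' i₀).length < (ν i₀).length := by
    have hj := hi₀mem t2 h2L
    rw [hd2 i₀ hj, List.length_append, hPlen i₀ hj, hSlen]
    have := (hmf i₀ hj).1
    omega
  exact ⟨ν'', hrun'', heqiff, hltiff, hsufiff,
    Finset.sum_lt_sum (fun j _ => hlenle j) ⟨i₀, Finset.mem_univ _, hi₀lt⟩⟩

lemma main_lemma {A Q : Type} [LinearOrder A] [Fintype Q] {h : ℕ}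
    (D : DFA' A Q) (s q : Fin h → Q) :
    ∀ (N : ℕ) (ν : Fin h → List A), (∑ i, (ν i).length) ≤ N →
    (∀ i, D.deltaStar (s i) (ν i) = some (q i)) →
    ∃ ν' : Fin h → List A,
      (∀ i, D.deltaStar (s i) (ν' i) = some (q i)) ∧
      (∀ i j, ν i = ν j ↔ ν' i = ν' j) ∧
      (∀ i j, colexLt (ν i) (ν j) ↔ colexLt (ν' i) (ν' j)) ∧
      (∀ i j, ν i <:+ ν j ↔ ν' i <:+ ν' j) ∧
      (∀ i, (ν' i).length < ∑ t ∈ Finset.Icc 1 h, (Fintype.card Q) ^ t) := by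
  intro N
  induction N using Nat.strong_induction_on with
  | _ N ih =>
    intro ν hsum hrun
    by_cases hc : ∃ i, ∑ t ∈ Finset.Icc 1 h, (Fintype.card Q) ^ t ≤ (ν i).length
    · obtain ⟨i₀, hi₀⟩ := hc
      obtain ⟨ν'', hrun'', heq, hlt, hsuf, hdec⟩ := step_lemma D s q ν hrun i₀ hi₀
      have hN : ∑ i, (ν'' i).length < N := lt_of_lt_of_le hdec hsum
      obtain ⟨ν', h1, h2, h3, h4, h5⟩ := ih (∑ i, (ν'' i).length) hN ν'' le_rfl hrun''
      exact ⟨ν', h1, fun x y => (heq x y).trans (h2 x y),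
        fun x y => (hlt x y).trans (h3 x y), fun x y => (hsuf x y).trans (h4 x y), h5⟩
    · push_neg at hc
      exact ⟨ν, hrun, fun _ _ => Iff.rfl, fun _ _ => Iff.rfl, fun _ _ => Iff.rfl, hc⟩

end Helpers

/-- given co-lexicographically nondecreasing words `ν_1 ⪯ … ⪯ ν_h`
with `δ(s_i, ν_i) = q_i`, there are words `ν'_1 ⪯ … ⪯ ν'_h` with the same
endpoints, respecting equalities and suffixes, of length at most
`(h - 2) + Σ_{t=1}^h n^t` where `n` is the number of states. -/
theorem stmt_12 {A Q : Type} [LinearOrder A] [Fintype A] [Fintype Q]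
    (D : DFA' A Q) (h : ℕ) (hh : 1 ≤ h)
    (s q : Fin h → Q) (ν : Fin h → List A)
    (hmono : ∀ i j : Fin h, i ≤ j → colexLe (ν i) (ν j))
    (hrun : ∀ i, D.deltaStar (s i) (ν i) = some (q i)) :
    ∃ ν' : Fin h → List A,
      (∀ i j : Fin h, i ≤ j → colexLe (ν' i) (ν' j)) ∧
      (∀ i, D.deltaStar (s i) (ν' i) = some (q i)) ∧
      (∀ i j, ν i = ν j ↔ ν' i = ν' j) ∧
      (∀ i j, ν i <:+ ν j ↔ ν' i <:+ ν' j) ∧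
      (∀ i, (ν' i).length ≤ (h - 2) + ∑ t ∈ Finset.Icc 1 h, (Fintype.card Q) ^ t) := by
  obtain ⟨ν', h1, h2, h3, h4, h5⟩ := main_lemma D s q (∑ i, (ν i).length) ν le_rfl hrun
  refine ⟨ν', ?_, h1, h2, h4, ?_⟩
  · intro i j hij
    cases hmono i j hij with
    | inl hlt => exact Or.inl ((h3 i j).1 hlt)
    | inr heq => exact Or.inr ((h2 i j).1 heq)
  · intro i
    have := h5 i
    omega
end

section
/- (Convex Myhill–Nerode theorem, uniqueness) Let Σ be a finite linearly ordered alphabet, let L be a language over Σ, and let P = {U_1, …, U_p} be a partition of Pref(L). Suppose D₁ and D₂ are P-sortable DFAs recognizing L such that no P-sortable DFA recognizing L has strictly fewer states than D₁ and none has strictly fewer states than D₂. Then D₁ and D₂ are isomorphic: there is a bijection φ from the states of D₁ to the states of D₂ with φ(s₁) = s₂, q ∈ F₁ ⇔ φ(q) ∈ F₂ for every state q, and for all states q, letters a: δ₂(φ(q), a) is defined iff δ₁(q, a) is, in which case δ₂(φ(q), a) = φ(δ₁(q, a)). -/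
/-- `U : Fin p → Set (List A)` is a partition of `Pref L`. -/
def IsPrefPartition {A : Type} (L : Set (List A)) (p : ℕ)
    (U : Fin p → Set (List A)) : Prop :=
  (∀ i, U i ⊆ Pref L) ∧ ∀ α ∈ Pref L, ∃! i, α ∈ U i

/-- A DFA is `P`-sortable: its states admit a `≤_D`-chain partition
`Q_1, …, Q_p` such that `U_i = {α ∈ Pref L | δ(s, α) ∈ Q_i}` for every `i`. -/
def PSortable {A Q : Type} [LinearOrder A] (L : Set (List A)) (p : ℕ)
    (U : Fin p → Set (List A)) (D : DFA' A Q) : Prop :=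
  ∃ f : Fin p → Set Q,
    (∀ q : Q, ∃! i, q ∈ f i) ∧
    (∀ i, ∀ u ∈ f i, ∀ v ∈ f i, D.leD u v ∨ D.leD v u) ∧
    ∀ i, U i = {α | α ∈ Pref L ∧ ∃ q ∈ f i, D.deltaStar D.start α = some q}

/-- `r` is an equivalence relation on `Pref L`. -/
def IsEqOnPref {A : Type} (L : Set (List A)) (r : List A → List A → Prop) : Prop :=
  (∀ α ∈ Pref L, r α α) ∧
  (∀ α β, α ∈ Pref L → β ∈ Pref L → r α β → r β α) ∧
  (∀ α β γ, α ∈ Pref L → β ∈ Pref L → γ ∈ Pref L → r α β → r β γ → r α γ)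

/-- `r` has finite index (finitely many classes) on `Pref L`. -/
def FiniteIndexOn {A : Type} (L : Set (List A)) (r : List A → List A → Prop) : Prop :=
  ∃ S : Finset (List A), ∀ α ∈ Pref L, ∃ β ∈ S, β ∈ Pref L ∧ r α β

/-- `r` is `P`-consistent: related words lie in the same block of `U`. -/
def PConsistent {A : Type} (L : Set (List A)) (p : ℕ) (U : Fin p → Set (List A))
    (r : List A → List A → Prop) : Prop :=
  ∀ α β, α ∈ Pref L → β ∈ Pref L → r α β → ∀ i, α ∈ U i → β ∈ U i

/-- `r` is `P`-convex. -/
def PConvex {A : Type} [LinearOrder A] (L : Set (List A)) (p : ℕ)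
    (U : Fin p → Set (List A)) (r : List A → List A → Prop) : Prop :=
  ∀ α β γ, α ∈ Pref L → β ∈ Pref L → γ ∈ Pref L → r α γ →
    (∃ i, α ∈ U i ∧ β ∈ U i) →
    ((colexLe α β ∧ colexLe β γ) ∨ (colexLe γ β ∧ colexLe β α)) → r α β

/-- `r` is right-invariant on `Pref L`. -/
def RightInvariantOn {A : Type} (L : Set (List A)) (r : List A → List A → Prop) : Prop :=
  ∀ α β, α ∈ Pref L → β ∈ Pref L → r α β →
    ∀ φ : List A, α ++ φ ∈ Pref L → β ++ φ ∈ Pref L ∧ r (α ++ φ) (β ++ φ)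

namespace Stmt14Aux

set_option linter.unusedSectionVars false

variable {A : Type} [LinearOrder A]

lemma colexLt_trans {a b c : List A} (h1 : colexLt a b) (h2 : colexLt b c) : colexLt a c :=
  List.lex_trans (fun h₁ h₂ => lt_trans h₁ h₂) h1 h2

lemma colexLt_asymm {a b : List A} (h : colexLt a b) : ¬ colexLt b a :=
  (inferInstance : IsAsymm (List A) (List.Lex (· < ·))).asymm _ _ h

lemma colexLt_irrefl {a : List A} (h : colexLt a a) : False := colexLt_asymm h h

lemma colex_trichotomy (a b : List A) : colexLt a b ∨ a = b ∨ colexLt b a := by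
  rcases @trichotomous (List A) (List.Lex (· < ·)) inferInstance a.reverse b.reverse with h | h | h
  · exact Or.inl h
  · exact Or.inr (Or.inl (List.reverse_injective h))
  · exact Or.inr (Or.inr h)

variable {Q Q1 Q2 : Type}

lemma deltaStar_append (D : DFA' A Q) (q : Q) (α β : List A) :
    D.deltaStar q (α ++ β) = (D.deltaStar q α).bind fun r => D.deltaStar r β := by
  induction α generalizing q with
  | nil => simp [DFA'.deltaStar]
  | cons a w ih =>
    show D.deltaStar q (a :: (w ++ β)) = _
    rw [DFA'.deltaStar]
    cases hd : D.delta q a with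
    | none => simp [DFA'.deltaStar, hd]
    | some r => simp [DFA'.deltaStar, hd, ih r]

lemma deltaStar_snoc (D : DFA' A Q) (q : Q) (α : List A) (a : A) :
    D.deltaStar q (α ++ [a]) = (D.deltaStar q α).bind fun r => D.delta r a := by
  rw [deltaStar_append]
  cases D.deltaStar q α with
  | none => rfl
  | some r =>
    show D.deltaStar r [a] = D.delta r a
    rw [DFA'.deltaStar]
    cases D.delta r a <;> rfl

/-- Bundle of hypotheses on a `P`-sortable DFA, with a chosen chain partition. -/
structure Good (L : Set (List A)) (p : ℕ) (U : Fin p → Set (List A))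
    {Q : Type} (D : DFA' A Q) (f : Fin p → Set Q) : Prop where
  reach : D.Reachable
  useful : D.Useful
  lang : D.lang = L
  blocks : ∀ q : Q, ∃! i, q ∈ f i
  chain : ∀ i, ∀ u ∈ f i, ∀ v ∈ f i, D.leD u v ∨ D.leD v u
  Ueq : ∀ i, U i = {α | α ∈ Pref L ∧ ∃ q ∈ f i, D.deltaStar D.start α = some q}

variable {L : Set (List A)} {p : ℕ} {U : Fin p → Set (List A)}
  {D : DFA' A Q} {f : Fin p → Set Q}

lemma Good.pref_of_some (h : Good L p U D f) {α : List A} {q : Q}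
    (hq : D.deltaStar D.start α = some q) : α ∈ Pref L := by
  obtain ⟨β, g, hg, hgb⟩ := h.useful q
  refine ⟨β, ?_⟩
  rw [← h.lang]
  exact ⟨g, hg, by rw [deltaStar_append, hq]; exact hgb⟩

lemma Good.some_of_pref (h : Good L p U D f) {α : List A} (ha : α ∈ Pref L) :
    ∃ q, D.deltaStar D.start α = some q := by
  obtain ⟨γ, hγ⟩ := ha
  rw [← h.lang] at hγ
  obtain ⟨g, hg, hrun⟩ := hγ
  rw [deltaStar_append] at hrun
  cases hd : D.deltaStar D.start α with
  | none => rw [hd] at hrun; simp at hrun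
  | some q => exact ⟨q, rfl⟩

lemma Good.append_mem_iff (h : Good L p U D f) {α : List A} {q : Q}
    (hq : D.deltaStar D.start α = some q) (γ : List A) :
    α ++ γ ∈ L ↔ ∃ g ∈ D.accept, D.deltaStar q γ = some g := by
  rw [← h.lang]
  show (∃ g ∈ D.accept, D.deltaStar D.start (α ++ γ) = some g) ↔ _
  rw [show D.deltaStar D.start (α ++ γ) = D.deltaStar q γ by
    rw [deltaStar_append, hq]; rfl]

lemma Good.mem_L_iff (h : Good L p U D f) {α : List A} {q : Q}
    (hq : D.deltaStar D.start α = some q) : α ∈ L ↔ q ∈ D.accept := by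
  have h0 := h.append_mem_iff hq []
  rw [List.append_nil] at h0
  rw [h0]
  constructor
  · rintro ⟨g, hg, hrun⟩
    have : q = g := by simpa [DFA'.deltaStar] using hrun
    subst this; exact hg
  · intro hq'
    exact ⟨q, hq', rfl⟩

lemma Good.mem_U_iff (h : Good L p U D f) {α : List A} {q : Q}
    (hq : D.deltaStar D.start α = some q) (i : Fin p) : α ∈ U i ↔ q ∈ f i := by
  rw [h.Ueq i]
  constructor
  · rintro ⟨-, q', hq', hrun⟩
    have : q = q' := Option.some_injective _ (hq.symm.trans hrun)
    subst this; exact hq'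
  · intro hqf
    exact ⟨h.pref_of_some hq, q, hqf, hq⟩

lemma Good.nerode_of_same (h : Good L p U D f) {α β : List A} {q : Q}
    (hα : D.deltaStar D.start α = some q) (hβ : D.deltaStar D.start β = some q) :
    NerodeEq L α β := fun γ => by rw [h.append_mem_iff hα γ, h.append_mem_iff hβ γ]

lemma nerode_pref {L : Set (List A)} {x y : List A} (h : NerodeEq L x y) {φ : List A}
    (hx : x ++ φ ∈ Pref L) : y ++ φ ∈ Pref L := by
  obtain ⟨γ, hγ⟩ := hx
  refine ⟨γ, ?_⟩
  have := (h (φ ++ γ)).mp (by rwa [← List.append_assoc])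
  rwa [← List.append_assoc] at this

end Stmt14Aux
namespace Stmt14Aux

set_option linter.unusedSectionVars false

variable {A : Type} [LinearOrder A] {Q1 Q2 : Type}

/-- Two words are related if they reach a common state in `D1` or in `D2`. -/
def WRel (D1 : DFA' A Q1) (D2 : DFA' A Q2) (α β : List A) : Prop :=
  (∃ q : Q1, D1.deltaStar D1.start α = some q ∧ D1.deltaStar D1.start β = some q) ∨
  (∃ q : Q2, D2.deltaStar D2.start α = some q ∧ D2.deltaStar D2.start β = some q)

/-- Equivalence closure of `WRel`. -/
def WEq (D1 : DFA' A Q1) (D2 : DFA' A Q2) : List A → List A → Prop :=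
  Relation.EqvGen (WRel D1 D2)

variable {L : Set (List A)} {p : ℕ} {U : Fin p → Set (List A)}
  {D1 : DFA' A Q1} {D2 : DFA' A Q2} {f1 : Fin p → Set Q1} {f2 : Fin p → Set Q2}

lemma weq_nerode (h1 : Good L p U D1 f1) (h2 : Good L p U D2 f2) {α β : List A}
    (h : WEq D1 D2 α β) : NerodeEq L α β := by
  induction h with
  | rel x y hr =>
    rcases hr with ⟨q, hx, hy⟩ | ⟨q, hx, hy⟩
    · exact h1.nerode_of_same hx hy
    · exact h2.nerode_of_same hx hy
  | refl x => exact fun γ => Iff.rfl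
  | symm x y hxy ih => exact fun γ => (ih γ).symm
  | trans x y z hxy hyz ih1 ih2 => exact fun γ => (ih1 γ).trans (ih2 γ)

lemma weq_block (h1 : Good L p U D1 f1) (h2 : Good L p U D2 f2) {α β : List A}
    (h : WEq D1 D2 α β) (i : Fin p) : α ∈ U i ↔ β ∈ U i := by
  induction h with
  | rel x y hr =>
    rcases hr with ⟨q, hx, hy⟩ | ⟨q, hx, hy⟩
    · rw [h1.mem_U_iff hx i, h1.mem_U_iff hy i]
    · rw [h2.mem_U_iff hx i, h2.mem_U_iff hy i]
  | refl x => exact Iff.rfl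
  | symm x y hxy ih => exact ih.symm
  | trans x y z hxy hyz ih1 ih2 => exact ih1.trans ih2

lemma weq_snoc (h1 : Good L p U D1 f1) (h2 : Good L p U D2 f2) {α β : List A}
    (h : WEq D1 D2 α β) (a : A) (ha : α ++ [a] ∈ Pref L) :
    WEq D1 D2 (α ++ [a]) (β ++ [a]) := by
  induction h with
  | rel x y hr =>
    refine Relation.EqvGen.rel _ _ ?_
    rcases hr with ⟨q, hx, hy⟩ | ⟨q, hx, hy⟩
    · obtain ⟨r, hr⟩ := h1.some_of_pref ha
      rw [deltaStar_snoc, hx] at hr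
      refine Or.inl ⟨r, ?_, ?_⟩ <;> rw [deltaStar_snoc]
      · rw [hx]; exact hr
      · rw [hy]; exact hr
    · obtain ⟨r, hr⟩ := h2.some_of_pref ha
      rw [deltaStar_snoc, hx] at hr
      refine Or.inr ⟨r, ?_, ?_⟩ <;> rw [deltaStar_snoc]
      · rw [hx]; exact hr
      · rw [hy]; exact hr
  | refl x => exact Relation.EqvGen.refl _
  | symm x y hxy ih =>
    have hx : x ++ [a] ∈ Pref L := nerode_pref (weq_nerode h1 h2 (Relation.EqvGen.symm _ _ hxy)) ha
    exact Relation.EqvGen.symm _ _ (ih hx)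
  | trans x y z hxy hyz ih1 ih2 =>
    have hy : y ++ [a] ∈ Pref L := nerode_pref (weq_nerode h1 h2 hxy) ha
    exact Relation.EqvGen.trans _ _ _ (ih1 ha) (ih2 hy)

lemma mem_pref_of_U (h1 : Good L p U D1 f1) {α : List A} {i : Fin p} (hα : α ∈ U i) :
    α ∈ Pref L := ((h1.Ueq i) ▸ hα).1

lemma conv_one (h1 : Good L p U D1 f1) (h2 : Good L p U D2 f2) {α β γ : List A} {i : Fin p}
    (hr : WRel D1 D2 α β) (hαi : α ∈ U i) (hγi : γ ∈ U i)
    (hbet : (colexLt α γ ∧ colexLt γ β) ∨ (colexLt β γ ∧ colexLt γ α)) :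
    WRel D1 D2 α γ := by
  rcases hr with ⟨q, hα, hβ⟩ | ⟨q, hα, hβ⟩
  · obtain ⟨r, hγ⟩ := h1.some_of_pref (mem_pref_of_U h1 hγi)
    have hqf : q ∈ f1 i := (h1.mem_U_iff hα i).mp hαi
    have hrf : r ∈ f1 i := (h1.mem_U_iff hγ i).mp hγi
    by_cases hqr : r = q
    · subst hqr; exact Or.inl ⟨r, hα, hγ⟩
    · exfalso
      rcases h1.chain i q hqf r hrf with hle | hle
      · rcases hle with rfl | hlt
        · exact hqr rfl
        · rcases hbet with ⟨h1', h2'⟩ | ⟨h1', h2'⟩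
          · exact colexLt_asymm (hlt β hβ γ hγ) h2'
          · exact colexLt_asymm (hlt α hα γ hγ) h2'
      · rcases hle with rfl | hlt
        · exact hqr rfl
        · rcases hbet with ⟨h1', h2'⟩ | ⟨h1', h2'⟩
          · exact colexLt_asymm (hlt γ hγ α hα) h1'
          · exact colexLt_asymm (hlt γ hγ β hβ) h1'
  · obtain ⟨r, hγ⟩ := h2.some_of_pref (mem_pref_of_U h1 hγi)
    have hqf : q ∈ f2 i := (h2.mem_U_iff hα i).mp hαi
    have hrf : r ∈ f2 i := (h2.mem_U_iff hγ i).mp hγi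
    by_cases hqr : r = q
    · subst hqr; exact Or.inr ⟨r, hα, hγ⟩
    · exfalso
      rcases h2.chain i q hqf r hrf with hle | hle
      · rcases hle with rfl | hlt
        · exact hqr rfl
        · rcases hbet with ⟨h1', h2'⟩ | ⟨h1', h2'⟩
          · exact colexLt_asymm (hlt β hβ γ hγ) h2'
          · exact colexLt_asymm (hlt α hα γ hγ) h2'
      · rcases hle with rfl | hlt
        · exact hqr rfl
        · rcases hbet with ⟨h1', h2'⟩ | ⟨h1', h2'⟩
          · exact colexLt_asymm (hlt γ hγ α hα) h1'
          · exact colexLt_asymm (hlt γ hγ β hβ) h1'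

lemma weq_conv (h1 : Good L p U D1 f1) (h2 : Good L p U D2 f2) {α β : List A}
    (h : WEq D1 D2 α β) :
    ∀ γ (i : Fin p), α ∈ U i → γ ∈ U i →
      ((colexLt α γ ∧ colexLt γ β) ∨ (colexLt β γ ∧ colexLt γ α)) → WEq D1 D2 α γ := by
  induction h with
  | rel x y hr =>
    intro γ i hx hγ hb
    exact Relation.EqvGen.rel _ _ (conv_one h1 h2 hr hx hγ hb)
  | refl x =>
    intro γ i hx hγ hb
    rcases hb with ⟨ha, hb'⟩ | ⟨ha, hb'⟩ <;> exact absurd (colexLt_trans ha hb') (fun h => colexLt_irrefl h)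
  | symm x y hxy ih =>
    intro γ i hy hγ hb
    have hx : x ∈ U i := (weq_block h1 h2 hxy i).mpr hy
    have := ih γ i hx hγ hb.symm
    exact Relation.EqvGen.trans _ _ _ (Relation.EqvGen.symm _ _ hxy) this
  | trans x y z hxy hyz ih1 ih2 =>
    intro γ i hx hγ hb
    have hy : y ∈ U i := (weq_block h1 h2 hxy i).mp hx
    rcases colex_trichotomy γ y with hgy | rfl | hyg
    · rcases hb with ⟨ha, hb'⟩ | ⟨ha, hb'⟩
      · exact ih1 γ i hx hγ (Or.inl ⟨ha, hgy⟩)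
      · exact Relation.EqvGen.trans _ _ _ hxy (ih2 γ i hy hγ (Or.inr ⟨ha, hgy⟩))
    · exact hxy
    · rcases hb with ⟨ha, hb'⟩ | ⟨ha, hb'⟩
      · exact Relation.EqvGen.trans _ _ _ hxy (ih2 γ i hy hγ (Or.inl ⟨hyg, hb'⟩))
      · exact ih1 γ i hx hγ (Or.inr ⟨hyg, hb'⟩)

lemma weq_sep (h1 : Good L p U D1 f1) (h2 : Good L p U D2 f2) {i : Fin p}
    {α β α₁ β₁ : List A}
    (hαα : WEq D1 D2 α α₁) (hββ : WEq D1 D2 β β₁) (hcross : ¬ WEq D1 D2 α β)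
    (hαi : α ∈ U i) (hβi : β ∈ U i)
    (hne : ¬ colexLt α₁ β₁) : colexLt β α := by
  have hα₁i : α₁ ∈ U i := (weq_block h1 h2 hαα i).mp hαi
  have hβ₁i : β₁ ∈ U i := (weq_block h1 h2 hββ i).mp hβi
  rcases colex_trichotomy β α with h | h | h
  · exact h
  · exact absurd (h ▸ Relation.EqvGen.refl β : WEq D1 D2 α β) hcross
  · exfalso
    have hβ₁α₁ : colexLt β₁ α₁ := by
      rcases colex_trichotomy α₁ β₁ with h' | h' | h'
      · exact absurd h' hne
      · exact absurd (Relation.EqvGen.trans _ _ _ hαα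
          (h' ▸ Relation.EqvGen.symm _ _ hββ)) hcross
      · exact h'
    rcases colex_trichotomy α β₁ with hc | hc | hc
    · have : WEq D1 D2 α β₁ := weq_conv h1 h2 hαα β₁ i hαi hβ₁i (Or.inl ⟨hc, hβ₁α₁⟩)
      exact hcross (Relation.EqvGen.trans _ _ _ this (Relation.EqvGen.symm _ _ hββ))
    · exact hcross (hc ▸ (Relation.EqvGen.symm _ _ hββ) : WEq D1 D2 α β)
    · have : WEq D1 D2 β α := weq_conv h1 h2 hββ α i hβi hαi (Or.inr ⟨hc, h⟩)
      exact hcross (Relation.EqvGen.symm _ _ this)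

end Stmt14Aux
namespace Stmt14Aux

set_option linter.unusedSectionVars false

variable {A : Type} [LinearOrder A] {Q Q1 Q2 : Type}
  {L : Set (List A)} {p : ℕ} {U : Fin p → Set (List A)}
  {D : DFA' A Q} {f : Fin p → Set Q}
  {D1 : DFA' A Q1} {D2 : DFA' A Q2} {f1 : Fin p → Set Q1} {f2 : Fin p → Set Q2}

/-- Relation on states of `D1`: reachable by `WEq`-related words. -/
def SRel (D1 : DFA' A Q1) (D2 : DFA' A Q2) (q q' : Q1) : Prop :=
  ∃ α β : List A, D1.deltaStar D1.start α = some q ∧ D1.deltaStar D1.start β = some q' ∧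
    WEq D1 D2 α β

lemma srel_of_words {α β : List A} {q q' : Q1}
    (hα : D1.deltaStar D1.start α = some q) (hβ : D1.deltaStar D1.start β = some q')
    (h : WEq D1 D2 α β) : SRel D1 D2 q q' := ⟨α, β, hα, hβ, h⟩

lemma weq_of_srel {α β : List A} {q q' : Q1} (h : SRel D1 D2 q q')
    (hα : D1.deltaStar D1.start α = some q) (hβ : D1.deltaStar D1.start β = some q') :
    WEq D1 D2 α β := by
  obtain ⟨α₀, β₀, h₀, h₀', hw⟩ := h
  refine Relation.EqvGen.trans _ _ _ (Relation.EqvGen.rel _ _ (Or.inl ⟨q, hα, h₀⟩)) ?_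
  exact Relation.EqvGen.trans _ _ _ hw (Relation.EqvGen.rel _ _ (Or.inl ⟨q', h₀', hβ⟩))

lemma srel_equiv (hr : D1.Reachable) : Equivalence (SRel D1 D2) := by
  constructor
  · intro q
    obtain ⟨α, hα⟩ := hr q
    exact ⟨α, α, hα, hα, Relation.EqvGen.refl _⟩
  · rintro q q' ⟨α, β, hα, hβ, hw⟩
    exact ⟨β, α, hβ, hα, Relation.EqvGen.symm _ _ hw⟩
  · rintro q q' q'' ⟨α, β, hα, hβ, hw⟩ ⟨β', γ, hβ', hγ, hw'⟩
    refine ⟨α, γ, hα, hγ, Relation.EqvGen.trans _ _ _ hw (Relation.EqvGen.trans _ _ _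
      (Relation.EqvGen.rel _ _ (Or.inl ⟨q', hβ, hβ'⟩)) hw')⟩

/-- The setoid on `Q1` induced by `SRel`. -/
def wSetoid (D1 : DFA' A Q1) (D2 : DFA' A Q2) (hr : D1.Reachable) : Setoid Q1 :=
  ⟨SRel D1 D2, srel_equiv hr⟩

lemma srel_accept (h1 : Good L p U D1 f1) (h2 : Good L p U D2 f2) {q q' : Q1}
    (h : SRel D1 D2 q q') : q ∈ D1.accept ↔ q' ∈ D1.accept := by
  obtain ⟨α, β, hα, hβ, hw⟩ := h
  rw [← h1.mem_L_iff hα, ← h1.mem_L_iff hβ]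
  have := weq_nerode h1 h2 hw []
  rwa [List.append_nil, List.append_nil] at this

lemma srel_block (h1 : Good L p U D1 f1) (h2 : Good L p U D2 f2) {q q' : Q1}
    (h : SRel D1 D2 q q') (i : Fin p) : q ∈ f1 i ↔ q' ∈ f1 i := by
  obtain ⟨α, β, hα, hβ, hw⟩ := h
  rw [← h1.mem_U_iff hα i, ← h1.mem_U_iff hβ i]
  exact weq_block h1 h2 hw i

lemma delta_some_iff (h1 : Good L p U D f) {α : List A} {q : Q} {a : A}
    (hα : D.deltaStar D.start α = some q) :
    (∃ r, D.delta q a = some r) ↔ α ++ [a] ∈ Pref L := by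
  constructor
  · rintro ⟨r, hr⟩
    exact h1.pref_of_some (by rw [deltaStar_snoc, hα]; exact hr)
  · intro hpref
    obtain ⟨r, hr⟩ := h1.some_of_pref hpref
    rw [deltaStar_snoc, hα] at hr
    exact ⟨r, hr⟩

lemma srel_delta (h1 : Good L p U D1 f1) (h2 : Good L p U D2 f2) {q q' : Q1}
    (h : SRel D1 D2 q q') (a : A) :
    (D1.delta q a = none ∧ D1.delta q' a = none) ∨
    ∃ r r', D1.delta q a = some r ∧ D1.delta q' a = some r' ∧ SRel D1 D2 r r' := by
  obtain ⟨α, β, hα, hβ, hw⟩ := h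
  have hnd := weq_nerode h1 h2 hw
  cases hd : D1.delta q a with
  | none =>
    left
    refine ⟨rfl, ?_⟩
    cases hd' : D1.delta q' a with
    | none => rfl
    | some r' =>
      exfalso
      have hpβ : β ++ [a] ∈ Pref L := (delta_some_iff h1 hβ).mp ⟨r', hd'⟩
      have hpα : α ++ [a] ∈ Pref L := nerode_pref (fun γ => (hnd γ).symm) hpβ
      obtain ⟨r, hr⟩ := (delta_some_iff h1 hα).mpr hpα
      rw [hd] at hr; exact absurd hr.symm (Option.some_ne_none _)
  | some r =>
    right
    have hpα : α ++ [a] ∈ Pref L := (delta_some_iff h1 hα).mp ⟨r, hd⟩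
    have hpβ : β ++ [a] ∈ Pref L := nerode_pref hnd hpα
    obtain ⟨r', hr'⟩ := (delta_some_iff h1 hβ).mpr hpβ
    refine ⟨r, r', rfl, hr', ?_⟩
    refine srel_of_words ?_ ?_ (weq_snoc h1 h2 hw a hpα)
    · rw [deltaStar_snoc, hα]; exact hd
    · rw [deltaStar_snoc, hβ]; exact hr'

/-- The quotient DFA of `D1` by `SRel`. -/
def quotDFA (h1 : Good L p U D1 f1) (h2 : Good L p U D2 f2) :
    DFA' A (Quotient (wSetoid D1 D2 h1.reach)) where
  start := Quotient.mk (wSetoid D1 D2 h1.reach) D1.start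
  delta := fun t a =>
    Quotient.lift (fun q => (D1.delta q a).map (Quotient.mk (wSetoid D1 D2 h1.reach)))
      (by
        intro q q' hqq'
        rcases srel_delta h1 h2 hqq' a with ⟨hn, hn'⟩ | ⟨r, r', hr, hr', hrr'⟩
        · rw [hn, hn']
        · rw [hr, hr', Option.map_some, Option.map_some, Quotient.sound hrr']) t
  accept := {t | ∃ q ∈ D1.accept, Quotient.mk (wSetoid D1 D2 h1.reach) q = t}

lemma quotDFA_delta (h1 : Good L p U D1 f1) (h2 : Good L p U D2 f2) (q : Q1) (a : A) :
    (quotDFA h1 h2).delta (Quotient.mk (wSetoid D1 D2 h1.reach) q) a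
      = (D1.delta q a).map (Quotient.mk (wSetoid D1 D2 h1.reach)) := rfl

lemma quotDFA_deltaStar (h1 : Good L p U D1 f1) (h2 : Good L p U D2 f2) (q : Q1) (γ : List A) :
    (quotDFA h1 h2).deltaStar (Quotient.mk (wSetoid D1 D2 h1.reach) q) γ
      = (D1.deltaStar q γ).map (Quotient.mk (wSetoid D1 D2 h1.reach)) := by
  induction γ generalizing q with
  | nil => rfl
  | cons a w ih =>
    rw [DFA'.deltaStar, DFA'.deltaStar, quotDFA_delta]
    cases hd : D1.delta q a with
    | none => rfl
    | some r => simpa using ih r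

end Stmt14Aux
namespace Stmt14Aux

set_option linter.unusedSectionVars false

variable {A : Type} [LinearOrder A] {Q1 Q2 : Type}
  {L : Set (List A)} {p : ℕ} {U : Fin p → Set (List A)}
  {D1 : DFA' A Q1} {D2 : DFA' A Q2} {f1 : Fin p → Set Q1} {f2 : Fin p → Set Q2}

lemma quot_start (h1 : Good L p U D1 f1) (h2 : Good L p U D2 f2) :
    (quotDFA h1 h2).start = Quotient.mk (wSetoid D1 D2 h1.reach) D1.start := rfl

lemma quot_run (h1 : Good L p U D1 f1) (h2 : Good L p U D2 f2) {α : List A} {c : Q1}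
    (hc : D1.deltaStar D1.start α = some c) :
    (quotDFA h1 h2).deltaStar (quotDFA h1 h2).start α
      = some (Quotient.mk (wSetoid D1 D2 h1.reach) c) := by
  rw [quot_start, quotDFA_deltaStar, hc]; rfl

lemma quot_iq_elim (h1 : Good L p U D1 f1) (h2 : Good L p U D2 f2) {α : List A} {q : Q1}
    (hα : (quotDFA h1 h2).deltaStar (quotDFA h1 h2).start α
      = some (Quotient.mk (wSetoid D1 D2 h1.reach) q)) :
    ∃ c, D1.deltaStar D1.start α = some c ∧ SRel D1 D2 c q := by
  rw [quot_start, quotDFA_deltaStar, Option.map_eq_some_iff] at hα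
  obtain ⟨c, hc, hmk⟩ := hα
  exact ⟨c, hc, Quotient.exact hmk⟩

lemma quot_reach (h1 : Good L p U D1 f1) (h2 : Good L p U D2 f2) :
    (quotDFA h1 h2).Reachable := by
  intro t
  induction t using Quotient.ind with | _ q =>
  obtain ⟨α, hα⟩ := h1.reach q
  exact ⟨α, quot_run h1 h2 hα⟩

lemma quot_useful (h1 : Good L p U D1 f1) (h2 : Good L p U D2 f2) :
    (quotDFA h1 h2).Useful := by
  intro t
  induction t using Quotient.ind with | _ q =>
  obtain ⟨β, g, hg, hrun⟩ := h1.useful q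
  refine ⟨β, Quotient.mk (wSetoid D1 D2 h1.reach) g, ⟨g, hg, rfl⟩, ?_⟩
  rw [quotDFA_deltaStar, hrun]; rfl

lemma quot_lang (h1 : Good L p U D1 f1) (h2 : Good L p U D2 f2) :
    (quotDFA h1 h2).lang = L := by
  ext α
  constructor
  · rintro ⟨t, ⟨qa, hqa, hmk⟩, hrun⟩
    subst hmk
    obtain ⟨c, hc, hsrel⟩ := quot_iq_elim h1 h2 hrun
    exact (h1.mem_L_iff hc).mpr ((srel_accept h1 h2 hsrel).mpr hqa)
  · intro hαL
    have hpref : α ∈ Pref L := ⟨[], by simpa using hαL⟩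
    obtain ⟨c, hc⟩ := h1.some_of_pref hpref
    exact ⟨Quotient.mk (wSetoid D1 D2 h1.reach) c, ⟨c, (h1.mem_L_iff hc).mp hαL, rfl⟩,
      quot_run h1 h2 hc⟩

lemma quot_sortable (h1 : Good L p U D1 f1) (h2 : Good L p U D2 f2) :
    PSortable L p U (quotDFA h1 h2) := by
  classical
  refine ⟨fun i => {t | ∃ q ∈ f1 i, Quotient.mk (wSetoid D1 D2 h1.reach) q = t}, ?_, ?_, ?_⟩
  · intro t
    induction t using Quotient.ind with | _ q =>
    obtain ⟨i, hi, huniq⟩ := h1.blocks q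
    refine ⟨i, ⟨q, hi, rfl⟩, ?_⟩
    rintro j ⟨q', hq', hmk⟩
    exact huniq j ((srel_block h1 h2 (Quotient.exact hmk) j).mp hq')
  · rintro i u ⟨q, hqf, rfl⟩ v ⟨q', hq'f, rfl⟩
    by_cases heq : (Quotient.mk (wSetoid D1 D2 h1.reach) q)
        = Quotient.mk (wSetoid D1 D2 h1.reach) q'
    · exact Or.inl (Or.inl heq)
    · have hcross : ∀ {α β : List A},
          α ∈ (quotDFA h1 h2).Iq (Quotient.mk (wSetoid D1 D2 h1.reach) q) →
          β ∈ (quotDFA h1 h2).Iq (Quotient.mk (wSetoid D1 D2 h1.reach) q') →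
          ¬ WEq D1 D2 α β := by
        intro α β hα hβ hw
        obtain ⟨c, hc, hsrel⟩ := quot_iq_elim h1 h2 hα
        obtain ⟨c', hc', hsrel'⟩ := quot_iq_elim h1 h2 hβ
        have hcc' : SRel D1 D2 c c' := srel_of_words hc hc' hw
        have : SRel D1 D2 q q' :=
          (srel_equiv h1.reach).trans ((srel_equiv h1.reach).symm hsrel)
            ((srel_equiv h1.reach).trans hcc' hsrel')
        exact heq (Quotient.sound this)
      have hsame : ∀ {α α' : List A} {r : Q1},
          α ∈ (quotDFA h1 h2).Iq (Quotient.mk (wSetoid D1 D2 h1.reach) r) →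
          α' ∈ (quotDFA h1 h2).Iq (Quotient.mk (wSetoid D1 D2 h1.reach) r) →
          WEq D1 D2 α α' := by
        intro α α' r hα hα'
        obtain ⟨c, hc, hsrel⟩ := quot_iq_elim h1 h2 hα
        obtain ⟨c', hc', hsrel'⟩ := quot_iq_elim h1 h2 hα'
        exact weq_of_srel ((srel_equiv h1.reach).trans hsrel
          ((srel_equiv h1.reach).symm hsrel')) hc hc'
      have hUmem : ∀ {α : List A} {r : Q1}, r ∈ f1 i →
          α ∈ (quotDFA h1 h2).Iq (Quotient.mk (wSetoid D1 D2 h1.reach) r) → α ∈ U i := by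
        intro α r hrf hα
        obtain ⟨c, hc, hsrel⟩ := quot_iq_elim h1 h2 hα
        exact (h1.mem_U_iff hc i).mpr ((srel_block h1 h2 hsrel i).mpr hrf)
      by_cases hall : ∀ α ∈ (quotDFA h1 h2).Iq (Quotient.mk (wSetoid D1 D2 h1.reach) q),
          ∀ β ∈ (quotDFA h1 h2).Iq (Quotient.mk (wSetoid D1 D2 h1.reach) q'), colexLt α β
      · exact Or.inl (Or.inr hall)
      · push_neg at hall
        obtain ⟨α₁, hα₁, β₁, hβ₁, hne⟩ := hall
        refine Or.inr (Or.inr ?_)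
        intro β hβ α hα
        exact weq_sep h1 h2 (hsame hα hα₁) (hsame hβ hβ₁) (hcross hα hβ)
          (hUmem hqf hα) (hUmem hq'f hβ) hne
  · intro i
    ext α
    constructor
    · intro hαU
      have hpref := mem_pref_of_U h1 hαU
      obtain ⟨c, hc⟩ := h1.some_of_pref hpref
      exact ⟨hpref, Quotient.mk (wSetoid D1 D2 h1.reach) c,
        ⟨c, (h1.mem_U_iff hc i).mp hαU, rfl⟩, quot_run h1 h2 hc⟩
    · rintro ⟨hpref, t, ⟨q', hq'f, hmk⟩, hrun⟩
      subst hmk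
      obtain ⟨c, hc, hsrel⟩ := quot_iq_elim h1 h2 hrun
      exact (h1.mem_U_iff hc i).mpr ((srel_block h1 h2 hsrel i).mpr hq'f)

end Stmt14Aux
namespace Stmt14Aux

set_option linter.unusedSectionVars false

variable {A : Type} [LinearOrder A] {Q1 Q2 : Type}
  {L : Set (List A)} {p : ℕ} {U : Fin p → Set (List A)}
  {D1 : DFA' A Q1} {D2 : DFA' A Q2} {f1 : Fin p → Set Q1} {f2 : Fin p → Set Q2}

lemma exists_pair (h1 : Good L p U D1 f1) (h2 : Good L p U D2 f2) (q2 : Q2) :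
    ∃ cp : List A × Q1, D2.deltaStar D2.start cp.1 = some q2 ∧
      D1.deltaStar D1.start cp.1 = some cp.2 := by
  obtain ⟨α, hα⟩ := h2.reach q2
  obtain ⟨c, hc⟩ := h1.some_of_pref (h2.pref_of_some hα)
  exact ⟨(α, c), hα, hc⟩

/-- The map from states of `D2` to classes of states of `D1`. -/
noncomputable def stateMap (h1 : Good L p U D1 f1) (h2 : Good L p U D2 f2) (q2 : Q2) :
    Quotient (wSetoid D1 D2 h1.reach) :=
  Quotient.mk (wSetoid D1 D2 h1.reach) (Classical.choose (exists_pair h1 h2 q2)).2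

lemma stateMap_eq (h1 : Good L p U D1 f1) (h2 : Good L p U D2 f2) {q2 : Q2} {α : List A}
    {c : Q1} (hα2 : D2.deltaStar D2.start α = some q2)
    (hα1 : D1.deltaStar D1.start α = some c) :
    stateMap h1 h2 q2 = Quotient.mk (wSetoid D1 D2 h1.reach) c := by
  obtain ⟨hβ2, hβ1⟩ := Classical.choose_spec (exists_pair h1 h2 q2)
  exact Quotient.sound (srel_of_words hβ1 hα1
    (Relation.EqvGen.rel _ _ (Or.inr ⟨q2, hβ2, hα2⟩)))

lemma stateMap_surj (h1 : Good L p U D1 f1) (h2 : Good L p U D2 f2) :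
    Function.Surjective (stateMap h1 h2) := by
  intro t
  induction t using Quotient.ind with | _ c =>
  obtain ⟨α, hα⟩ := h1.reach c
  obtain ⟨q2, hq2⟩ := h2.some_of_pref (h1.pref_of_some hα)
  exact ⟨q2, stateMap_eq h1 h2 hq2 hα⟩

end Stmt14Aux

open Stmt14Aux in
/-- Convex Myhill–Nerode theorem, uniqueness: two state-minimal
`P`-sortable DFAs recognizing `L` are isomorphic. -/
theorem stmt_14 {A : Type} [LinearOrder A] [Fintype A]
    (L : Set (List A)) (p : ℕ) (U : Fin p → Set (List A))
    (hU : IsPrefPartition L p U)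
    {Q1 Q2 : Type} [Fintype Q1] [Fintype Q2]
    (D1 : DFA' A Q1) (D2 : DFA' A Q2)
    (h1 : D1.Reachable ∧ D1.Useful ∧ D1.lang = L ∧ PSortable L p U D1)
    (h2 : D2.Reachable ∧ D2.Useful ∧ D2.lang = L ∧ PSortable L p U D2)
    (hmin1 : ∀ (Q' : Type) [Fintype Q'] (D' : DFA' A Q'),
        D'.Reachable → D'.Useful → D'.lang = L → PSortable L p U D' →
        Fintype.card Q1 ≤ Fintype.card Q')
    (hmin2 : ∀ (Q' : Type) [Fintype Q'] (D' : DFA' A Q'),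
        D'.Reachable → D'.Useful → D'.lang = L → PSortable L p U D' →
        Fintype.card Q2 ≤ Fintype.card Q') :
    ∃ φ : Q1 ≃ Q2,
      φ D1.start = D2.start ∧
      (∀ q : Q1, q ∈ D1.accept ↔ φ q ∈ D2.accept) ∧
      (∀ (q : Q1) (a : A), D2.delta (φ q) a = (D1.delta q a).map φ) := by
  classical
  obtain ⟨h1r, h1u, h1L, f1, hf1a, hf1c, hf1U⟩ := h1
  obtain ⟨h2r, h2u, h2L, f2, hf2a, hf2c, hf2U⟩ := h2
  have g1 : Good L p U D1 f1 := ⟨h1r, h1u, h1L, hf1a, hf1c, hf1U⟩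
  have g2 : Good L p U D2 f2 := ⟨h2r, h2u, h2L, hf2a, hf2c, hf2U⟩
  haveI : Finite (Quotient (wSetoid D1 D2 g1.reach)) := Quotient.finite _
  letI instT : Fintype (Quotient (wSetoid D1 D2 g1.reach)) := Fintype.ofFinite _
  have hDTre := quot_reach g1 g2
  have hDTus := quot_useful g1 g2
  have hDTla := quot_lang g1 g2
  have hDTso := quot_sortable g1 g2
  have hcard1 : Fintype.card Q1 ≤ Fintype.card (Quotient (wSetoid D1 D2 g1.reach)) :=
    hmin1 _ (quotDFA g1 g2) hDTre hDTus hDTla hDTso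
  have hcard2 : Fintype.card Q2 ≤ Fintype.card (Quotient (wSetoid D1 D2 g1.reach)) :=
    hmin2 _ (quotDFA g1 g2) hDTre hDTus hDTla hDTso
  have hsurj1 : Function.Surjective
      (Quotient.mk (wSetoid D1 D2 g1.reach) : Q1 → Quotient (wSetoid D1 D2 g1.reach)) :=
    fun t => ⟨t.out, t.out_eq⟩
  have hsurj2 : Function.Surjective (stateMap g1 g2) := stateMap_surj g1 g2
  have hbij1 : Function.Bijective
      (Quotient.mk (wSetoid D1 D2 g1.reach) : Q1 → Quotient (wSetoid D1 D2 g1.reach)) :=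
    (Fintype.bijective_iff_surjective_and_card _).mpr
      ⟨hsurj1, le_antisymm hcard1 (Fintype.card_le_of_surjective _ hsurj1)⟩
  have hbij2 : Function.Bijective (stateMap g1 g2) :=
    (Fintype.bijective_iff_surjective_and_card _).mpr
      ⟨hsurj2, le_antisymm hcard2 (Fintype.card_le_of_surjective _ hsurj2)⟩
  let e1 : Q1 ≃ Quotient (wSetoid D1 D2 g1.reach) := Equiv.ofBijective _ hbij1
  let e2 : Q2 ≃ Quotient (wSetoid D1 D2 g1.reach) := Equiv.ofBijective _ hbij2
  have hwit : ∀ q2 : Q2, ∃ (α : List A) (c : Q1), D2.deltaStar D2.start α = some q2 ∧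
      D1.deltaStar D1.start α = some c := by
    intro q2
    obtain ⟨⟨α, c⟩, hα2, hα1⟩ := exists_pair g1 g2 q2
    exact ⟨α, c, hα2, hα1⟩
  have hmain : ∀ q : Q1,
      stateMap g1 g2 ((e1.trans e2.symm) q) = Quotient.mk (wSetoid D1 D2 g1.reach) q := by
    intro q
    have h0 : e2 (e2.symm (e1 q)) = e1 q := e2.apply_symm_apply _
    exact h0
  refine ⟨e1.trans e2.symm, ?_, ?_, ?_⟩
  · show e2.symm (e1 D1.start) = D2.start
    rw [Equiv.symm_apply_eq]
    show Quotient.mk (wSetoid D1 D2 g1.reach) D1.start = stateMap g1 g2 D2.start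
    exact (stateMap_eq g1 g2 (rfl : D2.deltaStar D2.start [] = some D2.start)
      (rfl : D1.deltaStar D1.start [] = some D1.start)).symm
  · intro q
    obtain ⟨α, c, hα2, hα1⟩ := hwit ((e1.trans e2.symm) q)
    have hsr : SRel D1 D2 c q :=
      Quotient.exact ((stateMap_eq g1 g2 hα2 hα1).symm.trans (hmain q))
    exact ((srel_accept g1 g2 hsr).symm.trans (g1.mem_L_iff hα1).symm).trans
      (g2.mem_L_iff hα2)
  · intro q a
    obtain ⟨α, c, hα2, hα1⟩ := hwit ((e1.trans e2.symm) q)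
    have hsr : SRel D1 D2 c q :=
      Quotient.exact ((stateMap_eq g1 g2 hα2 hα1).symm.trans (hmain q))
    cases hd2 : D2.delta ((e1.trans e2.symm) q) a with
    | none =>
      have hδc : D1.delta c a = none := by
        cases hdc : D1.delta c a with
        | none => rfl
        | some r =>
          exfalso
          have hpref : α ++ [a] ∈ Pref L := (delta_some_iff g1 hα1).mp ⟨r, hdc⟩
          obtain ⟨r2, hr2⟩ := (delta_some_iff g2 hα2).mpr hpref
          rw [hd2] at hr2
          exact absurd hr2.symm (Option.some_ne_none _)
      have hδq : D1.delta q a = none := by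
        rcases srel_delta g1 g2 hsr a with ⟨hn, hn'⟩ | ⟨r, r', hr, hr', _⟩
        · exact hn'
        · rw [hδc] at hr; exact absurd hr.symm (Option.some_ne_none _)
      rw [hδq]; rfl
    | some r2 =>
      have hpref : α ++ [a] ∈ Pref L := (delta_some_iff g2 hα2).mp ⟨r2, hd2⟩
      obtain ⟨r, hr⟩ := (delta_some_iff g1 hα1).mpr hpref
      rcases srel_delta g1 g2 hsr a with ⟨hn, hn'⟩ | ⟨r0, r', hr0, hr', hsr'⟩
      · rw [hn] at hr; exact absurd hr.symm (Option.some_ne_none _)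
      · have hr0r : r0 = r := Option.some_injective _ ((hr0.symm.trans hr))
        subst hr0r
        rw [hr', Option.map_some]
        have hsm : stateMap g1 g2 r2 = Quotient.mk (wSetoid D1 D2 g1.reach) r0 :=
          stateMap_eq g1 g2 (by rw [deltaStar_snoc, hα2]; exact hd2)
            (by rw [deltaStar_snoc, hα1]; exact hr)
        have hFr' : (e1.trans e2.symm) r' = r2 := by
          show e2.symm (e1 r') = r2
          rw [Equiv.symm_apply_eq]
          show Quotient.mk (wSetoid D1 D2 g1.reach) r' = stateMap g1 g2 r2
          rw [hsm]
          exact (Quotient.sound hsr').symm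
        rw [hFr']
end

section
/- Let Σ be a finite linearly ordered alphabet, let L be a nonempty language over Σ, let P = {U_1, …, U_p} be a partition of Pref(L), and let ∼ be an equivalence relation on Pref(L) that respects Pref(L), i.e., α ∼ β and αφ ∈ Pref(L) imply βφ ∈ Pref(L). Then there exists a coarsest P-consistent, P-convex and right-invariant equivalence relation refining ∼: an equivalence relation ≈ on Pref(L) such that (i) α ≈ β implies α ∼ β, (ii) ≈ is P-consistent, P-convex and right-invariant, and (iii) every P-consistent, P-convex, right-invariant equivalence relation on Pref(L) refining ∼ also refines ≈. -/
section Aux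

variable {A : Type} [LinearOrder A]

lemma colexLe_total (α β : List A) : colexLe α β ∨ colexLe β α := by
  rcases trichotomous_of (List.Lex ((· < ·) : A → A → Prop)) α.reverse β.reverse with h | h | h
  · exact Or.inl (Or.inl h)
  · exact Or.inl (Or.inr (List.reverse_injective h))
  · exact Or.inr (Or.inl h)

lemma colexLe_antisymm {α β : List A} (h1 : colexLe α β) (h2 : colexLe β α) : α = β := by
  rcases h1 with h1 | h1
  · rcases h2 with h2 | h2
    · exact absurd h2 (asymm_of (List.Lex ((· < ·) : A → A → Prop)) h1)
    · exact h2.symm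
  · exact h1

end Aux

/-- every equivalence relation on `Pref L` that respects `Pref L`
admits a coarsest `P`-consistent, `P`-convex and right-invariant refinement. -/
theorem stmt_15 {A : Type} [LinearOrder A] [Fintype A]
    (L : Set (List A)) (hLne : L.Nonempty)
    (p : ℕ) (U : Fin p → Set (List A)) (hU : IsPrefPartition L p U)
    (r : List A → List A → Prop) (hr : IsEqOnPref L r)
    (hresp : ∀ α β, α ∈ Pref L → β ∈ Pref L → r α β →
        ∀ φ : List A, α ++ φ ∈ Pref L → β ++ φ ∈ Pref L) :
    ∃ e : List A → List A → Prop,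
      (∀ α β, α ∈ Pref L → β ∈ Pref L → e α β → r α β) ∧
      IsEqOnPref L e ∧ PConsistent L p U e ∧ PConvex L p U e ∧
      RightInvariantOn L e ∧
      ∀ e' : List A → List A → Prop,
        IsEqOnPref L e' → PConsistent L p U e' → PConvex L p U e' →
        RightInvariantOn L e' →
        (∀ α β, α ∈ Pref L → β ∈ Pref L → e' α β → r α β) →
        ∀ α β, α ∈ Pref L → β ∈ Pref L → e' α β → e α β := by
  classical
  set Good : (List A → List A → Prop) → Prop := fun e' =>
    IsEqOnPref L e' ∧ PConsistent L p U e' ∧ PConvex L p U e' ∧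
      RightInvariantOn L e' ∧
      (∀ α β, α ∈ Pref L → β ∈ Pref L → e' α β → r α β) with hGood
  set s : List A → List A → Prop := fun α β =>
    α ∈ Pref L ∧ β ∈ Pref L ∧ ∃ e', Good e' ∧ e' α β with hs
  have hs_symm : Symmetric s := by
    rintro α β ⟨ha, hb, e', hg, h⟩
    exact ⟨hb, ha, e', hg, hg.1.2.1 α β ha hb h⟩
  set e : List A → List A → Prop := Relation.ReflTransGen s with he
  have he_symm : Symmetric e := fun x y h =>
    (@Relation.ReflTransGen.stdSymm _ s ⟨fun a b h => hs_symm h⟩).symm x y h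
  -- membership preservation along chains
  have hmem : ∀ α β, e α β → α ∈ Pref L → β ∈ Pref L := by
    intro α β h
    induction h with
    | refl => exact id
    | tail h1 hstep ih => exact fun _ => hstep.2.1
  -- block preservation along chains
  have hblock : ∀ α β, e α β → ∀ i, α ∈ U i → β ∈ U i := by
    intro α β h
    induction h with
    | refl => exact fun i h => h
    | @tail m γ h1 hstep ih =>
      intro i hαi
      obtain ⟨hm, hγ, e', hg, h'⟩ := hstep
      exact hg.2.1 m γ hm hγ h' i (ih i hαi)
  -- refinement of r
  have hrefine : ∀ α β, e α β → α ∈ Pref L → r α β := by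
    intro α β h
    induction h with
    | refl => exact fun hα => hr.1 α hα
    | @tail m γ h1 hstep ih =>
      intro hα
      obtain ⟨hm, hγ, e', hg, h'⟩ := hstep
      exact hr.2.2 α m γ hα hm hγ (ih hα) (hg.2.2.2.2 m γ hm hγ h')
  -- right invariance
  have hRI : ∀ α β, e α β → ∀ φ : List A, α ++ φ ∈ Pref L →
      β ++ φ ∈ Pref L ∧ e (α ++ φ) (β ++ φ) := by
    intro α β h
    induction h with
    | refl => exact fun φ hφ => ⟨hφ, Relation.ReflTransGen.refl⟩
    | @tail m γ h1 hstep ih =>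
      intro φ hφ
      obtain ⟨hmφ, hchain⟩ := ih φ hφ
      obtain ⟨hm, hγ, e', hg, h'⟩ := hstep
      obtain ⟨hγφ, h'φ⟩ := hg.2.2.2.1 m γ hm hγ h' φ hmφ
      exact ⟨hγφ, hchain.tail ⟨hmφ, hγφ, e', hg, h'φ⟩⟩
  -- convexity
  have hconv : ∀ α γ, e α γ → ∀ β, β ∈ Pref L →
      (∃ i, α ∈ U i ∧ β ∈ U i) →
      ((colexLe α β ∧ colexLe β γ) ∨ (colexLe γ β ∧ colexLe β α)) → e α β := by
    intro α γ h
    induction h with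
    | refl =>
      intro β hβ hi hbtw
      have : α = β := by
        rcases hbtw with ⟨h1, h2⟩ | ⟨h1, h2⟩
        · exact colexLe_antisymm h1 h2
        · exact (colexLe_antisymm h2 h1).symm
      subst this; exact Relation.ReflTransGen.refl
    | @tail m γ h1 hstep ih =>
      intro β hβ hi hbtw
      obtain ⟨hm, hγ, e', hg, h'⟩ := hstep
      obtain ⟨i, hαi, hβi⟩ := hi
      have hmi : m ∈ U i := hblock α m h1 i hαi
      rcases colexLe_total β m with hbm | hmb
      · rcases hbtw with ⟨hab, hbg⟩ | ⟨hgb, hba⟩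
        · exact ih β hβ ⟨i, hαi, hβi⟩ (Or.inl ⟨hab, hbm⟩)
        · have hmβ : e' m β :=
            hg.2.2.1 m β γ hm hβ hγ h' ⟨i, hmi, hβi⟩ (Or.inr ⟨hgb, hbm⟩)
          exact h1.tail ⟨hm, hβ, e', hg, hmβ⟩
      · rcases hbtw with ⟨hab, hbg⟩ | ⟨hgb, hba⟩
        · have hmβ : e' m β :=
            hg.2.2.1 m β γ hm hβ hγ h' ⟨i, hmi, hβi⟩ (Or.inl ⟨hmb, hbg⟩)
          exact h1.tail ⟨hm, hβ, e', hg, hmβ⟩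
        · exact ih β hβ ⟨i, hαi, hβi⟩ (Or.inr ⟨hmb, hba⟩)
  refine ⟨e, ?_, ?_, ?_, ?_, ?_, ?_⟩
  · exact fun α β hα hβ h => hrefine α β h hα
  · exact ⟨fun α _ => Relation.ReflTransGen.refl,
      fun α β _ _ h => he_symm h,
      fun α β γ _ _ _ h1 h2 => h1.trans h2⟩
  · exact fun α β _ _ h i hα => hblock α β h i hα
  · exact fun α β γ hα hβ hγ h hi hbtw => hconv α γ h β hβ hi hbtw
  · exact fun α β _ _ h φ hφ => hRI α β h φ hφ
  · intro e' h1 h2 h3 h4 h5 α β hα hβ h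
    exact Relation.ReflTransGen.single ⟨hα, hβ, e', ⟨h1, h2, h3, h4, h5⟩, h⟩
end

section
/- Let (Z, ≤) be a linear order and let {P_1, …, P_m} be a finite partition of Z. Then there exists a finite partition {V_1, …, V_r} of Z such that every V_j is convex in (Z, ≤) and entangled with respect to the partition: for every j there is a sequence (z_n)_{n∈ℕ} of elements of V_j that is monotone (nondecreasing or nonincreasing) and such that for every block P_i with P_i ∩ V_j ≠ ∅, z_n ∈ P_i for infinitely many n. -/
/-!
Call a set decomposable if it splits into finitely many convex entangled pieces, and let `D` be
the union of all decomposable lower sets. The finitely many blocks that are bounded above in `D`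
all lie below some `t ∈ D`, so above `t` every block occurring in `D` is cofinal in `D`, and a
nondecreasing sequence visiting these blocks in turn shows that `D ∖ D₁` is entangled for any
decomposable lower set `D₁ ∋ t`; hence `D` is decomposable. Dually, if `D ≠ Z`, the complement of
`D` has a nonempty initial segment in which every occurring block is coinitial; adding it to `D`
as one more piece contradicts the maximality of `D`.
-/

open Set

section

variable {ι Z : Type*} [LinearOrder Z] (P : ι → Set Z)

def Entangled (V : Set Z) : Prop :=
  ∃ zs : ℕ → Z, (∀ n, zs n ∈ V) ∧ (Monotone zs ∨ Antitone zs) ∧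
    ∀ i, (P i ∩ V).Nonempty → {n | zs n ∈ P i}.Infinite

def BlocksCofinal (V : Set Z) : Prop :=
  ∀ i, (P i ∩ V).Nonempty → ∀ x ∈ V, ∃ z ∈ P i ∩ V, x ≤ z

def HasEntangledDecomposition (S : Set Z) : Prop :=
  ∃ (r : ℕ) (V : Fin r → Set Z), (∀ j, V j ⊆ S) ∧ (∀ z ∈ S, ∃! j, z ∈ V j) ∧
    (∀ j, (V j).OrdConnected) ∧ ∀ j, Entangled P (V j)

variable {P}

theorem Entangled.of_orderDual {V : Set Z} (h : Entangled (Z := Zᵒᵈ) P V) : Entangled P V :=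
  have ⟨zs, hmem, hmono, hinf⟩ := h
  ⟨zs, hmem, hmono.symm, hinf⟩

open Classical in
theorem BlocksCofinal.exists_monotone_seq {V : Set Z} (hcof : BlocksCofinal P V)
    (hV : V.Nonempty) (c : ℕ → ι) : ∃ zs : ℕ → Z, (∀ n, zs n ∈ V) ∧ Monotone zs ∧
      ∀ n, (P (c n) ∩ V).Nonempty → zs (n + 1) ∈ P (c n) := by
  choose! g hg hle using hcof
  let step (n : ℕ) (z : Z) : Z := if (P (c n) ∩ V).Nonempty then g (c n) z else z
  obtain ⟨x₀, hx₀⟩ := hV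
  have hstep : ∀ n, ∀ z ∈ V, step n z ∈ V ∧ z ≤ step n z ∧
      ((P (c n) ∩ V).Nonempty → step n z ∈ P (c n)) := by
    intro n z hz
    by_cases h : (P (c n) ∩ V).Nonempty
    · simp only [step, if_pos h]
      exact ⟨(hg _ h z hz).2, hle _ h z hz, fun _ => (hg _ h z hz).1⟩
    · simp only [step, if_neg h]
      exact ⟨hz, le_rfl, fun h' => absurd h' h⟩
  let zs : ℕ → Z := fun n => Nat.rec x₀ step n
  have hmem : ∀ n, zs n ∈ V := fun n => Nat.rec hx₀ (fun n ih => (hstep n _ ih).1) n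
  exact ⟨zs, hmem, monotone_nat_of_le_succ fun n => (hstep n _ (hmem n)).2.1,
    fun n => (hstep n _ (hmem n)).2.2⟩

-- Schedule block `e j` at every step `Nat.pair j k`, so each block is scheduled infinitely often.
theorem BlocksCofinal.entangled [Countable ι] {V : Set Z} (hcof : BlocksCofinal P V)
    (hV : V.Nonempty) : Entangled P V := by
  cases isEmpty_or_nonempty ι
  · obtain ⟨x₀, hx₀⟩ := hV
    exact ⟨fun _ => x₀, fun _ => hx₀, .inl monotone_const, isEmptyElim⟩
  obtain ⟨e, he⟩ := exists_surjective_nat ι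
  obtain ⟨zs, hmem, hmono, hvisit⟩ := hcof.exists_monotone_seq hV fun n => e n.unpair.1
  refine ⟨zs, hmem, .inl hmono, fun i hi => ?_⟩
  obtain ⟨j, rfl⟩ := he i
  refine infinite_of_injective_forall_mem (f := fun k => Nat.pair j k + 1) ?_ fun k => ?_
  · intro k l hkl
    simpa [Nat.pair_eq_pair] using hkl
  · simpa [Nat.unpair_pair] using
      hvisit (Nat.pair j k) (by simpa [Nat.unpair_pair] using hi)

theorem exists_blocksCofinal_inter_Ici [Finite ι] (P : ι → Set Z) {S : Set Z}
    (hS : S.Nonempty) : ∃ t ∈ S, BlocksCofinal P (S ∩ Ici t) := by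
  have hbound : ∀ i, ∃ b ∈ S, (∀ x ∈ S, ∃ z ∈ P i ∩ S, x ≤ z) ∨ ∀ z ∈ P i ∩ S, z < b := by
    intro i
    by_cases h : ∀ x ∈ S, ∃ z ∈ P i ∩ S, x ≤ z
    · exact ⟨hS.some, hS.some_mem, .inl h⟩
    · push Not at h
      obtain ⟨b, hb, hlt⟩ := h
      exact ⟨b, hb, .inr hlt⟩
  choose b hbS hb using hbound
  have : Nonempty S := hS.to_subtype
  obtain ⟨⟨t, htS⟩, hbt⟩ := Finite.exists_le fun i => (⟨b i, hbS i⟩ : S)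
  refine ⟨t, htS, fun i ⟨p, hpP, hpS, htp⟩ x ⟨hxS, htx⟩ => ?_⟩
  rcases hb i with hcof | hbdd
  · obtain ⟨z, hz, hxz⟩ := hcof x hxS
    exact ⟨z, ⟨hz.1, hz.2, le_trans htx hxz⟩, hxz⟩
  · exact absurd (hbdd p ⟨hpP, hpS⟩) (not_lt.2 (le_trans (hbt i) htp))

theorem BlocksCofinal.inter_isUpperSet {E U : Set Z} (hE : BlocksCofinal P E)
    (hU : IsUpperSet U) : BlocksCofinal P (E ∩ U) := by
  rintro i ⟨p, hpP, hpE, -⟩ x ⟨hxE, hxU⟩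
  obtain ⟨z, ⟨hzP, hzE⟩, hxz⟩ := hE i ⟨p, hpP, hpE⟩ x hxE
  exact ⟨z, ⟨hzP, hzE, hU hxz hxU⟩, hxz⟩

namespace HasEntangledDecomposition

theorem empty : HasEntangledDecomposition P (∅ : Set Z) :=
  ⟨0, finZeroElim, finZeroElim, fun _ hz => hz.elim, finZeroElim, finZeroElim⟩

theorem union {D E : Set Z} (hD : HasEntangledDecomposition P D) (hEc : E.OrdConnected)
    (hEe : Entangled P E) (hDE : Disjoint D E) : HasEntangledDecomposition P (D ∪ E) := by
  obtain ⟨r, V, hVD, huniq, hconv, hent⟩ := hD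
  refine ⟨r + 1, Fin.cons E V, Fin.forall_fin_succ.2 ⟨subset_union_right,
    fun j => (hVD j).trans subset_union_left⟩, ?_, Fin.forall_fin_succ.2 ⟨hEc, hconv⟩,
    Fin.forall_fin_succ.2 ⟨hEe, hent⟩⟩
  rintro z (hz | hz)
  · obtain ⟨j, hj, hj'⟩ := huniq z hz
    refine ⟨j.succ, hj, Fin.forall_fin_succ.2 ⟨fun h => (hDE.notMem_of_mem_left hz h).elim,
      fun k hk => congrArg _ (hj' k hk)⟩⟩
  · exact ⟨0, hz, Fin.forall_fin_succ.2 ⟨fun _ => rfl,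
      fun k hk => (hDE.notMem_of_mem_left (hVD k hk) hz).elim⟩⟩

variable [Finite ι]

theorem of_forall_mem_isLowerSet {D : Set Z} (hD : D.OrdConnected)
    (h : ∀ x ∈ D, ∃ D₁ ⊆ D, IsLowerSet D₁ ∧ x ∈ D₁ ∧ HasEntangledDecomposition P D₁) :
    HasEntangledDecomposition P D := by
  rcases D.eq_empty_or_nonempty with rfl | hne
  · exact empty
  obtain ⟨t, htD, hcof⟩ := exists_blocksCofinal_inter_Ici P hne
  obtain ⟨D₁, hD₁D, hD₁, htD₁, hdec⟩ := h t htD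
  have hsplit : D = D₁ ∪ (D ∩ Ici t ∩ D₁ᶜ) := by
    ext z
    constructor
    · intro hz
      by_cases hz₁ : z ∈ D₁
      · exact .inl hz₁
      · exact .inr ⟨⟨hz, le_of_not_ge fun hzt => hz₁ (hD₁ hzt htD₁)⟩, hz₁⟩
    · rintro (hz | hz)
      exacts [hD₁D hz, hz.1.1]
  rcases (D ∩ Ici t ∩ D₁ᶜ).eq_empty_or_nonempty with hF | hF
  · rwa [hsplit, hF, union_empty]
  rw [hsplit]
  have hU : IsUpperSet D₁ᶜ := isUpperSet_compl.2 hD₁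
  exact hdec.union ((hD.inter ordConnected_Ici).inter hU.ordConnected)
    ((hcof.inter_isUpperSet hU).entangled hF) (disjoint_compl_right.mono_right inter_subset_right)

theorem exists_union_Iic {D : Set Z} (hD : IsLowerSet D) (hdec : HasEntangledDecomposition P D)
    (hne : Dᶜ.Nonempty) : ∃ t ∉ D, HasEntangledDecomposition P (D ∪ Iic t) := by
  obtain ⟨t, htD, hcof⟩ := exists_blocksCofinal_inter_Ici (Z := Zᵒᵈ) P hne
  have hE : Entangled P (Dᶜ ∩ Iic t) := (hcof.entangled ⟨t, htD, le_rfl⟩).of_orderDual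
  have := hdec.union ((isUpperSet_compl.2 hD).ordConnected.inter ordConnected_Iic) hE
    (disjoint_compl_right.mono_right inter_subset_left)
  rw [union_inter_distrib_left, union_compl_self, univ_inter] at this
  exact ⟨t, htD, this⟩

end HasEntangledDecomposition

theorem hasEntangledDecomposition_univ [Finite ι] (P : ι → Set Z) :
    HasEntangledDecomposition P (univ : Set Z) := by
  set D := ⋃₀ {D : Set Z | IsLowerSet D ∧ HasEntangledDecomposition P D}
  have hD : IsLowerSet D := isLowerSet_sUnion fun _ h => h.1
  have hdec : HasEntangledDecomposition P D :=
    .of_forall_mem_isLowerSet hD.ordConnected fun x ⟨D₁, hD₁, hx⟩ =>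
      ⟨D₁, subset_sUnion_of_mem hD₁, hD₁.1, hx, hD₁.2⟩
  suffices D = univ by rwa [← this]
  by_contra hne
  obtain ⟨t, htD, hdec'⟩ := hdec.exists_union_Iic hD (nonempty_compl.2 hne)
  have hmax : D ∪ Iic t ⊆ D := subset_sUnion_of_mem (by exact ⟨hD.union (isLowerSet_Iic t), hdec'⟩)
  exact htD (hmax (.inr le_rfl))

end

theorem stmt_16_general {Z : Type} [LinearOrder Z] (m : ℕ) (P : Fin m → Set Z) :
    ∃ (r : ℕ) (V : Fin r → Set Z),
      (∀ z : Z, ∃! j, z ∈ V j) ∧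
      (∀ j, ∀ u v w : Z, u ∈ V j → w ∈ V j → u ≤ v → v ≤ w → v ∈ V j) ∧
      (∀ j, ∃ zs : ℕ → Z, (∀ n, zs n ∈ V j) ∧
        ((∀ n, zs n ≤ zs (n + 1)) ∨ (∀ n, zs (n + 1) ≤ zs n)) ∧
        ∀ i, (P i ∩ V j).Nonempty → {n : ℕ | zs n ∈ P i}.Infinite) := by
  obtain ⟨r, V, -, huniq, hconv, hent⟩ := hasEntangledDecomposition_univ P
  refine ⟨r, V, fun z => huniq z trivial,
    fun j u v w hu hw huv hvw => (hconv j).out hu hw ⟨huv, hvw⟩, fun j => ?_⟩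
  obtain ⟨zs, hmem, hmono, hinf⟩ := hent j
  exact ⟨zs, hmem, hmono.imp (fun h n => h n.le_succ) (fun h n => h n.le_succ), hinf⟩

/-- every finite partition of a linear order admits a finite
decomposition into convex sets, each of which is entangled with respect to the
partition. -/
theorem stmt_16 {Z : Type} [LinearOrder Z] (m : ℕ) (P : Fin m → Set Z)
    (hP : ∀ z : Z, ∃! i, z ∈ P i) :
    ∃ (r : ℕ) (V : Fin r → Set Z),
      (∀ z : Z, ∃! j, z ∈ V j) ∧
      (∀ j, ∀ u v w : Z, u ∈ V j → w ∈ V j → u ≤ v → v ≤ w → v ∈ V j) ∧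
      (∀ j, ∃ zs : ℕ → Z, (∀ n, zs n ∈ V j) ∧
        ((∀ n, zs n ≤ zs (n + 1)) ∨ (∀ n, zs (n + 1) ≤ zs n)) ∧
        ∀ i, (P i ∩ V j).Nonempty → {n : ℕ | zs n ∈ P i}.Infinite) :=
  stmt_16_general m P
end
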